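/- arXiv:2111.07544 — 3 statements merged into one kernel-verified Lean document; each statement's English description precedes it below -/
import Mathlib

section
/- For every n ≥ 2: if L_{2n+1} + 1 ≤ N ≤ L_{2n+1} + L_{2n-1} then c_{-2n+1}(N) = 1, and if L_{2n+1} + L_{2n-1} + 1 ≤ N ≤ L_{2n+2} then c_{-2n+1}(N) = 0. (That is, the canonical digit at position -2n+1 equals 1 for the first L_{2n-1} numbers of the interval [L_{2n+1}+1, L_{2n+2}] and 0 for the last L_{2n-2} numbers.) -/
noncomputable section

attribute [local instance] Classical.propDecidable

/-- The golden mean φ = (1+√5)/2. -/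
def goldenPhi : ℝ := (1 + Real.sqrt 5) / 2

/-- `c` is a phi-representation of `N`: a finitely supported digit function
`c : ℤ → ℕ` with digits ≤ 1 such that `N = ∑ i, c i * φ ^ i`. -/
def IsPhiRep (N : ℕ) (c : ℤ →₀ ℕ) : Prop :=
  (∀ i, c i ≤ 1) ∧ (c.sum fun i a => (a : ℝ) * goldenPhi ^ i) = N

/-- Bergman representation: no two consecutive digits equal 1. -/
def IsBergman (N : ℕ) (c : ℤ →₀ ℕ) : Prop :=
  IsPhiRep N c ∧ ∀ i : ℤ, c (i + 1) * c i = 0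

/-- Admissible representation: no two consecutive digits equal 1,
except possibly `c 1 = c 0 = 1`. -/
def IsAdmissible (N : ℕ) (c : ℤ →₀ ℕ) : Prop :=
  IsPhiRep N c ∧ ∀ i : ℤ, i ≠ 0 → c (i + 1) * c i = 0

/-- The Bergman representation of `N` (unique when `N ≥ 1`). -/
noncomputable def bergmanRep (N : ℕ) : ℤ →₀ ℕ :=
  if h : ∃ c, IsBergman N c then h.choose else 0

/-- The canonical representation of `N`: the admissible representation with
`c 1 = c 0 = 1` if such exists, and the Bergman representation otherwise. -/
noncomputable def canonicalRep (N : ℕ) : ℤ →₀ ℕ :=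
  if h : ∃ c, IsAdmissible N c ∧ c 1 = 1 ∧ c 0 = 1 then h.choose else bergmanRep N

/-- The Lucas numbers: L 0 = 2, L 1 = 1, L (n+2) = L (n+1) + L n. -/
def lucas : ℕ → ℕ
  | 0 => 2
  | 1 => 1
  | n + 2 => lucas (n + 1) + lucas n

lemma sqrt5_pos : (0:ℝ) < Real.sqrt 5 := Real.sqrt_pos.2 (by norm_num)
lemma phi_pos : 0 < goldenPhi := by unfold goldenPhi; positivity
lemma phi_ne : goldenPhi ≠ 0 := ne_of_gt phi_pos
lemma one_lt_phi : 1 < goldenPhi := by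
  unfold goldenPhi
  nlinarith [Real.sq_sqrt (by norm_num : (5:ℝ) ≥ 0), sqrt5_pos]
lemma phi_sq : goldenPhi * goldenPhi = goldenPhi + 1 := by
  unfold goldenPhi
  have h := Real.sq_sqrt (by norm_num : (5:ℝ) ≥ 0)
  nlinarith [h]
lemma zrec (z : ℤ) : goldenPhi ^ (z + 2) = goldenPhi ^ (z+1) + goldenPhi ^ z := by
  have h1 : goldenPhi ^ (z + 2) = goldenPhi ^ z * (goldenPhi * goldenPhi) := by
    rw [zpow_add₀ phi_ne, zpow_two]
  have h2 : goldenPhi ^ (z + 1) = goldenPhi ^ z * goldenPhi := by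
    rw [zpow_add₀ phi_ne, zpow_one]
  rw [h1, h2, phi_sq]; ring
lemma zpow_phi_pos (z : ℤ) : 0 < goldenPhi ^ z := zpow_pos phi_pos z
lemma zpow_phi_lt {a b : ℤ} (h : a < b) : goldenPhi ^ a < goldenPhi ^ b :=
  zpow_lt_zpow_right₀ one_lt_phi h
lemma zpow_phi_le {a b : ℤ} (h : a ≤ b) : goldenPhi ^ a ≤ goldenPhi ^ b :=
  zpow_le_zpow_right₀ (le_of_lt one_lt_phi) h

def sumPhi (s : Finset ℤ) : ℝ := ∑ i ∈ s, goldenPhi ^ i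
def NA (s : Finset ℤ) : Prop := ∀ i ∈ s, i + 1 ∉ s

lemma NA_subset {s t : Finset ℤ} (h : s ⊆ t) (ht : NA t) : NA s :=
  fun i hi hi1 => ht i (h hi) (h hi1)

lemma sumPhi_nonneg (s : Finset ℤ) : 0 ≤ sumPhi s :=
  Finset.sum_nonneg fun i _ => le_of_lt (zpow_phi_pos i)

lemma sumPhi_insert {s : Finset ℤ} {a : ℤ} (h : a ∉ s) :
    sumPhi (insert a s) = goldenPhi ^ a + sumPhi s := Finset.sum_insert h

lemma le_sumPhi {s : Finset ℤ} {a : ℤ} (h : a ∈ s) : goldenPhi ^ a ≤ sumPhi s :=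
  Finset.single_le_sum (fun i _ => le_of_lt (zpow_phi_pos i)) h

lemma sumPhi_lt : ∀ (n : ℕ) (s : Finset ℤ) (m : ℤ), s.card ≤ n → NA s →
    (∀ i ∈ s, i ≤ m) → sumPhi s < goldenPhi ^ (m + 1) := by
  intro n
  induction n with
  | zero =>
    intro s m hc _ _
    have : s = ∅ := Finset.card_eq_zero.1 (Nat.le_zero.1 hc)
    rw [this]
    simpa [sumPhi] using zpow_phi_pos (m+1)
  | succ n ih =>
    intro s m hc hna hb
    rcases Finset.eq_empty_or_nonempty s with rfl | hne
    · simpa [sumPhi] using zpow_phi_pos (m+1)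
    · set M := s.max' hne with hM
      have hMs : M ∈ s := s.max'_mem hne
      have hrest : ∀ i ∈ s.erase M, i ≤ M - 2 := by
        intro i hi
        have hi' : i ∈ s := Finset.mem_of_mem_erase hi
        have hle : i ≤ M := s.le_max' i hi'
        have hneq : i ≠ M := Finset.ne_of_mem_erase hi
        have : i ≠ M - 1 := by
          intro h
          have : i + 1 ∈ s := by rw [h]; simpa using hMs
          exact hna i hi' this
        omega
      have hcard : (s.erase M).card ≤ n := by
        have := Finset.card_erase_of_mem hMs
        omega
      have h1 : sumPhi (s.erase M) < goldenPhi ^ (M - 1) := by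
        have := ih (s.erase M) (M - 2) hcard (NA_subset (Finset.erase_subset _ _) hna) hrest
        rwa [show M - 2 + 1 = M - 1 by ring] at this
      have hsum : sumPhi s = goldenPhi ^ M + sumPhi (s.erase M) := by
        rw [← sumPhi_insert (Finset.notMem_erase M s), Finset.insert_erase hMs]
      have h2 : goldenPhi ^ M + goldenPhi ^ (M-1) = goldenPhi ^ (M+1) := by
        have := zrec (M-1)
        simp only [sub_add_cancel] at this
        rw [show M - 1 + 2 = M + 1 by ring] at this
        linarith
      have : sumPhi s < goldenPhi ^ (M + 1) := by rw [hsum]; linarith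
      exact lt_of_lt_of_le this (zpow_phi_le (by
        have : M ≤ m := hb M hMs
        omega))

lemma sumPhi_unique : ∀ (n : ℕ) (s t : Finset ℤ), s.card + t.card ≤ n → NA s → NA t →
    sumPhi s = sumPhi t → s = t := by
  intro n
  induction n with
  | zero =>
    intro s t hc _ _ _
    have hs : s = ∅ := Finset.card_eq_zero.1 (by omega)
    have ht : t = ∅ := Finset.card_eq_zero.1 (by omega)
    rw [hs, ht]
  | succ n ih =>
    intro s t hc hs ht hsum
    rcases Finset.eq_empty_or_nonempty s with rfl | hsne
    · rcases Finset.eq_empty_or_nonempty t with rfl | htne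
      · rfl
      · exfalso
        have h1 : goldenPhi ^ (t.max' htne) ≤ sumPhi t := le_sumPhi (t.max'_mem htne)
        have h2 : sumPhi (∅ : Finset ℤ) = 0 := by simp [sumPhi]
        have := zpow_phi_pos (t.max' htne)
        rw [h2] at hsum; linarith
    rcases Finset.eq_empty_or_nonempty t with rfl | htne
    · exfalso
      have h1 : goldenPhi ^ (s.max' hsne) ≤ sumPhi s := le_sumPhi (s.max'_mem hsne)
      have h2 : sumPhi (∅ : Finset ℤ) = 0 := by simp [sumPhi]
      have := zpow_phi_pos (s.max' hsne)
      rw [h2] at hsum; linarith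
    · set Ms := s.max' hsne with hMs
      set Mt := t.max' htne with hMt
      have key : ∀ (u v : Finset ℤ) (hu : u.Nonempty) (hv : v.Nonempty), NA u →
          sumPhi u = sumPhi v → u.max' hu < v.max' hv → False := by
        intro u v hu hv hnau hequ hlt
        have h1 : sumPhi u < goldenPhi ^ (u.max' hu + 1) :=
          sumPhi_lt u.card u (u.max' hu) le_rfl hnau (fun i hi => u.le_max' i hi)
        have h2 : goldenPhi ^ (v.max' hv) ≤ sumPhi v := le_sumPhi (v.max'_mem hv)
        have h3 : goldenPhi ^ (u.max' hu + 1) ≤ goldenPhi ^ (v.max' hv) :=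
          zpow_phi_le (by omega)
        linarith
      have hM : Ms = Mt := by
        rcases lt_trichotomy Ms Mt with h | h | h
        · exact absurd h (fun h => key s t hsne htne hs hsum h)
        · exact h
        · exact absurd h (fun h => key t s htne hsne ht hsum.symm h)
      have hMss : Ms ∈ s := s.max'_mem hsne
      have hMst : Ms ∈ t := by rw [hM]; exact t.max'_mem htne
      have hsum' : sumPhi (s.erase Ms) = sumPhi (t.erase Ms) := by
        have e1 : sumPhi s = goldenPhi ^ Ms + sumPhi (s.erase Ms) := by
          rw [← sumPhi_insert (Finset.notMem_erase Ms s), Finset.insert_erase hMss]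
        have e2 : sumPhi t = goldenPhi ^ Ms + sumPhi (t.erase Ms) := by
          rw [← sumPhi_insert (Finset.notMem_erase Ms t), Finset.insert_erase hMst]
        rw [e1, e2] at hsum; linarith
      have hrec : s.erase Ms = t.erase Ms := by
        apply ih _ _ _ (NA_subset (Finset.erase_subset _ _) hs)
          (NA_subset (Finset.erase_subset _ _) ht) hsum'
        have c1 := Finset.card_erase_of_mem hMss
        have c2 := Finset.card_erase_of_mem hMst
        have := Finset.card_pos.2 hsne
        have := Finset.card_pos.2 htne
        omega
      have : insert Ms (s.erase Ms) = insert Ms (t.erase Ms) := by rw [hrec]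
      rwa [Finset.insert_erase hMss, Finset.insert_erase hMst] at this

lemma NA_unique {s t : Finset ℤ} (hs : NA s) (ht : NA t) (h : sumPhi s = sumPhi t) : s = t :=
  sumPhi_unique (s.card + t.card) s t le_rfl hs ht h

lemma lucas_pos : ∀ n, 1 ≤ lucas n := by
  intro n
  induction n using Nat.strong_induction_on with
  | _ n ih =>
    match n with
    | 0 => simp [lucas]
    | 1 => simp [lucas]
    | n + 2 =>
      have h1 := ih (n+1) (by omega)
      have h2 := ih n (by omega)
      simp only [lucas]; omega

lemma lucas_add_two (n : ℕ) : lucas (n+2) = lucas (n+1) + lucas n := rfl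

lemma phi_inv : goldenPhi⁻¹ = goldenPhi - 1 := by
  have h : goldenPhi * (goldenPhi - 1) = 1 := by nlinarith [phi_sq]
  exact inv_eq_of_mul_eq_one_right h

lemma lucas_phi : ∀ j : ℕ,
    ((lucas j : ℝ) = goldenPhi ^ (j:ℤ) + (-1)^j * goldenPhi ^ (-(j:ℤ))) ∧
    ((lucas (j+1) : ℝ) = goldenPhi ^ ((j:ℤ)+1) + (-1)^(j+1) * goldenPhi ^ (-((j:ℤ)+1))) := by
  intro j
  induction j with
  | zero =>
    constructor
    · simp [lucas]; norm_num
    · have h1 : goldenPhi ^ (1:ℤ) = goldenPhi := zpow_one _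
      have h2 : goldenPhi ^ (-1:ℤ) = goldenPhi⁻¹ := zpow_neg_one _
      simp only [lucas]
      push_cast
      rw [zpow_one, zpow_neg_one, phi_inv]
      ring
  | succ j ih =>
    refine ⟨ih.2, ?_⟩
    have e1 := ih.1
    have e2 := ih.2
    have hl : (lucas (j+2) : ℝ) = lucas (j+1) + lucas j := by
      rw [lucas_add_two]; push_cast; ring
    have hz1 : goldenPhi ^ ((j:ℤ)+2) = goldenPhi ^ ((j:ℤ)+1) + goldenPhi ^ (j:ℤ) := zrec j
    have hz2 : goldenPhi ^ (-(j:ℤ)) = goldenPhi ^ (-(j:ℤ)-1) + goldenPhi ^ (-(j:ℤ)-2) := by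
      have := zrec (-(j:ℤ)-2)
      rw [show -(j:ℤ)-2+2 = -(j:ℤ) by ring, show -(j:ℤ)-2+1 = -(j:ℤ)-1 by ring] at this
      linarith
    have goal : (lucas (j+2) : ℝ) = goldenPhi ^ ((j:ℤ)+2) + (-1)^(j+2) * goldenPhi ^ (-((j:ℤ)+2)) := by
      rw [hl, e1, e2, hz1]
      rw [show (-((j:ℤ)+1)) = -(j:ℤ)-1 by ring, show (-((j:ℤ)+2)) = -(j:ℤ)-2 by ring]
      rw [pow_succ, pow_succ]
      linear_combination ((-1:ℝ)^j) * hz2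
    convert goal using 3 <;> (push_cast; ring)

lemma lucas_even (k : ℕ) :
    (lucas (2*k) : ℝ) = goldenPhi ^ (2*(k:ℤ)) + goldenPhi ^ (-(2*(k:ℤ))) := by
  have h := (lucas_phi (2*k)).1
  have hsign : ((-1:ℝ))^(2*k) = 1 := by rw [pow_mul]; norm_num
  rw [hsign, one_mul] at h
  rw [show ((2*k:ℕ):ℤ) = 2*(k:ℤ) by push_cast; ring] at h
  exact h

lemma lucas_odd (k : ℕ) :
    (lucas (2*k+1) : ℝ) = goldenPhi ^ (2*(k:ℤ)+1) - goldenPhi ^ (-(2*(k:ℤ))-1) := by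
  have h := (lucas_phi (2*k+1)).1
  have hsign : ((-1:ℝ))^(2*k+1) = -1 := by rw [pow_succ, pow_mul]; norm_num
  rw [hsign] at h
  rw [show ((2*k+1:ℕ):ℤ) = 2*(k:ℤ)+1 by push_cast; ring] at h
  rw [h, show -(2*(k:ℤ)+1) = -(2*(k:ℤ))-1 by ring]
  ring

lemma NA_insert {s : Finset ℤ} {a : ℤ} (hs : NA s) (h1 : a + 1 ∉ s) (h2 : a - 1 ∉ s) :
    NA (insert a s) := by
  intro i hi
  rcases Finset.mem_insert.1 hi with rfl | hi
  · intro hmem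
    rcases Finset.mem_insert.1 hmem with h | h
    · omega
    · exact h1 h
  · intro hmem
    rcases Finset.mem_insert.1 hmem with h | h
    · exact h2 (by rw [show a - 1 = i by omega]; exact hi)
    · exact hs i hi h

def Good (k N : ℕ) (s : Finset ℤ) : Prop :=
  NA s ∧ sumPhi s = N ∧ ∀ i ∈ s, -(2*(k:ℤ)) ≤ i ∧ i ≤ 2*(k:ℤ)

def BB (k : ℕ) : Prop := ∀ N : ℕ, 1 ≤ N → N ≤ lucas (2*k+1) → ∃ s, Good k N s

def RGood (k m : ℕ) (s : Finset ℤ) : Prop :=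
  NA s ∧ sumPhi s = (m:ℝ) - goldenPhi ^ (-(2*(k:ℤ))) ∧
  (∀ i ∈ s, -(2*(k:ℤ))+1 ≤ i ∧ i ≤ 2*(k:ℤ)) ∧
  (((-(2*(k:ℤ))+1) ∈ s) ↔ m ≤ lucas (2*k-1)) ∧
  (m + 1 ≤ lucas (2*k) → ∀ i ∈ s, i ≤ 2*(k:ℤ)-1)

def RR (k : ℕ) : Prop := ∀ m : ℕ, 1 ≤ m → m ≤ lucas (2*k+1) → ∃ s, RGood k m s

lemma step (k : ℕ) (hk : 1 ≤ k) (hB : BB k) (hR : RR k) : BB (k+1) ∧ RR (k+1) := by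
  have l1 : lucas (2*k+3) = lucas (2*k+2) + lucas (2*k+1) := lucas_add_two (2*k+1)
  have l2 : lucas (2*k+2) = lucas (2*k+1) + lucas (2*k) := lucas_add_two (2*k)
  have l3 : lucas (2*k+1) = lucas (2*k) + lucas (2*k-1) := by
    have := lucas_add_two (2*k-1)
    have h1 : 2*k-1+2 = 2*k+1 := by omega
    have h2 : 2*k-1+1 = 2*k := by omega
    rw [h1, h2] at this
    exact this
  have lp0 := lucas_pos (2*k)
  have lp1 := lucas_pos (2*k+1)
  have lp2 := lucas_pos (2*k-1)
  have zr1 : goldenPhi ^ (-(2*(k:ℤ))) = goldenPhi ^ (-(2*(k:ℤ))-1) + goldenPhi ^ (-(2*(k:ℤ))-2) := by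
    have := zrec (-(2*(k:ℤ))-2)
    rw [show -(2*(k:ℤ))-2+2 = -(2*(k:ℤ)) by ring, show -(2*(k:ℤ))-2+1 = -(2*(k:ℤ))-1 by ring] at this
    linarith
  have lodd : (lucas (2*k+1) : ℝ) = goldenPhi ^ (2*(k:ℤ)+1) - goldenPhi ^ (-(2*(k:ℤ))-1) :=
    lucas_odd k
  have leven2 : (lucas (2*k+2) : ℝ)
      = goldenPhi ^ (2*(k:ℤ)+2) + goldenPhi ^ (-(2*(k:ℤ))-2) := by
    have := lucas_even (k+1)
    rw [show 2*(k+1) = 2*k+2 by ring] at this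
    rw [this, show (-(2*((k+1:ℕ):ℤ))) = -(2*(k:ℤ))-2 by push_cast; ring,
      show (2*((k+1:ℕ):ℤ)) = 2*(k:ℤ)+2 by push_cast; ring]
  constructor
  · -- BB (k+1)
    intro N h1 h2
    rw [show 2*(k+1)+1 = 2*k+3 by ring] at h2
    by_cases hc1 : N ≤ lucas (2*k+1)
    · obtain ⟨s, hna, hsum, hb⟩ := hB N h1 hc1
      refine ⟨s, hna, hsum, fun i hi => ?_⟩
      have := hb i hi
      push_cast
      omega
    · by_cases hc2 : N + 1 ≤ lucas (2*k+2)
      · -- middle case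
        have hm1 : 1 ≤ N - lucas (2*k+1) := by omega
        have hm2 : N - lucas (2*k+1) + 1 ≤ lucas (2*k) := by omega
        have hm3 : N - lucas (2*k+1) ≤ lucas (2*k+1) := by omega
        obtain ⟨s, hna, hsum, hb, _, href⟩ := hR (N - lucas (2*k+1)) hm1 hm3
        have hbs := href hm2
        have hnotin1 : (-(2*(k:ℤ))-2) ∉ s := by
          intro h; have := (hb _ h).1; omega
        have hnotin2 : (2*(k:ℤ)+1) ∉ insert (-(2*(k:ℤ))-2) s := by
          intro h
          rcases Finset.mem_insert.1 h with h | h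
          · omega
          · have := hbs _ h; omega
        refine ⟨insert (2*(k:ℤ)+1) (insert (-(2*(k:ℤ))-2) s), ?_, ?_, ?_⟩
        · apply NA_insert
          · apply NA_insert hna
            · intro h; have := (hb _ h).1; omega
            · intro h; have := (hb _ h).1; omega
          · intro h
            rcases Finset.mem_insert.1 h with h | h
            · omega
            · have := hbs _ h; omega
          · intro h
            rcases Finset.mem_insert.1 h with h | h
            · omega
            · have := hbs _ h; omega
        · rw [sumPhi_insert hnotin2, sumPhi_insert hnotin1, hsum]
          have hN : ((N - lucas (2*k+1) : ℕ) : ℝ) = (N:ℝ) - (lucas (2*k+1) : ℝ) :=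
            Nat.cast_sub (by omega)
          rw [hN, lodd]
          push_cast
          linarith [zr1]
        · intro i hi
          rcases Finset.mem_insert.1 hi with rfl | hi
          · omega
          · rcases Finset.mem_insert.1 hi with rfl | hi
            · omega
            · have h3 := hb i hi
              omega
      · -- top case
        have hge : lucas (2*k+2) ≤ N := by omega
        by_cases h0 : N = lucas (2*k+2)
        · have hne : (-(2*(k:ℤ))-2) ∉ (∅ : Finset ℤ) := Finset.notMem_empty _
          have hne2 : (2*(k:ℤ)+2) ∉ insert (-(2*(k:ℤ))-2) (∅ : Finset ℤ) := by
            intro h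
            rcases Finset.mem_insert.1 h with h | h
            · omega
            · exact Finset.notMem_empty _ h
          refine ⟨insert (2*(k:ℤ)+2) (insert (-(2*(k:ℤ))-2) ∅), ?_, ?_, ?_⟩
          · apply NA_insert
            · apply NA_insert
              · intro i hi; exact absurd hi (Finset.notMem_empty _)
              · exact Finset.notMem_empty _
              · exact Finset.notMem_empty _
            · intro h
              rcases Finset.mem_insert.1 h with h | h
              · omega
              · exact Finset.notMem_empty _ h
            · intro h
              rcases Finset.mem_insert.1 h with h | h
              · omega
              · exact Finset.notMem_empty _ h
          · rw [sumPhi_insert hne2, sumPhi_insert hne]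
            have he : sumPhi ∅ = 0 := Finset.sum_empty
            rw [he, h0, leven2]
            ring
          · intro i hi
            rcases Finset.mem_insert.1 hi with rfl | hi
            · omega
            · rcases Finset.mem_insert.1 hi with rfl | hi
              · omega
              · exact absurd hi (Finset.notMem_empty _)
        · have hM1 : 1 ≤ N - lucas (2*k+2) := by omega
          have hM2 : N - lucas (2*k+2) ≤ lucas (2*k+1) := by omega
          obtain ⟨u, hna, hsum, hb⟩ := hB (N - lucas (2*k+2)) hM1 hM2
          have hnotin1 : (-(2*(k:ℤ))-2) ∉ u := by
            intro h; have := (hb _ h).1; omega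
          have hnotin2 : (2*(k:ℤ)+2) ∉ insert (-(2*(k:ℤ))-2) u := by
            intro h
            rcases Finset.mem_insert.1 h with h | h
            · omega
            · have := (hb _ h).2; omega
          refine ⟨insert (2*(k:ℤ)+2) (insert (-(2*(k:ℤ))-2) u), ?_, ?_, ?_⟩
          · apply NA_insert
            · apply NA_insert hna
              · intro h; have := (hb _ h).1; omega
              · intro h; have := (hb _ h).1; omega
            · intro h
              rcases Finset.mem_insert.1 h with h | h
              · omega
              · have := (hb _ h).2; omega
            · intro h
              rcases Finset.mem_insert.1 h with h | h
              · omega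
              · have := (hb _ h).2; omega
          · rw [sumPhi_insert hnotin2, sumPhi_insert hnotin1, hsum]
            have hN : ((N - lucas (2*k+2) : ℕ) : ℝ) = (N:ℝ) - (lucas (2*k+2) : ℝ) :=
              Nat.cast_sub (by omega)
            rw [hN, leven2]
            ring
          · intro i hi
            rcases Finset.mem_insert.1 hi with rfl | hi
            · omega
            · rcases Finset.mem_insert.1 hi with rfl | hi
              · omega
              · have h3 := hb i hi
                omega
  · -- RR (k+1)
    intro m h1 h2
    rw [show 2*(k+1)+1 = 2*k+3 by ring] at h2
    have hlukp1 : lucas (2*(k+1)-1) = lucas (2*k+1) := by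
      have h : 2*(k+1)-1 = 2*k+1 := by omega
      rw [h]
    have hluk2 : lucas (2*(k+1)) = lucas (2*k+2) := by
      have h : 2*(k+1) = 2*k+2 := by omega
      rw [h]
    have ecast : (-(2 * ((k+1:ℕ):ℤ))) = -(2*(k:ℤ))-2 := by push_cast; ring
    by_cases hc1 : m ≤ lucas (2*k+1)
    · -- case (i)
      obtain ⟨s, hna, hsum, hb, _, _⟩ := hR m h1 hc1
      have hnotin : (-(2*(k:ℤ))-1) ∉ s := by
        intro h; have := (hb _ h).1; omega
      refine ⟨insert (-(2*(k:ℤ))-1) s, ?_, ?_, ?_, ?_, ?_⟩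
      · apply NA_insert hna
        · intro h; have := (hb _ h).1; omega
        · intro h; have := (hb _ h).1; omega
      · rw [sumPhi_insert hnotin, hsum, ecast]
        linarith [zr1]
      · intro i hi
        rcases Finset.mem_insert.1 hi with rfl | hi
        · omega
        · have := hb i hi; omega
      · constructor
        · intro _; rw [hlukp1]; exact hc1
        · intro _
          apply Finset.mem_insert.2
          left
          omega
      · intro _ i hi
        rcases Finset.mem_insert.1 hi with rfl | hi
        · omega
        · have := (hb i hi).2; omega
    · by_cases hc2 : m + 1 ≤ lucas (2*k+2)
      · -- case (ii)
        have hm1 : 1 ≤ m - lucas (2*k+1) := by omega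
        have hm2 : m - lucas (2*k+1) + 1 ≤ lucas (2*k) := by omega
        have hm3 : m - lucas (2*k+1) ≤ lucas (2*k+1) := by omega
        obtain ⟨s, hna, hsum, hb, _, href⟩ := hR (m - lucas (2*k+1)) hm1 hm3
        have hbs := href hm2
        have hnotin : (2*(k:ℤ)+1) ∉ s := by
          intro h; have := hbs _ h; omega
        refine ⟨insert (2*(k:ℤ)+1) s, ?_, ?_, ?_, ?_, ?_⟩
        · apply NA_insert hna
          · intro h; have := hbs _ h; omega
          · intro h; have := hbs _ h; omega
        · rw [sumPhi_insert hnotin, hsum]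
          have hN : ((m - lucas (2*k+1) : ℕ) : ℝ) = (m:ℝ) - (lucas (2*k+1) : ℝ) :=
            Nat.cast_sub (by omega)
          rw [hN, lodd, ecast]
          linarith [zr1]
        · intro i hi
          rcases Finset.mem_insert.1 hi with rfl | hi
          · omega
          · have := hb i hi; omega
        · constructor
          · intro h
            rcases Finset.mem_insert.1 h with h | h
            · exfalso; omega
            · exfalso; have := (hb _ h).1; omega
          · intro h; exfalso; omega
        · intro _ i hi
          rcases Finset.mem_insert.1 hi with rfl | hi
          · omega
          · have := hbs i hi; omega
      · by_cases h0 : m = lucas (2*k+2)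
        · -- case (iii)
          refine ⟨{2*(k:ℤ)+2}, ?_, ?_, ?_, ?_, ?_⟩
          · intro i hi
            rw [Finset.mem_singleton] at hi
            subst hi
            rw [Finset.mem_singleton]
            omega
          · have : sumPhi {2*(k:ℤ)+2} = goldenPhi ^ (2*(k:ℤ)+2) := by
              simp [sumPhi]
            rw [this, h0, leven2, ecast]
            ring
          · intro i hi
            rw [Finset.mem_singleton] at hi
            subst hi
            omega
          · simp only [Finset.mem_singleton]
            constructor
            · intro h; exfalso; omega
            · intro h; exfalso; omega
          · intro h; exfalso; omega
        · -- case (iv)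
          have hM1 : 1 ≤ m - lucas (2*k+2) := by omega
          have hM2 : m - lucas (2*k+2) ≤ lucas (2*k+1) := by omega
          obtain ⟨u, hna, hsum, hb⟩ := hB (m - lucas (2*k+2)) hM1 hM2
          have hnotin : (2*(k:ℤ)+2) ∉ u := by
            intro h; have := (hb _ h).2; omega
          refine ⟨insert (2*(k:ℤ)+2) u, ?_, ?_, ?_, ?_, ?_⟩
          · apply NA_insert hna
            · intro h; have := (hb _ h).2; omega
            · intro h; have := (hb _ h).2; omega
          · rw [sumPhi_insert hnotin, hsum]
            have hN : ((m - lucas (2*k+2) : ℕ) : ℝ) = (m:ℝ) - (lucas (2*k+2) : ℝ) :=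
              Nat.cast_sub (by omega)
            rw [hN, leven2, ecast]
            ring
          · intro i hi
            rcases Finset.mem_insert.1 hi with rfl | hi
            · omega
            · have := hb i hi; omega
          · constructor
            · intro h
              rcases Finset.mem_insert.1 h with h | h
              · exfalso; omega
              · exfalso; have := (hb _ h).1; omega
            · intro h; exfalso; omega
          · intro h; exfalso; omega

lemma NA_singleton (a : ℤ) : NA {a} := by
  intro i hi h
  rw [Finset.mem_singleton] at hi h
  omega

lemma sumPhi_singleton (a : ℤ) : sumPhi {a} = goldenPhi ^ a := Finset.sum_singleton _ _

lemma phi_zpow_zero : goldenPhi ^ (0:ℤ) = 1 := zpow_zero _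

lemma key1 : goldenPhi ^ (-1:ℤ) + goldenPhi ^ (-2:ℤ) = 1 := by
  have h := zrec (-2)
  rw [show (-2:ℤ)+2 = 0 by ring, show (-2:ℤ)+1 = -1 by ring, zpow_zero] at h
  linarith

lemma phi_zpow_one : goldenPhi ^ (1:ℤ) = goldenPhi := zpow_one _

lemma phi_zpow_neg_one : goldenPhi ^ (-1:ℤ) = goldenPhi - 1 := by
  rw [zpow_neg_one, phi_inv]

lemma key2 : goldenPhi ^ (1:ℤ) + goldenPhi ^ (-2:ℤ) = 2 := by
  have h := key1
  rw [phi_zpow_neg_one] at h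
  rw [phi_zpow_one]
  linarith

lemma phi_zpow_two : goldenPhi ^ (2:ℤ) = goldenPhi + 1 := by
  rw [show (2:ℤ) = (1:ℤ)+1 by ring, zpow_add₀ phi_ne, zpow_one]
  exact phi_sq

lemma key3 : goldenPhi ^ (2:ℤ) + goldenPhi ^ (-2:ℤ) = 3 := by
  have h := key2
  rw [phi_zpow_one] at h
  rw [phi_zpow_two]
  linarith

lemma lucas_vals : lucas 0 = 2 ∧ lucas 1 = 1 ∧ lucas 2 = 3 ∧ lucas 3 = 4 := by
  refine ⟨rfl, rfl, ?_, ?_⟩ <;> simp [lucas]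

lemma mem_pair {a b i : ℤ} : i ∈ ({a, b} : Finset ℤ) ↔ i = a ∨ i = b := by
  simp [Finset.mem_insert, Finset.mem_singleton]

lemma BB1 : BB 1 := by
  intro N h1 h2
  rw [lucas_vals.2.2.2] at h2
  have hne1 : (1:ℤ) ∉ ({-2} : Finset ℤ) := by rw [Finset.mem_singleton]; omega
  have hne2 : (2:ℤ) ∉ ({-2} : Finset ℤ) := by rw [Finset.mem_singleton]; omega
  have hne0 : (0:ℤ) ∉ ({-2} : Finset ℤ) := by rw [Finset.mem_singleton]; omega
  have hne3 : (2:ℤ) ∉ ({0,-2} : Finset ℤ) := by rw [mem_pair]; omega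
  interval_cases N
  · refine ⟨{0}, NA_singleton 0, ?_, ?_⟩
    · rw [sumPhi_singleton, zpow_zero]; norm_num
    · intro i hi; rw [Finset.mem_singleton] at hi; omega
  · refine ⟨{1, -2}, ?_, ?_, ?_⟩
    · intro i hi h; rw [mem_pair] at hi; rw [mem_pair] at h; omega
    · rw [show ({1,-2} : Finset ℤ) = insert 1 {-2} from rfl, sumPhi_insert hne1,
        sumPhi_singleton, key2]
      norm_num
    · intro i hi; rw [mem_pair] at hi; omega
  · refine ⟨{2, -2}, ?_, ?_, ?_⟩
    · intro i hi h; rw [mem_pair] at hi; rw [mem_pair] at h; omega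
    · rw [show ({2,-2} : Finset ℤ) = insert 2 {-2} from rfl, sumPhi_insert hne2,
        sumPhi_singleton, key3]
      norm_num
    · intro i hi; rw [mem_pair] at hi; omega
  · refine ⟨{2, 0, -2}, ?_, ?_, ?_⟩
    · intro i hi h
      simp only [Finset.mem_insert, Finset.mem_singleton] at hi h
      omega
    · rw [show ({2,0,-2} : Finset ℤ) = insert 2 (insert 0 {-2}) from rfl,
        sumPhi_insert hne3, sumPhi_insert hne0, sumPhi_singleton, zpow_zero]
      have := key3
      push_cast
      linarith
    · intro i hi
      simp only [Finset.mem_insert, Finset.mem_singleton] at hi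
      omega

lemma RR1 : RR 1 := by
  intro m h1 h2
  rw [lucas_vals.2.2.2] at h2
  have hl1 : lucas (2*1-1) = 1 := lucas_vals.2.1
  have hl2 : lucas (2*1) = 3 := lucas_vals.2.2.1
  have hne0 : (2:ℤ) ∉ ({0} : Finset ℤ) := by rw [Finset.mem_singleton]; omega
  interval_cases m
  · refine ⟨{-1}, NA_singleton _, ?_, ?_, ?_, ?_⟩
    · rw [sumPhi_singleton]
      have := key1
      push_cast
      linarith
    · intro i hi; rw [Finset.mem_singleton] at hi; omega
    · rw [hl1]
      simp only [Finset.mem_singleton]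
      constructor
      · intro _; omega
      · intro _; omega
    · intro _ i hi; rw [Finset.mem_singleton] at hi; omega
  · refine ⟨{1}, NA_singleton _, ?_, ?_, ?_, ?_⟩
    · rw [sumPhi_singleton]
      have := key2
      push_cast
      linarith
    · intro i hi; rw [Finset.mem_singleton] at hi; omega
    · rw [hl1]
      simp only [Finset.mem_singleton]
      constructor
      · intro h; omega
      · intro h; omega
    · intro _ i hi; rw [Finset.mem_singleton] at hi; omega
  · refine ⟨{2}, NA_singleton _, ?_, ?_, ?_, ?_⟩
    · rw [sumPhi_singleton]
      have := key3
      push_cast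
      linarith
    · intro i hi; rw [Finset.mem_singleton] at hi; omega
    · rw [hl1]
      simp only [Finset.mem_singleton]
      constructor
      · intro h; omega
      · intro h; omega
    · rw [hl2]; intro h; omega
  · refine ⟨{2, 0}, ?_, ?_, ?_, ?_, ?_⟩
    · intro i hi h; rw [mem_pair] at hi; rw [mem_pair] at h; omega
    · rw [show ({2,0} : Finset ℤ) = insert 2 {0} from rfl, sumPhi_insert hne0,
        sumPhi_singleton, zpow_zero]
      have := key3
      push_cast
      linarith
    · intro i hi; rw [mem_pair] at hi; omega
    · rw [hl1]
      rw [mem_pair]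
      constructor
      · intro h; omega
      · intro h; omega
    · rw [hl2]; intro h; omega

lemma BR : ∀ k, 1 ≤ k → BB k ∧ RR k := by
  intro k hk
  induction k, hk using Nat.le_induction with
  | base => exact ⟨BB1, RR1⟩
  | succ n hn ih => exact step n hn ih.1 ih.2

lemma exists_rep (n N : ℕ) (hn : 2 ≤ n) (h1 : lucas (2*n+1) + 1 ≤ N)
    (h2 : N ≤ lucas (2*n+2)) :
    ∃ U : Finset ℤ, NA U ∧ sumPhi U = N ∧
      ((-(2*(n:ℤ))+1) ∈ U ↔ N ≤ lucas (2*n+1) + lucas (2*n-1)) := by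
  have l2 : lucas (2*n+2) = lucas (2*n+1) + lucas (2*n) := lucas_add_two (2*n)
  have l3 : lucas (2*n+1) = lucas (2*n) + lucas (2*n-1) := by
    have h := lucas_add_two (2*n-1)
    rw [show 2*n-1+2 = 2*n+1 by omega, show 2*n-1+1 = 2*n by omega] at h
    exact h
  have l4 : lucas (2*n) = lucas (2*n-1) + lucas (2*n-2) := by
    have h := lucas_add_two (2*n-2)
    rw [show 2*n-2+2 = 2*n by omega, show 2*n-2+1 = 2*n-1 by omega] at h
    exact h
  have lp1 := lucas_pos (2*n-1)
  have lp2 := lucas_pos (2*n-2)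
  have zr1 : goldenPhi ^ (-(2*(n:ℤ))) = goldenPhi ^ (-(2*(n:ℤ))-1) + goldenPhi ^ (-(2*(n:ℤ))-2) := by
    have := zrec (-(2*(n:ℤ))-2)
    rw [show -(2*(n:ℤ))-2+2 = -(2*(n:ℤ)) by ring, show -(2*(n:ℤ))-2+1 = -(2*(n:ℤ))-1 by ring] at this
    linarith
  have lodd : (lucas (2*n+1) : ℝ) = goldenPhi ^ (2*(n:ℤ)+1) - goldenPhi ^ (-(2*(n:ℤ))-1) :=
    lucas_odd n
  have leven2 : (lucas (2*n+2) : ℝ)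
      = goldenPhi ^ (2*(n:ℤ)+2) + goldenPhi ^ (-(2*(n:ℤ))-2) := by
    have h := lucas_even (n+1)
    rw [show 2*(n+1) = 2*n+2 by ring] at h
    rw [h, show (-(2*((n+1:ℕ):ℤ))) = -(2*(n:ℤ))-2 by push_cast; ring,
      show (2*((n+1:ℕ):ℤ)) = 2*(n:ℤ)+2 by push_cast; ring]
  by_cases hc : N + 1 ≤ lucas (2*n+2)
  · have hm1 : 1 ≤ N - lucas (2*n+1) := by omega
    have hm2 : N - lucas (2*n+1) + 1 ≤ lucas (2*n) := by omega
    have hm3 : N - lucas (2*n+1) ≤ lucas (2*n+1) := by omega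
    obtain ⟨s, hna, hsum, hb, hiff, href⟩ := (BR n (by omega)).2 (N - lucas (2*n+1)) hm1 hm3
    have hbs := href hm2
    have hnotin1 : (-(2*(n:ℤ))-2) ∉ s := by
      intro h; have := (hb _ h).1; omega
    have hnotin2 : (2*(n:ℤ)+1) ∉ insert (-(2*(n:ℤ))-2) s := by
      intro h
      rcases Finset.mem_insert.1 h with h | h
      · omega
      · have := hbs _ h; omega
    refine ⟨insert (2*(n:ℤ)+1) (insert (-(2*(n:ℤ))-2) s), ?_, ?_, ?_⟩
    · apply NA_insert
      · apply NA_insert hna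
        · intro h; have := (hb _ h).1; omega
        · intro h; have := (hb _ h).1; omega
      · intro h
        rcases Finset.mem_insert.1 h with h | h
        · omega
        · have := hbs _ h; omega
      · intro h
        rcases Finset.mem_insert.1 h with h | h
        · omega
        · have := hbs _ h; omega
    · rw [sumPhi_insert hnotin2, sumPhi_insert hnotin1, hsum]
      have hN : ((N - lucas (2*n+1) : ℕ) : ℝ) = (N:ℝ) - (lucas (2*n+1) : ℝ) :=
        Nat.cast_sub (by omega)
      rw [hN, lodd]
      push_cast
      linarith [zr1]
    · constructor
      · intro h
        rcases Finset.mem_insert.1 h with h | h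
        · exfalso; omega
        · rcases Finset.mem_insert.1 h with h | h
          · exfalso; omega
          · have := hiff.1 h; omega
      · intro h
        apply Finset.mem_insert.2
        right
        apply Finset.mem_insert.2
        right
        exact hiff.2 (by omega)
  · -- N = lucas (2n+2)
    have h0 : N = lucas (2*n+2) := by omega
    have hne : (-(2*(n:ℤ))-2) ∉ (∅ : Finset ℤ) := Finset.notMem_empty _
    have hne2 : (2*(n:ℤ)+2) ∉ insert (-(2*(n:ℤ))-2) (∅ : Finset ℤ) := by
      intro h
      rcases Finset.mem_insert.1 h with h | h
      · omega
      · exact Finset.notMem_empty _ h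
    refine ⟨insert (2*(n:ℤ)+2) (insert (-(2*(n:ℤ))-2) ∅), ?_, ?_, ?_⟩
    · apply NA_insert
      · apply NA_insert
        · intro i hi; exact absurd hi (Finset.notMem_empty _)
        · exact Finset.notMem_empty _
        · exact Finset.notMem_empty _
      · intro h
        rcases Finset.mem_insert.1 h with h | h
        · omega
        · exact Finset.notMem_empty _ h
      · intro h
        rcases Finset.mem_insert.1 h with h | h
        · omega
        · exact Finset.notMem_empty _ h
    · rw [sumPhi_insert hne2, sumPhi_insert hne]
      have he : sumPhi ∅ = 0 := Finset.sum_empty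
      rw [he, h0, leven2]
      ring
    · constructor
      · intro h
        rcases Finset.mem_insert.1 h with h | h
        · exfalso; omega
        · rcases Finset.mem_insert.1 h with h | h
          · exfalso; omega
          · exact absurd h (Finset.notMem_empty _)
      · intro h; exfalso; omega

/-- digit values: a phi-rep digit function is 0/1 valued and support = ones. -/
lemma phiRep_sum_support {N : ℕ} {c : ℤ →₀ ℕ} (h : IsPhiRep N c) :
    sumPhi c.support = N := by
  have h2 := h.2
  rw [Finsupp.sum] at h2
  rw [← h2, sumPhi]
  apply Finset.sum_congr rfl
  intro i hi
  have h1 : c i ≠ 0 := Finsupp.mem_support_iff.1 hi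
  have h3 : c i ≤ 1 := h.1 i
  have : c i = 1 := by omega
  rw [this]
  norm_num

/-- the finsupp attached to a finset -/
def ofSet (U : Finset ℤ) : ℤ →₀ ℕ :=
  ⟨U, fun i => if i ∈ U then 1 else 0, by
    intro a
    by_cases h : a ∈ U <;> simp [h]⟩

lemma ofSet_apply (U : Finset ℤ) (i : ℤ) : ofSet U i = if i ∈ U then 1 else 0 := rfl

lemma ofSet_isBergman {N : ℕ} {U : Finset ℤ} (hna : NA U) (hsum : sumPhi U = N) :
    IsBergman N (ofSet U) := by
  refine ⟨⟨?_, ?_⟩, ?_⟩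
  · intro i
    rw [ofSet_apply]
    split <;> omega
  · have hsupp : (ofSet U).support = U := rfl
    rw [Finsupp.sum, hsupp, ← hsum, sumPhi]
    apply Finset.sum_congr rfl
    intro i hi
    rw [ofSet_apply, if_pos hi]
    norm_num
  · intro i
    rw [ofSet_apply, ofSet_apply]
    by_cases h1 : i ∈ U
    · have := hna i h1
      rw [if_neg this]
      ring
    · rw [if_neg h1]
      ring

lemma chain_sum : ∀ j : ℕ,
    sumPhi (Finset.image (fun i : ℕ => 2*(i:ℤ)+3) (Finset.range j))
      = goldenPhi ^ (2*(j:ℤ)+2) - goldenPhi ^ (2:ℤ) := by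
  intro j
  induction j with
  | zero => simp [sumPhi]
  | succ j ih =>
    rw [Finset.range_add_one, Finset.image_insert]
    have hnotin : (2*(j:ℤ)+3) ∉ Finset.image (fun i : ℕ => 2*(i:ℤ)+3) (Finset.range j) := by
      intro h
      obtain ⟨i, hi, he⟩ := Finset.mem_image.1 h
      rw [Finset.mem_range] at hi
      omega
    rw [sumPhi_insert hnotin, ih]
    have hz := zrec (2*(j:ℤ)+2)
    rw [show 2*(j:ℤ)+2+2 = 2*((j:ℤ)+1)+2 by ring, show 2*(j:ℤ)+2+1 = 2*(j:ℤ)+3 by ring] at hz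
    rw [show 2*((j+1:ℕ):ℤ)+2 = 2*((j:ℤ)+1)+2 by push_cast; ring]
    linarith

/-- Key: any admissible rep with digits 1 at 0 and 1 can be normalized to a
nonadjacent set with the same digits at negative positions. -/
lemma admissible_normalize {N : ℕ} {c : ℤ →₀ ℕ} (h : IsAdmissible N c)
    (h1 : c 1 = 1) (h0 : c 0 = 1) :
    ∃ t : Finset ℤ, NA t ∧ sumPhi t = N ∧
      ∀ z : ℤ, z < 0 → (z ∈ t ↔ z ∈ c.support) := by
  have hsupD : sumPhi c.support = N := phiRep_sum_support h.1
  obtain ⟨⟨hle, -⟩, hadm⟩ := h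
  have hD1 : (1:ℤ) ∈ c.support := Finsupp.mem_support_iff.2 (by omega)
  have hD0 : (0:ℤ) ∈ c.support := Finsupp.mem_support_iff.2 (by omega)
  have hDm1 : (-1:ℤ) ∉ c.support := by
    have := hadm (-1) (by omega)
    norm_num [h0] at this
    exact Finsupp.notMem_support_iff.2 this
  have hD2 : (2:ℤ) ∉ c.support := by
    have := hadm 1 (by omega)
    norm_num [h1] at this
    exact Finsupp.notMem_support_iff.2 this
  set s : Finset ℤ := (c.support.erase 0).erase 1 with hs
  have hsub : s ⊆ c.support := fun a ha =>
    Finset.mem_of_mem_erase (Finset.mem_of_mem_erase ha)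
  have hsmem : ∀ a, a ∈ s ↔ (a ∈ c.support ∧ a ≠ 0 ∧ a ≠ 1) := by
    intro a
    constructor
    · intro ha
      exact ⟨hsub ha, fun h => by subst h; exact (Finset.mem_erase.1 (Finset.mem_of_mem_erase ha)).1 rfl,
        fun h => by subst h; exact (Finset.mem_erase.1 ha).1 rfl⟩
    · intro ⟨ha, h2, h3⟩
      exact Finset.mem_erase.2 ⟨h3, Finset.mem_erase.2 ⟨h2, ha⟩⟩
  have hrange : ∀ a ∈ s, a ≤ -2 ∨ 3 ≤ a := by
    intro a ha
    rw [hsmem] at ha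
    obtain ⟨haD, h2, h3⟩ := ha
    have hm1 : a ≠ -1 := fun h => by subst h; exact hDm1 haD
    have hm2 : a ≠ 2 := fun h => by subst h; exact hD2 haD
    omega
  have hNAs : NA s := by
    intro a ha hmem
    rw [hsmem] at ha hmem
    have := hadm a (by
      rcases hrange a (by rw [hsmem]; exact ha) with h | h <;> omega)
    rcases Nat.mul_eq_zero.1 this with h | h
    · exact absurd (Finsupp.mem_support_iff.1 hmem.1) (by rw [h]; simp)
    · exact absurd (Finsupp.mem_support_iff.1 ha.1) (by rw [h]; simp)
  have hsums : sumPhi s = (N:ℝ) - goldenPhi ^ (1:ℤ) - goldenPhi ^ (0:ℤ) := by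
    have e1 : (1:ℤ) ∈ c.support.erase 0 := Finset.mem_erase.2 ⟨by omega, hD1⟩
    have e2 : insert (1:ℤ) s = c.support.erase 0 := by
      rw [hs]; exact Finset.insert_erase e1
    have e3 : insert (0:ℤ) (c.support.erase 0) = c.support := Finset.insert_erase hD0
    have n1 : (1:ℤ) ∉ s := by rw [hs]; exact Finset.notMem_erase _ _
    have n0 : (0:ℤ) ∉ c.support.erase 0 := Finset.notMem_erase _ _
    have := sumPhi_insert n0
    rw [e3] at this
    have h2 := sumPhi_insert n1
    rw [e2] at h2
    rw [hsupD] at this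
    rw [h2] at this
    linarith
  -- find the end of the odd chain
  have hex : ∃ k : ℕ, (2*(k:ℤ)+3) ∉ s := by
    rcases s.eq_empty_or_nonempty with h | h
    · exact ⟨0, by rw [h]; exact Finset.notMem_empty _⟩
    · refine ⟨(s.max' h).toNat, fun hmem => ?_⟩
      have := s.le_max' _ hmem
      omega
  set j := Nat.find hex with hj
  have hjend : (2*(j:ℤ)+3) ∉ s := Nat.find_spec hex
  have hjlt : ∀ i : ℕ, i < j → (2*(i:ℤ)+3) ∈ s := by
    intro i hi
    have := Nat.find_min hex hi
    exact not_not.1 this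
  set chain := Finset.image (fun i : ℕ => 2*(i:ℤ)+3) (Finset.range j) with hchain
  set rest := s.filter (fun a => a < 0 ∨ 2*(j:ℤ)+3 ≤ a) with hrest
  have hfilter : s.filter (fun a => ¬(a < 0 ∨ 2*(j:ℤ)+3 ≤ a)) = chain := by
    apply Finset.ext
    intro a
    constructor
    · intro ha
      obtain ⟨haS, hcond⟩ := Finset.mem_filter.1 ha
      push_neg at hcond
      obtain ⟨hge, hlt⟩ := hcond
      have hr := hrange a haS
      have h3 : 3 ≤ a := by omega
      rcases Int.even_or_odd a with ⟨b, hb⟩ | ⟨b, hb⟩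
      · -- even: contradiction
        exfalso
        have hbm : ((b-2).toNat : ℤ) = b - 2 := by omega
        have hmem : (2*(((b-2).toNat:ℕ)):ℤ)+3 ∈ s := by
          apply hjlt
          omega
        have := hNAs _ hmem
        rw [show (2*(((b-2).toNat:ℕ)):ℤ)+3+1 = a by omega] at this
        exact this haS
      · refine Finset.mem_image.2 ⟨(b-1).toNat, Finset.mem_range.2 (by omega), by omega⟩
    · intro ha
      obtain ⟨i, hi, he⟩ := Finset.mem_image.1 ha
      rw [Finset.mem_range] at hi
      apply Finset.mem_filter.2
      refine ⟨by rw [← he]; exact hjlt i hi, by omega⟩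
  have hsplit : sumPhi rest + sumPhi chain = sumPhi s := by
    rw [hrest, ← hfilter, sumPhi, sumPhi, sumPhi]
    exact Finset.sum_filter_add_sum_filter_not s _ _
  have hcs := chain_sum j
  -- build t
  have hnotin : (2*(j:ℤ)+2) ∉ rest := by
    intro h
    have := (Finset.mem_filter.1 h).2
    omega
  refine ⟨insert (2*(j:ℤ)+2) rest, ?_, ?_, ?_⟩
  · apply NA_insert
    · exact NA_subset (Finset.filter_subset _ _) hNAs
    · intro h
      exact hjend ((Finset.mem_filter.1 h).1)
    · intro h
      have := (Finset.mem_filter.1 h).2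
      omega
  · rw [sumPhi_insert hnotin]
    have e1 : goldenPhi ^ (1:ℤ) = goldenPhi := zpow_one _
    have e0 : goldenPhi ^ (0:ℤ) = 1 := zpow_zero _
    have := phi_zpow_two
    rw [e1, e0] at hsums
    linarith
  · intro z hz
    constructor
    · intro h
      rcases Finset.mem_insert.1 h with h | h
      · omega
      · exact hsub ((Finset.mem_filter.1 h).1)
    · intro h
      apply Finset.mem_insert.2
      right
      apply Finset.mem_filter.2
      refine ⟨?_, Or.inl hz⟩
      rw [hsmem]
      exact ⟨h, by omega, by omega⟩

lemma canonical_digit (n N : ℕ) (hn : 2 ≤ n) (h1 : lucas (2*n+1) + 1 ≤ N)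
    (h2 : N ≤ lucas (2*n+2)) :
    canonicalRep N (-(2*(n:ℤ))+1) =
      if N ≤ lucas (2*n+1) + lucas (2*n-1) then 1 else 0 := by
  obtain ⟨U, hnaU, hsumU, hUiff⟩ := exists_rep n N hn h1 h2
  have hz0 : (-(2*(n:ℤ))+1) < 0 := by omega
  rw [canonicalRep]
  by_cases hA : ∃ c, IsAdmissible N c ∧ c 1 = 1 ∧ c 0 = 1
  · rw [dif_pos hA]
    obtain ⟨hadm, hc1, hc0⟩ := hA.choose_spec
    obtain ⟨t, hnat, hsumt, htz⟩ := admissible_normalize hadm hc1 hc0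
    have htU : t = U := NA_unique hnat hnaU (by rw [hsumt, hsumU])
    have hmem : ((-(2*(n:ℤ))+1) ∈ (hA.choose).support)
        ↔ N ≤ lucas (2*n+1) + lucas (2*n-1) := by
      rw [← htz _ hz0, htU]
      exact hUiff
    have hle := hadm.1.1 (-(2*(n:ℤ))+1)
    by_cases hcase : N ≤ lucas (2*n+1) + lucas (2*n-1)
    · rw [if_pos hcase]
      have := Finsupp.mem_support_iff.1 (hmem.2 hcase)
      omega
    · rw [if_neg hcase]
      have := Finsupp.notMem_support_iff.1 (fun h => hcase (hmem.1 h))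
      omega
  · rw [dif_neg hA, bergmanRep]
    have hB : ∃ c, IsBergman N c := ⟨ofSet U, ofSet_isBergman hnaU hsumU⟩
    rw [dif_pos hB]
    obtain ⟨hrep, hcons⟩ := hB.choose_spec
    have hnaD : NA (hB.choose).support := by
      intro i hi hmem
      have h := hcons i
      rcases Nat.mul_eq_zero.1 h with h | h
      · exact Finsupp.mem_support_iff.1 hmem h
      · exact Finsupp.mem_support_iff.1 hi h
    have hDU : (hB.choose).support = U :=
      NA_unique hnaD hnaU (by rw [phiRep_sum_support hrep, hsumU])
    have hmem : ((-(2*(n:ℤ))+1) ∈ (hB.choose).support)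
        ↔ N ≤ lucas (2*n+1) + lucas (2*n-1) := by rw [hDU]; exact hUiff
    have hle := hrep.1 (-(2*(n:ℤ))+1)
    by_cases hcase : N ≤ lucas (2*n+1) + lucas (2*n-1)
    · rw [if_pos hcase]
      have := Finsupp.mem_support_iff.1 (hmem.2 hcase)
      omega
    · rw [if_neg hcase]
      have := Finsupp.notMem_support_iff.1 (fun h => hcase (hmem.1 h))
      omega

theorem stmt15 (n N : ℕ) (hn : 2 ≤ n) :
    (lucas (2 * n + 1) + 1 ≤ N → N ≤ lucas (2 * n + 1) + lucas (2 * n - 1) →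
      canonicalRep N (-(2 * (n : ℤ)) + 1) = 1) ∧
    (lucas (2 * n + 1) + lucas (2 * n - 1) + 1 ≤ N → N ≤ lucas (2 * n + 2) →
      canonicalRep N (-(2 * (n : ℤ)) + 1) = 0) := by
  have l2 : lucas (2*n+2) = lucas (2*n+1) + lucas (2*n) := lucas_add_two (2*n)
  have l4 : lucas (2*n) = lucas (2*n-1) + lucas (2*n-2) := by
    have h := lucas_add_two (2*n-2)
    rw [show 2*n-2+2 = 2*n by omega, show 2*n-2+1 = 2*n-1 by omega] at h
    exact h
  have lp1 := lucas_pos (2*n-1)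
  have lp2 := lucas_pos (2*n-2)
  constructor
  · intro ha hb
    rw [canonical_digit n N hn ha (by omega), if_pos hb]
  · intro ha hb
    rw [canonical_digit n N hn (by omega) hb, if_neg (by omega)]
end
end

section
/- [Vertical runs, positive positions] Fix an integer i ≥ 1. If N ≥ 1 is a positive integer with c_i(N) = 1 such that N = 1 or c_i(N-1) = 0 (i.e., a maximal vertical run of 1's in digit position i starts at N), then c_i(N + k) = 1 for all 0 ≤ k < L_{i-1} and c_i(N + L_{i-1}) = 0; in other words, every maximal run of consecutive integers whose canonical digit at position i equals 1 has length exactly the Lucas number L_{i-1}. -/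
noncomputable section

attribute [local instance] Classical.propDecidable

namespace Aux16

local notation "φ" => goldenPhi

lemma one_lt_phi : (1:ℝ) < φ := by
  have h : (1:ℝ) < Real.sqrt 5 := by
    rw [show (1:ℝ) = Real.sqrt 1 by simp]
    exact Real.sqrt_lt_sqrt (by norm_num) (by norm_num)
  unfold goldenPhi; linarith

lemma phi_pos : (0:ℝ) < φ := lt_trans one_pos one_lt_phi

lemma phi_ne_zero : φ ≠ 0 := ne_of_gt phi_pos

lemma phi_sq : φ ^ (2:ℕ) = φ + 1 := by
  have h5 : Real.sqrt 5 ^ (2:ℕ) = 5 := Real.sq_sqrt (by norm_num)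
  unfold goldenPhi
  field_simp
  ring_nf
  nlinarith [h5]

lemma phi_zpow_add_two (j : ℤ) : φ ^ (j + 2) = φ ^ (j + 1) + φ ^ j := by
  have h2 : φ ^ (j + 2) = φ ^ j * φ ^ (2:ℕ) := by
    rw [← zpow_natCast φ 2, ← zpow_add₀ phi_ne_zero]
    norm_num
  have h1 : φ ^ (j + 1) = φ ^ j * φ := by
    rw [zpow_add₀ phi_ne_zero, zpow_one]
  rw [h2, h1, phi_sq]; ring

lemma phi_zpow_pos (j : ℤ) : (0:ℝ) < φ ^ j := zpow_pos phi_pos j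

lemma phi_zpow_lt {a b : ℤ} (h : a < b) : φ ^ a < φ ^ b :=
  zpow_lt_zpow_right₀ one_lt_phi h

lemma phi_zpow_le {a b : ℤ} (h : a ≤ b) : φ ^ a ≤ φ ^ b :=
  zpow_le_zpow_right₀ (le_of_lt one_lt_phi) h

lemma phi_zpow_inj {a b : ℤ} (h : φ ^ a = φ ^ b) : a = b := by
  by_contra hne
  rcases lt_or_gt_of_ne hne with hl | hl
  · exact absurd h (ne_of_lt (phi_zpow_lt hl))
  · exact absurd h.symm (ne_of_lt (phi_zpow_lt hl))

/-- value of a digit set -/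
def pval (S : Finset ℤ) : ℝ := ∑ j ∈ S, φ ^ j

lemma pval_empty : pval (∅ : Finset ℤ) = 0 := by simp [pval]

lemma pval_insert {S : Finset ℤ} {a : ℤ} (h : a ∉ S) :
    pval (insert a S) = φ ^ a + pval S := by
  simp [pval, Finset.sum_insert h]

lemma pval_nonneg (S : Finset ℤ) : 0 ≤ pval S :=
  Finset.sum_nonneg fun j _ => (phi_zpow_pos j).le

lemma pval_pos {S : Finset ℤ} (h : S.Nonempty) : 0 < pval S := by
  obtain ⟨a, ha⟩ := h
  exact Finset.sum_pos' (fun j _ => (phi_zpow_pos j).le) ⟨a, ha, phi_zpow_pos a⟩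

lemma pval_eq_zero_iff {S : Finset ℤ} : pval S = 0 ↔ S = ∅ := by
  constructor
  · intro h
    by_contra hne
    exact absurd h (ne_of_gt (pval_pos (Finset.nonempty_iff_ne_empty.2 hne)))
  · intro h; simp [h, pval_empty]

lemma pval_erase {S : Finset ℤ} {a : ℤ} (h : a ∈ S) :
    pval S = φ ^ a + pval (S.erase a) := by
  have := pval_insert (S := S.erase a) (a := a) (Finset.notMem_erase a S)
  rwa [Finset.insert_erase h] at this

lemma pval_union {S T : Finset ℤ} (h : Disjoint S T) :
    pval (S ∪ T) = pval S + pval T := by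
  simp [pval, Finset.sum_union h]

lemma pval_le_mem {S : Finset ℤ} {a : ℤ} (h : a ∈ S) : φ ^ a ≤ pval S := by
  rw [pval_erase h]
  have := pval_nonneg (S.erase a)
  linarith

/-- no two consecutive elements -/
def NC (S : Finset ℤ) : Prop := ∀ j ∈ S, j + 1 ∉ S

lemma pval_lt_max (S : Finset ℤ) : ∀ (hS : S.Nonempty), NC S →
    pval S < φ ^ (S.max' hS + 1) := by
  induction S using Finset.strongInduction with
  | _ S ih =>
    intro hS hNC
    set M := S.max' hS with hM
    have hMS : M ∈ S := S.max'_mem hS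
    have hval : pval S = φ ^ M + pval (S.erase M) := pval_erase hMS
    rcases Finset.eq_empty_or_nonempty (S.erase M) with he | hne
    · rw [hval, he, pval_empty]
      have := phi_zpow_lt (show M < M + 1 by omega)
      linarith
    · have hsub : S.erase M ⊂ S := Finset.erase_ssubset hMS
      have hNC' : NC (S.erase M) := by
        intro j hj hj1
        exact hNC j (Finset.mem_of_mem_erase hj) (Finset.mem_of_mem_erase hj1)
      have hmax2 : (S.erase M).max' hne ≤ M - 2 := by
        set m := (S.erase M).max' hne with hm
        have hmem : m ∈ S.erase M := (S.erase M).max'_mem hne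
        have h1 : m ∈ S := Finset.mem_of_mem_erase hmem
        have h2 : m ≠ M := Finset.ne_of_mem_erase hmem
        have h3 : m ≤ M := S.le_max' m h1
        have h4 : m ≠ M - 1 := by
          intro h4
          exact hNC m h1 (by rw [h4]; simpa using hMS)
        omega
      have hlt : pval (S.erase M) < φ ^ ((S.erase M).max' hne + 1) :=
        ih _ hsub hne hNC'
      have hle : φ ^ ((S.erase M).max' hne + 1) ≤ φ ^ (M - 1) :=
        phi_zpow_le (by omega)
      have hsum : φ ^ (M + 1) = φ ^ M + φ ^ (M - 1) := by
        have := phi_zpow_add_two (M - 1)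
        simpa [show M - 1 + 2 = M + 1 by ring, show M - 1 + 1 = M by ring] using this
      rw [hval, hsum]
      linarith

/-- uniqueness of nonconsecutive representations -/
lemma NC_val_inj : ∀ n (S T : Finset ℤ), S.card = n → NC S → NC T →
    pval S = pval T → S = T := by
  intro n
  induction n using Nat.strong_induction_on with
  | _ n ih =>
    intro S T hcard hS hT hval
    rcases Finset.eq_empty_or_nonempty S with he | hne
    · subst he
      rw [pval_empty] at hval
      exact (pval_eq_zero_iff.1 hval.symm).symm ▸ rfl
    · have hTne : T.Nonempty := by
        by_contra h
        rw [Finset.not_nonempty_iff_eq_empty] at h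
        subst h
        rw [pval_empty] at hval
        exact absurd hval (ne_of_gt (pval_pos hne))
      have hMeq : S.max' hne = T.max' hTne := by
        by_contra hneq
        rcases lt_or_gt_of_ne hneq with h | h
        · have h1 : φ ^ (T.max' hTne) ≤ pval T := pval_le_mem (T.max'_mem hTne)
          have h2 : pval S < φ ^ (S.max' hne + 1) := pval_lt_max S hne hS
          have h3 : φ ^ (S.max' hne + 1) ≤ φ ^ (T.max' hTne) := phi_zpow_le (by omega)
          linarith
        · have h1 : φ ^ (S.max' hne) ≤ pval S := pval_le_mem (S.max'_mem hne)
          have h2 : pval T < φ ^ (T.max' hTne + 1) := pval_lt_max T hTne hT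
          have h3 : φ ^ (T.max' hTne + 1) ≤ φ ^ (S.max' hne) := phi_zpow_le (by omega)
          linarith
      set M := S.max' hne with hM
      have hMS : M ∈ S := S.max'_mem hne
      have hMT : M ∈ T := hMeq ▸ T.max'_mem hTne
      have hvS : pval S = φ ^ M + pval (S.erase M) := pval_erase hMS
      have hvT : pval T = φ ^ M + pval (T.erase M) := pval_erase hMT
      have hval' : pval (S.erase M) = pval (T.erase M) := by
        rw [hvS, hvT] at hval; linarith
      have hcard' : (S.erase M).card < n := by
        rw [← hcard]
        exact Finset.card_erase_lt_of_mem hMS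
      have hNCS : NC (S.erase M) := fun j hj hj1 =>
        hS j (Finset.mem_of_mem_erase hj) (Finset.mem_of_mem_erase hj1)
      have hNCT : NC (T.erase M) := fun j hj hj1 =>
        hT j (Finset.mem_of_mem_erase hj) (Finset.mem_of_mem_erase hj1)
      have := ih _ hcard' (S.erase M) (T.erase M) rfl hNCS hNCT hval'
      have h1 : S = insert M (S.erase M) := (Finset.insert_erase hMS).symm
      have h2 : T = insert M (T.erase M) := (Finset.insert_erase hMT).symm
      rw [h1, h2, this]

lemma NC_val_inj' {S T : Finset ℤ} (hS : NC S) (hT : NC T)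
    (h : pval S = pval T) : S = T := NC_val_inj S.card S T rfl hS hT h

lemma lucas_add_two (n : ℕ) : lucas (n+2) = lucas (n+1) + lucas n := rfl

lemma lucas_pos : ∀ k, 1 ≤ lucas k := by
  intro k
  induction k using Nat.twoStepInduction with
  | zero => simp [lucas]
  | one => simp [lucas]
  | more n ih1 ih2 => rw [lucas_add_two]; omega

lemma lucas_le_succ {k : ℕ} (h : 1 ≤ k) : lucas k ≤ lucas (k+1) := by
  obtain ⟨m, rfl⟩ : ∃ m, k = m + 1 := ⟨k - 1, by omega⟩
  rw [lucas_add_two]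
  have := lucas_pos m
  omega

lemma lucas_lt_succ {k : ℕ} (h : 1 ≤ k) : lucas k < lucas (k+1) := by
  obtain ⟨m, rfl⟩ : ∃ m, k = m + 1 := ⟨k - 1, by omega⟩
  rw [lucas_add_two]
  have := lucas_pos m
  omega

lemma lucas_mono : ∀ {a b : ℕ}, 1 ≤ a → a ≤ b → lucas a ≤ lucas b := by
  intro a b ha hab
  induction b, hab using Nat.le_induction with
  | base => exact le_refl _
  | succ n hn ih => exact le_trans ih (lucas_le_succ (le_trans ha hn))

lemma lucas_strictmono {a b : ℕ} (ha : 1 ≤ a) (hab : a < b) : lucas a < lucas b :=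
  lt_of_lt_of_le (lucas_lt_succ ha) (lucas_mono (by omega) (by omega))

lemma self_le_lucas : ∀ k, k ≤ lucas k := by
  intro k
  induction k using Nat.twoStepInduction with
  | zero => simp [lucas]
  | one => simp [lucas]
  | more n ih1 ih2 =>
    rw [lucas_add_two]
    have := lucas_pos n
    omega

lemma phi_inv : φ ^ (-1 : ℤ) = φ - 1 := by
  have h2 : φ ^ (2:ℕ) = φ + 1 := phi_sq
  have h : φ * (φ - 1) = 1 := by nlinarith
  rw [zpow_neg_one]
  have hne : φ ≠ 0 := phi_ne_zero
  field_simp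
  nlinarith [h]

lemma lucasR : ∀ k : ℕ, (lucas k : ℝ) = φ ^ (k:ℤ) + (-1)^k * φ ^ (-(k:ℤ)) := by
  intro k
  induction k using Nat.twoStepInduction with
  | zero => norm_num [lucas]
  | one =>
    rw [show lucas 1 = 1 from rfl]
    push_cast
    rw [zpow_one, pow_one, phi_inv]
    ring
  | more n ih1 ih2 =>
    have h1 : φ ^ ((n:ℤ) + 2) = φ ^ ((n:ℤ) + 1) + φ ^ (n:ℤ) := phi_zpow_add_two n
    have h2 : φ ^ (-(n:ℤ)) = φ ^ (-(n:ℤ) - 1) + φ ^ (-(n:ℤ) - 2) := by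
      have := phi_zpow_add_two (-(n:ℤ) - 2)
      simpa [show -(n:ℤ) - 2 + 2 = -(n:ℤ) by ring,
             show -(n:ℤ) - 2 + 1 = -(n:ℤ) - 1 by ring] using this
    have hnat : (lucas (n+2) : ℝ) = (lucas (n+1) : ℝ) + (lucas n : ℝ) := by
      rw [lucas_add_two]; push_cast; ring
    rw [hnat, ih1, ih2]
    push_cast
    rw [h1, h2]
    ring

lemma lucasR_even {k : ℕ} (h : Even k) : (lucas k : ℝ) = φ ^ (k:ℤ) + φ ^ (-(k:ℤ)) := by
  rw [lucasR k, Even.neg_one_pow h, one_mul]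

lemma lucasR_odd {k : ℕ} (h : ¬ Even k) : (lucas k : ℝ) = φ ^ (k:ℤ) - φ ^ (-(k:ℤ)) := by
  rw [lucasR k, Odd.neg_one_pow (Nat.not_even_iff_odd.1 h)]
  ring

/-- the set of exponents of `φ^a - φ^(-k)` -/
def chain (a : ℤ) (k : ℕ) : Finset ℤ :=
  if Even (a + k) then (Finset.range ((a + k).toNat / 2)).image (fun t : ℕ => a - 1 - 2*(t:ℤ))
  else insert (-(k:ℤ) - 1) ((Finset.range (((a + k).toNat - 1) / 2)).image (fun t : ℕ => a - 1 - 2*(t:ℤ)))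

lemma chain_core_val (a : ℤ) : ∀ m : ℕ,
    pval ((Finset.range m).image fun t : ℕ => a - 1 - 2*(t:ℤ)) = φ^a - φ^(a - 2*m) := by
  intro m
  induction m with
  | zero => simp [pval]
  | succ m ih =>
    rw [Finset.range_add_one, Finset.image_insert]
    have hnot : a - 1 - 2*(m:ℤ) ∉ (Finset.range m).image (fun t : ℕ => a - 1 - 2*(t:ℤ)) := by
      intro h
      obtain ⟨t, ht, he⟩ := Finset.mem_image.1 h
      rw [Finset.mem_range] at ht
      omega
    rw [pval_insert hnot, ih]
    have h2 : φ ^ (a - 2*(m:ℤ)) = φ ^ (a - 2*(m:ℤ) - 1) + φ ^ (a - 2*(m:ℤ) - 2) := by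
      have := phi_zpow_add_two (a - 2*(m:ℤ) - 2)
      simpa [show a - 2*(m:ℤ) - 2 + 2 = a - 2*(m:ℤ) by ring,
             show a - 2*(m:ℤ) - 2 + 1 = a - 2*(m:ℤ) - 1 by ring] using this
    have e1 : a - 1 - 2*(m:ℤ) = a - 2*(m:ℤ) - 1 := by ring
    have e2 : a - 2*((m:ℤ)+1) = a - 2*(m:ℤ) - 2 := by ring
    push_cast
    rw [e1, e2]
    linarith [h2]

lemma chain_val {a : ℤ} {k : ℕ} (h : 1 ≤ a + k) :
    pval (chain a k) = φ^a - φ^(-(k:ℤ)) := by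
  unfold chain
  split_ifs with he
  · have hm : ((a + k).toNat / 2 : ℤ) * 2 = a + k := by
      obtain ⟨c, hc⟩ := he
      omega
    rw [chain_core_val]
    congr 2
    push_cast
    omega
  · have hm : (((a + k).toNat - 1) / 2 : ℤ) * 2 = a + k - 1 := by
      rw [Int.even_iff] at he
      push_cast at he ⊢
      omega
    have hnot : -(k:ℤ) - 1 ∉ (Finset.range (((a + k).toNat - 1) / 2)).image (fun t : ℕ => a - 1 - 2*(t:ℤ)) := by
      intro h2
      obtain ⟨t, ht, hte⟩ := Finset.mem_image.1 h2
      rw [Finset.mem_range] at ht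
      omega
    rw [pval_insert hnot, chain_core_val]
    have e : a - 2 * ((((a + k).toNat - 1) / 2 : ℕ) : ℤ) = -(k:ℤ) + 1 := by
      push_cast
      omega
    rw [e]
    have h2 : φ ^ (-(k:ℤ) + 1) = φ ^ (-(k:ℤ)) + φ ^ (-(k:ℤ) - 1) := by
      have := phi_zpow_add_two (-(k:ℤ) - 1)
      simpa [show -(k:ℤ) - 1 + 2 = -(k:ℤ) + 1 by ring,
             show -(k:ℤ) - 1 + 1 = -(k:ℤ) by ring] using this
    linarith [h2]

lemma chain_mem_bounds {a : ℤ} {k : ℕ} (h : 1 ≤ a + k) {j : ℤ} (hj : j ∈ chain a k) :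
    -(k:ℤ) - 1 ≤ j ∧ j ≤ a - 1 := by
  unfold chain at hj
  split_ifs at hj with he
  · obtain ⟨t, ht, rfl⟩ := Finset.mem_image.1 hj
    rw [Finset.mem_range] at ht
    have hm : ((a + k).toNat / 2 : ℤ) * 2 = a + k := by
      obtain ⟨c, hc⟩ := he; omega
    push_cast at hm ⊢
    omega
  · rw [Finset.mem_insert] at hj
    rcases hj with rfl | hj
    · omega
    · obtain ⟨t, ht, rfl⟩ := Finset.mem_image.1 hj
      rw [Finset.mem_range] at ht
      have hm : (((a + k).toNat - 1) / 2 : ℤ) * 2 = a + k - 1 := by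
        rw [Int.even_iff] at he; push_cast at he ⊢; omega
      push_cast at hm ⊢
      omega

lemma chain_nonempty {a : ℤ} {k : ℕ} (h : 1 ≤ a + k) : (chain a k).Nonempty := by
  unfold chain
  split_ifs with he
  · have hm : 1 ≤ (a + k).toNat / 2 := by
      obtain ⟨c, hc⟩ := he
      omega
    exact ⟨a - 1, Finset.mem_image.2 ⟨0, Finset.mem_range.2 (by omega), by push_cast; ring⟩⟩
  · exact ⟨-(k:ℤ) - 1, Finset.mem_insert_self _ _⟩

lemma chain_NC {a : ℤ} {k : ℕ} (h : 1 ≤ a + k) : NC (chain a k) := by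
  intro j hj hj1
  unfold chain at hj hj1
  split_ifs at hj hj1 with he
  · obtain ⟨t, ht, hte⟩ := Finset.mem_image.1 hj
    obtain ⟨s, hs, hse⟩ := Finset.mem_image.1 hj1
    omega
  · have hm : (((a + k).toNat - 1) / 2 : ℤ) * 2 = a + k - 1 := by
      rw [Int.even_iff] at he; push_cast at he ⊢; omega
    rw [Finset.mem_insert] at hj hj1
    rcases hj with rfl | hj <;> rcases hj1 with he1 | hj1
    · omega
    · obtain ⟨t, ht, hte⟩ := Finset.mem_image.1 hj1
      rw [Finset.mem_range] at ht
      push_cast at hm hte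
      omega
    · obtain ⟨t, ht, hte⟩ := Finset.mem_image.1 hj
      rw [Finset.mem_range] at ht
      push_cast at hm hte he1
      omega
    · obtain ⟨t, ht, hte⟩ := Finset.mem_image.1 hj
      obtain ⟨s, hs, hse⟩ := Finset.mem_image.1 hj1
      omega


def gidx (N : ℕ) : ℕ := Nat.findGreatest (fun k => lucas k < N) N

lemma lucas_two : lucas 2 = 3 := rfl

lemma gidx_spec {N : ℕ} (h4 : 4 ≤ N) :
    2 ≤ gidx N ∧ lucas (gidx N) < N ∧ N ≤ lucas (gidx N + 1) := by
  have h2 : 2 ≤ gidx N :=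
    Nat.le_findGreatest (P := fun k => lucas k < N) (by omega) (by show lucas 2 < N; rw [lucas_two]; omega)
  have hP : lucas (gidx N) < N :=
    Nat.findGreatest_spec (P := fun k => lucas k < N) (m := 2) (by omega) (by show lucas 2 < N; rw [lucas_two]; omega)
  refine ⟨h2, hP, ?_⟩
  by_contra hcon
  push_neg at hcon
  have hle : gidx N + 1 ≤ N := by
    have := self_le_lucas (gidx N + 1); omega
  have h9 : gidx N + 1 ≤ gidx N := Nat.le_findGreatest (P := fun k => lucas k < N) hle hcon
  omega

lemma gidx_eq {N k : ℕ} (hk2 : 2 ≤ k) (h1 : lucas k < N) (h2 : N ≤ lucas (k+1)) :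
    gidx N = k := by
  have hge : k ≤ gidx N :=
    Nat.le_findGreatest (P := fun k => lucas k < N) (by have := self_le_lucas k; omega) h1
  have h4 : 4 ≤ N := by
    have h3 : lucas 2 ≤ lucas k := lucas_mono (by omega) hk2
    rw [lucas_two] at h3; omega
  obtain ⟨hg2, hgP, hgup⟩ := gidx_spec h4
  by_contra hne
  have hlt : k < gidx N := by omega
  have : lucas (k+1) ≤ lucas (gidx N) := lucas_mono (by omega) (by omega)
  omega

def R : ℕ → Finset ℤ
  | 0 => ∅
  | 1 => {0}
  | 2 => {1, -2}
  | 3 => {1, 0, -2}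
  | n + 4 =>
    if Even (gidx (n+4)) then
      insert ((gidx (n+4) : ℕ) : ℤ) (insert (-((gidx (n+4) : ℕ) : ℤ)) (R (n + 4 - lucas (gidx (n+4)))))
    else if h : (R (n + 4 - lucas (gidx (n+4)))).Nonempty then
      insert ((gidx (n+4) : ℕ) : ℤ)
        (((R (n + 4 - lucas (gidx (n+4)))).erase ((R (n + 4 - lucas (gidx (n+4)))).min' h)) ∪
          chain ((R (n + 4 - lucas (gidx (n+4)))).min' h) (gidx (n+4)))
    else {((gidx (n+4) : ℕ) : ℤ)}
  termination_by N => N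
  decreasing_by all_goals (have := lucas_pos (gidx (n+4)); omega)

lemma R_zero : R 0 = ∅ := by rw [R]
lemma R_one : R 1 = {0} := by rw [R]
lemma R_two : R 2 = {1, -2} := by rw [R]
lemma R_three : R 3 = {1, 0, -2} := by rw [R]

lemma R_four (n : ℕ) : R (n + 4) =
    (if Even (gidx (n+4)) then
      insert ((gidx (n+4) : ℕ) : ℤ) (insert (-((gidx (n+4) : ℕ) : ℤ)) (R (n + 4 - lucas (gidx (n+4)))))
    else if h : (R (n + 4 - lucas (gidx (n+4)))).Nonempty then
      insert ((gidx (n+4) : ℕ) : ℤ)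
        (((R (n + 4 - lucas (gidx (n+4)))).erase ((R (n + 4 - lucas (gidx (n+4)))).min' h)) ∪
          chain ((R (n + 4 - lucas (gidx (n+4)))).min' h) (gidx (n+4)))
    else {((gidx (n+4) : ℕ) : ℤ)}) := by
  rw [R]

lemma R_spec {N : ℕ} (h4 : 4 ≤ N) : R N =
    (if Even (gidx N) then
      insert ((gidx N : ℕ) : ℤ) (insert (-((gidx N : ℕ) : ℤ)) (R (N - lucas (gidx N))))
    else if h : (R (N - lucas (gidx N))).Nonempty then
      insert ((gidx N : ℕ) : ℤ)
        (((R (N - lucas (gidx N))).erase ((R (N - lucas (gidx N))).min' h)) ∪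
          chain ((R (N - lucas (gidx N))).min' h) (gidx N))
    else {((gidx N : ℕ) : ℤ)}) := by
  obtain ⟨n, rfl⟩ : ∃ n, N = n + 4 := ⟨N - 4, by omega⟩
  exact R_four n

theorem R_inv : ∀ N : ℕ, 1 ≤ N →
    pval (R N) = N ∧
    (∀ j : ℤ, j ∈ R N → j + 1 ∈ R N → j = 0) ∧
    (∃ j ∈ R N, (0:ℤ) ≤ j) ∧
    (2 ≤ N → ∃ j ∈ R N, j < 0) ∧
    ((0:ℤ) ∈ R N ∨ ∃ j ∈ R N, Odd j ∧ 0 ≤ j ∧ ∀ j' ∈ R N, 0 ≤ j' → j ≤ j') ∧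
    (∀ k : ℕ, 1 ≤ k → N ≤ lucas k → ∀ j ∈ R N,
      (if Even k then -(k:ℤ) else -(k:ℤ)+1) ≤ j ∧ j ≤ (k:ℤ) - 1) := by
  intro N
  induction N using Nat.strong_induction_on with
  | _ N ih =>
  intro hN1
  by_cases h4 : N ≤ 3
  · -- base cases
    interval_cases N
    · -- N = 1
      rw [R_one]
      refine ⟨?_, ?_, ⟨0, by simp, le_refl _⟩, by omega, Or.inl (by simp), ?_⟩
      · simp [pval]
      · intro j hj hj1
        simp at hj hj1
        omega
      · intro k hk1 hNk j hj
        simp at hj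
        subst hj
        have : (1:ℤ) ≤ (k:ℤ) := by exact_mod_cast hk1
        split_ifs <;> constructor <;> omega
    · -- N = 2
      rw [R_two]
      have hval2 : φ ^ (-2:ℤ) = 2 - φ := by
        have h1 := phi_zpow_add_two (-2)
        rw [show (-2:ℤ)+2 = 0 by norm_num, show (-2:ℤ)+1 = -1 by norm_num,
            zpow_zero, phi_inv] at h1
        linarith
      refine ⟨?_, ?_, ⟨1, by simp, by norm_num⟩, ?_, ?_, ?_⟩
      · show pval {1, -2} = (2:ℝ)
        rw [show ({1, -2} : Finset ℤ) = insert (1:ℤ) {-2} from rfl]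
        rw [pval_insert (by simp), show ({-2} : Finset ℤ) = insert (-2:ℤ) ∅ from rfl,
            pval_insert (by simp), pval_empty, zpow_one, hval2]
        ring
      · intro j hj hj1
        simp at hj hj1
        omega
      · intro _
        exact ⟨-2, by simp, by norm_num⟩
      · right
        refine ⟨1, by simp, ⟨0, by norm_num⟩, by norm_num, ?_⟩
        intro j' hj' hj'0
        simp at hj'
        omega
      · intro k hk1 hNk j hj
        have hk2 : 2 ≤ k := by
          by_contra hcon
          push_neg at hcon
          have hke : k = 1 := by omega
          subst hke
          rw [show lucas 1 = 1 from rfl] at hNk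
          omega
        have : (2:ℤ) ≤ (k:ℤ) := by exact_mod_cast hk2
        have hkp := Nat.even_or_odd k
        simp at hj
        rcases hj with rfl | rfl <;> split_ifs with he <;> constructor <;>
          first
            | omega
            | (rw [Nat.not_even_iff] at he
               have : k % 2 = 1 := he
               omega)
    · -- N = 3
      rw [R_three]
      have hval2 : φ ^ (-2:ℤ) = 2 - φ := by
        have h1 := phi_zpow_add_two (-2)
        rw [show (-2:ℤ)+2 = 0 by norm_num, show (-2:ℤ)+1 = -1 by norm_num,
            zpow_zero, phi_inv] at h1
        linarith
      refine ⟨?_, ?_, ⟨1, by simp, by norm_num⟩, ?_, Or.inl (by simp), ?_⟩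
      · show pval {1, 0, -2} = (3:ℝ)
        rw [show ({1, 0, -2} : Finset ℤ) = insert (1:ℤ) (insert (0:ℤ) {-2}) from rfl]
        rw [pval_insert (by simp), pval_insert (by simp),
            show ({-2} : Finset ℤ) = insert (-2:ℤ) ∅ from rfl,
            pval_insert (by simp), pval_empty, zpow_one, zpow_zero, hval2]
        ring
      · intro j hj hj1
        simp at hj hj1
        omega
      · intro _
        exact ⟨-2, by simp, by norm_num⟩
      · intro k hk1 hNk j hj
        have hk2 : 2 ≤ k := by
          by_contra hcon
          push_neg at hcon
          have hke : k = 1 := by omega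
          subst hke
          rw [show lucas 1 = 1 from rfl] at hNk
          omega
        have : (2:ℤ) ≤ (k:ℤ) := by exact_mod_cast hk2
        simp at hj
        rcases hj with rfl | rfl | rfl <;> split_ifs with he <;> constructor <;>
          first
            | omega
            | (rw [Nat.not_even_iff] at he
               have : k % 2 = 1 := he
               omega)
  · -- main case N ≥ 4
    push_neg at h4
    have h4' : 4 ≤ N := h4
    obtain ⟨hk2, hltN, hleN⟩ := gidx_spec h4'
    set k := gidx N with hkdef
    set r := N - lucas k with hrdef
    clear_value k r
    have hr1 : 1 ≤ r := by omega
    have hrlt : r < N := by have := lucas_pos k; omega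
    have hkk : lucas (k+1) = lucas k + lucas (k-1) := by
      obtain ⟨m, hm⟩ : ∃ m, k = m + 2 := ⟨k - 2, by omega⟩
      rw [hm, show m + 2 + 1 = (m+1) + 2 from rfl, lucas_add_two]
      congr 1
    have hrle : r ≤ lucas (k-1) := by omega
    obtain ⟨ihval, ihNC, ihnn, ihneg, ihtype, ihbd⟩ := ih r hrlt hr1
    have hk1' : 1 ≤ k - 1 := by omega
    have hcast : ((k-1:ℕ):ℤ) = (k:ℤ) - 1 := by omega
    have hSb := ihbd (k-1) hk1' hrle
    have hNr : N = lucas k + r := by rw [hrdef]; exact (Nat.add_sub_cancel' hltN.le).symm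
    have hNrr : (N:ℝ) = (lucas k : ℝ) + (r:ℝ) := by exact_mod_cast congrArg (Nat.cast : ℕ → ℝ) hNr
    by_cases hkeven : Even k
    · -- branch A : k even
      have hkm1odd : ¬ Even (k-1) := by
        rw [Nat.even_iff] at hkeven
        rw [Nat.not_even_iff]
        omega
      have hS2 : ∀ j ∈ R r, -(k:ℤ) + 2 ≤ j ∧ j ≤ (k:ℤ) - 2 := by
        intro j hj
        have := hSb j hj
        rw [if_neg hkm1odd, hcast] at this
        constructor <;> omega
      have hRN : R N = insert (k:ℤ) (insert (-(k:ℤ)) (R r)) := by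
        rw [R_spec h4', ← hkdef, ← hrdef, if_pos hkeven]
      have hkS : (k:ℤ) ∉ R r := fun h => by have := (hS2 _ h).2; omega
      have hnkS : (-(k:ℤ)) ∉ R r := fun h => by
        have := (hS2 _ h).1
        have : (2:ℤ) ≤ (k:ℤ) := by exact_mod_cast hk2
        omega
      have hk2' : (2:ℤ) ≤ (k:ℤ) := by exact_mod_cast hk2
      have hknotin : (k:ℤ) ∉ insert (-(k:ℤ)) (R r) := by
        simp only [Finset.mem_insert]
        push_neg
        exact ⟨by omega, hkS⟩
      refine ⟨?_, ?_, ⟨k, by simp [hRN], by positivity⟩, fun _ => ⟨-(k:ℤ), by simp [hRN], by omega⟩, ?_, ?_⟩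
      · rw [hRN, pval_insert hknotin, pval_insert hnkS, ihval, hNrr, lucasR_even hkeven]
        push_cast
        ring
      · intro j hj hj1
        simp only [hRN, Finset.mem_insert] at hj hj1
        rcases hj with rfl | rfl | hj
        · rcases hj1 with h | h | h
          · omega
          · omega
          · have := (hS2 _ h).2; omega
        · rcases hj1 with h | h | h
          · omega
          · omega
          · have := (hS2 _ h).1; omega
        · rcases hj1 with h | h | h
          · have := (hS2 _ hj).2; omega
          · have := (hS2 _ hj).1; omega
          · exact ihNC j hj h
      · rcases ihtype with h0 | ⟨j0, hj0S, hj0odd, hj0nn, hj0min⟩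
        · left
          simp [hRN, h0]
        · right
          refine ⟨j0, by simp [hRN, hj0S], hj0odd, hj0nn, ?_⟩
          intro j' hj' hj'0
          simp only [hRN, Finset.mem_insert] at hj'
          rcases hj' with rfl | rfl | hj'
          · have := (hS2 _ hj0S).2; omega
          · omega
          · exact hj0min j' hj' hj'0
      · intro k' hk'1 hNk' j hj
        have hk'k : k < k' := by
          by_contra hcon
          push_neg at hcon
          have := lucas_mono hk'1 hcon
          omega
        have hk'c : (k:ℤ) < (k':ℤ) := by exact_mod_cast hk'k
        simp only [hRN, Finset.mem_insert] at hj
        rcases hj with rfl | rfl | hj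
        · split_ifs <;> constructor <;> omega
        · split_ifs <;> constructor <;> omega
        · have := hS2 _ hj
          split_ifs <;> constructor <;> omega
    · -- branch B : k odd
      have hk3 : 3 ≤ k := by
        rw [Nat.not_even_iff] at hkeven
        omega
      have hk3' : (3:ℤ) ≤ (k:ℤ) := by exact_mod_cast hk3
      have hkm1even : Even (k-1) := by
        rw [Nat.not_even_iff] at hkeven
        rw [Nat.even_iff]
        omega
      have hS2 : ∀ j ∈ R r, -(k:ℤ) + 1 ≤ j ∧ j ≤ (k:ℤ) - 2 := by
        intro j hj
        have := hSb j hj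
        rw [if_pos hkm1even, hcast] at this
        constructor <;> omega
      have hne : (R r).Nonempty := by
        obtain ⟨j, hj, _⟩ := ihnn
        exact ⟨j, hj⟩
      set j0 := (R r).min' hne with hj0def
      have hj0S : j0 ∈ R r := Finset.min'_mem _ _
      have hj0b := hS2 _ hj0S
      have hj0le : j0 ≤ 0 := by
        rcases Nat.lt_or_ge r 2 with hr2 | hr2
        · have hre : r = 1 := by omega
          have h0 : (0:ℤ) ∈ R r := by rw [hre, R_one]; simp
          exact Finset.min'_le _ _ h0
        · obtain ⟨j, hjS, hjneg⟩ := ihneg hr2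
          have := Finset.min'_le _ _ hjS
          omega
      have hak : 1 ≤ j0 + (k:ℕ) := by omega
      have hcv := chain_val hak
      have hcb := fun {j} (hj : j ∈ chain j0 k) => chain_mem_bounds hak hj
      have hcne := chain_nonempty hak
      have hcNC := chain_NC hak
      have hRN : R N = insert (k:ℤ) (((R r).erase j0) ∪ chain j0 k) := by
        rw [R_spec h4', ← hkdef, ← hrdef, if_neg hkeven, dif_pos hne]
      have hdisj : Disjoint ((R r).erase j0) (chain j0 k) := by
        rw [Finset.disjoint_left]
        intro a ha hac
        have h1 : a ∈ R r := Finset.mem_of_mem_erase ha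
        have h2 : a ≠ j0 := Finset.ne_of_mem_erase ha
        have h3 : j0 ≤ a := Finset.min'_le _ _ h1
        have h4 := (hcb hac).2
        omega
      have hknotin : (k:ℤ) ∉ ((R r).erase j0) ∪ chain j0 k := by
        intro h
        rcases Finset.mem_union.1 h with h | h
        · have := (hS2 _ (Finset.mem_of_mem_erase h)).2; omega
        · have := (hcb h).2; omega
      refine ⟨?_, ?_, ⟨k, by simp [hRN], by positivity⟩, ?_, ?_, ?_⟩
      · rw [hRN, pval_insert hknotin, pval_union hdisj, hcv]
        have herase : pval ((R r).erase j0) = pval (R r) - φ ^ j0 := by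
          have := pval_erase hj0S
          linarith
        rw [herase, ihval, hNrr, lucasR_odd hkeven]
        push_cast
        ring
      · intro j hj hj1
        simp only [hRN, Finset.mem_insert, Finset.mem_union, Finset.mem_erase] at hj hj1
        rcases hj with rfl | ⟨hne2, hjS⟩ | hjc
        · rcases hj1 with h | ⟨h1, h2⟩ | h
          · omega
          · have := (hS2 _ h2).2; omega
          · have := (hcb h).2; omega
        · rcases hj1 with h | ⟨h1, h2⟩ | h
          · have := (hS2 _ hjS).2; omega
          · exact ihNC j hjS h2
          · have h4 := (hcb h).2
            have := Finset.min'_le _ _ hjS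
            omega
        · rcases hj1 with h | ⟨h1, h2⟩ | h
          · have := (hcb hjc).2; omega
          · have h3 : j0 ≤ j + 1 := Finset.min'_le _ _ h2
            have h4 := (hcb hjc).2
            omega
          · exact absurd h (hcNC j hjc)
      · intro _
        obtain ⟨a, ha⟩ := hcne
        refine ⟨a, by simp [hRN, ha], ?_⟩
        have := (hcb ha).2
        omega
      · rcases Nat.lt_or_ge r 2 with hr2 | hr2
        · have hre : r = 1 := by omega
          have hS1 : R r = {0} := by rw [hre, R_one]
          have hj00 : j0 = 0 := by
            rw [hj0def]
            have : ∀ x ∈ R r, x = 0 := by intro x hx; rw [hS1] at hx; simpa using hx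
            exact this _ (Finset.min'_mem _ _)
          right
          refine ⟨k, by simp [hRN], ?_, by positivity, ?_⟩
          · exact_mod_cast Nat.not_even_iff_odd.1 hkeven
          · intro j' hj' hj'0
            simp only [hRN, Finset.mem_insert, Finset.mem_union, Finset.mem_erase] at hj'
            rcases hj' with rfl | ⟨h1, h2⟩ | h
            · omega
            · rw [hS1] at h2
              simp at h2
              omega
            · have := (hcb h).2
              omega
        · have hj0neg : j0 < 0 := by
            obtain ⟨j, hjS, hjneg⟩ := ihneg hr2
            have := Finset.min'_le _ _ hjS
            omega
          rcases ihtype with h0 | ⟨jm, hjmS, hjmodd, hjmnn, hjmmin⟩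
          · left
            have : (0:ℤ) ∈ (R r).erase j0 := Finset.mem_erase.2 ⟨by omega, h0⟩
            simp [hRN, this]
          · right
            have hjm_in : jm ∈ (R r).erase j0 := Finset.mem_erase.2 ⟨by omega, hjmS⟩
            refine ⟨jm, by simp [hRN, hjm_in], hjmodd, hjmnn, ?_⟩
            intro j' hj' hj'0
            simp only [hRN, Finset.mem_insert, Finset.mem_union, Finset.mem_erase] at hj'
            rcases hj' with rfl | ⟨h1, h2⟩ | h
            · have := (hS2 _ hjmS).2
              omega
            · exact hjmmin j' h2 hj'0
            · have := (hcb h).2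
              omega
      · intro k' hk'1 hNk' j hj
        have hk'k : k < k' := by
          by_contra hcon
          push_neg at hcon
          have := lucas_mono hk'1 hcon
          omega
        have hk'c : (k:ℤ) < (k':ℤ) := by exact_mod_cast hk'k
        have hkodd : k % 2 = 1 := Nat.not_even_iff.1 hkeven
        simp only [hRN, Finset.mem_insert, Finset.mem_union, Finset.mem_erase] at hj
        rcases hj with rfl | ⟨h1, h2⟩ | h
        · split_ifs <;> constructor <;> omega
        · have := hS2 _ h2
          split_ifs <;> constructor <;> omega
        · have hb := hcb h
          split_ifs with hEk'
          · have : k' % 2 = 0 := Nat.even_iff.1 hEk'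
            constructor <;> omega
          · have : k' % 2 = 1 := Nat.not_even_iff.1 hEk'
            constructor <;> omega


lemma notMem_R0 {i : ℕ} : (i:ℤ) ∉ R 0 := by rw [R_zero]; simp

lemma notMem_R1 {i : ℕ} (hi : 1 ≤ i) : (i:ℤ) ∉ R 1 := by
  rw [R_one]
  simp only [Finset.mem_singleton]
  intro h
  omega

lemma mem_R2 {i : ℕ} (hi : 1 ≤ i) : ((i:ℤ) ∈ R 2 ↔ i = 1) := by
  rw [R_two]
  simp only [Finset.mem_insert, Finset.mem_singleton]
  constructor
  · rintro (h | h) <;> omega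
  · rintro rfl; left; rfl

lemma mem_R3 {i : ℕ} (hi : 1 ≤ i) : ((i:ℤ) ∈ R 3 ↔ i = 1) := by
  rw [R_three]
  simp only [Finset.mem_insert, Finset.mem_singleton]
  constructor
  · rintro (h | h | h) <;> omega
  · rintro rfl; left; rfl

lemma D_rec {N : ℕ} (h4 : 4 ≤ N) {i : ℕ} (hi : 1 ≤ i) :
    ((i:ℤ) ∈ R N ↔ i = gidx N ∨ (i:ℤ) ∈ R (N - lucas (gidx N))) := by
  obtain ⟨hk2, hltN, hleN⟩ := gidx_spec h4
  set k := gidx N with hkdef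
  set r := N - lucas k with hrdef
  clear_value k r
  have hr1 : 1 ≤ r := by omega
  have hkk : lucas (k+1) = lucas k + lucas (k-1) := by
    obtain ⟨m, hm⟩ : ∃ m, k = m + 2 := ⟨k - 2, by omega⟩
    rw [hm, show m + 2 + 1 = (m+1) + 2 from rfl, lucas_add_two]
    congr 1
  have hrle : r ≤ lucas (k-1) := by omega
  obtain ⟨_, _, ihnn, ihneg, _, ihbd⟩ := R_inv r hr1
  have hcast : ((k-1:ℕ):ℤ) = (k:ℤ)-1 := by omega
  have hSb := ihbd (k-1) (by omega) hrle
  have hic : (1:ℤ) ≤ (i:ℤ) := by exact_mod_cast hi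
  have hkc : (2:ℤ) ≤ (k:ℤ) := by exact_mod_cast hk2
  by_cases hkeven : Even k
  · have hRN : R N = insert (k:ℤ) (insert (-(k:ℤ)) (R r)) := by
      rw [R_spec h4, ← hkdef, ← hrdef, if_pos hkeven]
    rw [hRN]
    simp only [Finset.mem_insert]
    constructor
    · rintro (h | h | h)
      · left; exact_mod_cast h
      · exfalso; omega
      · right; exact h
    · rintro (rfl | h)
      · left; rfl
      · right; right; exact h
  · have hk3 : 3 ≤ k := by
      rw [Nat.not_even_iff] at hkeven
      omega
    have hkm1even : Even (k-1) := by
      rw [Nat.not_even_iff] at hkeven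
      rw [Nat.even_iff]
      omega
    have hne : (R r).Nonempty := by
      obtain ⟨j, hj, _⟩ := ihnn
      exact ⟨j, hj⟩
    set j0 := (R r).min' hne with hj0def
    have hj0S : j0 ∈ R r := Finset.min'_mem _ _
    have hj0lb : -(k:ℤ) + 1 ≤ j0 := by
      have := (hSb _ hj0S).1
      rw [if_pos hkm1even, hcast] at this
      omega
    have hj0le : j0 ≤ 0 := by
      rcases Nat.lt_or_ge r 2 with hr2 | hr2
      · have hre : r = 1 := by omega
        have h0 : (0:ℤ) ∈ R r := by rw [hre, R_one]; simp
        exact Finset.min'_le _ _ h0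
      · obtain ⟨j, hjS, hjneg⟩ := ihneg hr2
        have := Finset.min'_le _ _ hjS
        omega
    have hak : 1 ≤ j0 + (k:ℕ) := by omega
    have hRN : R N = insert (k:ℤ) (((R r).erase j0) ∪ chain j0 k) := by
      rw [R_spec h4, ← hkdef, ← hrdef, if_neg hkeven, dif_pos hne]
    rw [hRN]
    simp only [Finset.mem_insert, Finset.mem_union, Finset.mem_erase]
    constructor
    · rintro (h | ⟨hne2, hj⟩ | h)
      · left; exact_mod_cast h
      · right; exact hj
      · exfalso
        have := (chain_mem_bounds hak h).2
        omega
    · rintro (rfl | h)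
      · left; rfl
      · right; left
        exact ⟨by omega, h⟩

lemma D_small : ∀ N : ℕ, ∀ i : ℕ, 2 ≤ i → (i:ℤ) ∈ R N → lucas i < N := by
  intro N
  induction N using Nat.strong_induction_on with
  | _ N ih =>
  intro i hi2 hmem
  by_cases h4 : N ≤ 3
  · interval_cases N
    · exact absurd hmem notMem_R0
    · exact absurd hmem (notMem_R1 (by omega))
    · have := (mem_R2 (by omega)).1 hmem; omega
    · have := (mem_R3 (by omega)).1 hmem; omega
  · push_neg at h4
    have h4' : 4 ≤ N := h4
    obtain ⟨hk2, hltN, hleN⟩ := gidx_spec h4'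
    rcases (D_rec h4' (by omega : 1 ≤ i)).1 hmem with rfl | h
    · exact hltN
    · have hr1 : 1 ≤ N - lucas (gidx N) := by omega
      have hrlt : N - lucas (gidx N) < N := by
        have := lucas_pos (gidx N); omega
      have := ih _ hrlt i hi2 h
      omega

theorem runs (i : ℕ) (hi : 1 ≤ i) : ∀ N : ℕ, 1 ≤ N → (i:ℤ) ∈ R N → (i:ℤ) ∉ R (N - 1) →
    (∀ m : ℕ, m < lucas (i-1) → (i:ℤ) ∈ R (N + m)) ∧ (i:ℤ) ∉ R (N + lucas (i-1)) := by
  intro N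
  induction N using Nat.strong_induction_on with
  | _ N ih =>
  intro hN1 hmem hprev
  have hl2 : lucas 2 = 3 := rfl
  have hl3 : lucas 3 = 4 := rfl
  by_cases h4 : N ≤ 3
  · interval_cases N
    · exact absurd hmem (notMem_R1 hi)
    · -- N = 2
      obtain rfl : i = 1 := (mem_R2 hi).1 hmem
      constructor
      · intro m hm
        rw [show lucas (1-1) = 2 from rfl] at hm
        interval_cases m
        · exact (mem_R2 hi).2 rfl
        · exact (mem_R3 hi).2 rfl
      · rw [show lucas (1-1) = 2 from rfl]
        show ((1:ℕ):ℤ) ∉ R 4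
        have hg : gidx 4 = 2 := gidx_eq (by omega) (by rw [hl2]; omega) (by rw [hl3])
        intro hmem4
        rcases (D_rec (by omega) (by omega)).1 hmem4 with h | h
        · omega
        · rw [hg, hl2] at h
          exact notMem_R1 (by omega) h
    · -- N = 3
      obtain rfl : i = 1 := (mem_R3 hi).1 hmem
      exact absurd ((mem_R2 hi).2 rfl) hprev
  · push_neg at h4
    have h4' : 4 ≤ N := h4
    obtain ⟨hk2, hltN, hleN⟩ := gidx_spec h4'
    set k := gidx N with hkdef
    clear_value k
    have hkk : lucas (k+1) = lucas k + lucas (k-1) := by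
      obtain ⟨m, hm⟩ : ∃ m, k = m + 2 := ⟨k - 2, by omega⟩
      rw [hm, show m + 2 + 1 = (m+1) + 2 from rfl, lucas_add_two]
      congr 1
    have hkk2 : lucas (k+1+1) = lucas (k+1) + lucas k := lucas_add_two k
    have hlk3 : 3 ≤ lucas k := by
      have := lucas_mono (show 1 ≤ 2 by omega) hk2
      omega
    have hlkm1 : 1 ≤ lucas (k-1) := lucas_pos _
    have hrec := D_rec h4' hi
    rw [← hkdef] at hrec
    by_cases hik : i = k
    · -- the run at digit k is exactly (lucas k, lucas (k+1)]
      subst hik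
      have hNe : N = lucas i + 1 := by
        by_contra hcon
        have hN2 : lucas i + 2 ≤ N := by omega
        have hg1 : gidx (N-1) = i := gidx_eq hk2 (by omega) (by omega)
        have : (i:ℤ) ∈ R (N-1) := by
          rw [D_rec (by omega) hi, hg1]
          left; rfl
        exact hprev this
      constructor
      · intro m hm
        have hg : gidx (N + m) = i := gidx_eq hk2 (by omega) (by omega)
        rw [D_rec (by omega) hi, hg]
        left; rfl
      · have hg : gidx (N + lucas (i-1)) = i + 1 :=
          gidx_eq (by omega) (by omega) (by omega)
        intro hcon
        rcases (D_rec (by omega) hi).1 hcon with h | h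
        · omega
        · rw [hg] at h
          have : N + lucas (i-1) - lucas (i+1) = 1 := by omega
          rw [this] at h
          exact notMem_R1 hi h
    · -- digit i comes from the copied block
      have hir : (i:ℤ) ∈ R (N - lucas k) := by
        rcases hrec.1 hmem with h | h
        · exact absurd h hik
        · exact h
      set r := N - lucas k with hrdef
      clear_value r
      have hr1 : 1 ≤ r := by omega
      have hrle : r ≤ lucas (k-1) := by omega
      have hr2 : 2 ≤ r := by
        rcases Nat.lt_or_ge r 2 with h | h
        · have : r = 1 := by omega
          rw [this] at hir
          exact absurd hir (notMem_R1 hi)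
        · exact h
      have hik2 : i ≤ k - 2 := by
        rcases Nat.lt_or_ge i 2 with h | h
        · -- i = 1 ; then k ≥ 3 since r ≥ 2 needs lucas (k-1) ≥ 2
          have : k ≠ 2 := by
            intro hke
            rw [hke] at hrle
            have : lucas (2-1) = 1 := rfl
            omega
          omega
        · have := D_small r i h hir
          have : ¬ (k - 1 ≤ i) := by
            intro hcon
            have := lucas_mono (show 1 ≤ k - 1 by omega) hcon
            omega
          omega
      have hprev' : (i:ℤ) ∉ R (r - 1) := by
        intro hcon
        have hg1 : gidx (N-1) = k := gidx_eq hk2 (by omega) (by omega)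
        have : (i:ℤ) ∈ R (N-1) := by
          rw [D_rec (by omega) hi, hg1]
          right
          have : N - 1 - lucas k = r - 1 := by omega
          rw [this]
          exact hcon
        exact hprev this
      obtain ⟨hrun, hbound⟩ := ih r (by omega) hr1 hir hprev'
      have hLi : 1 ≤ lucas (i-1) := lucas_pos _
      have hend : r + lucas (i-1) ≤ lucas (k-1) + 1 := by
        by_contra hcon
        push_neg at hcon
        have hm' : lucas (k-1) + 1 - r < lucas (i-1) := by omega
        have := hrun _ hm'
        have heq : r + (lucas (k-1) + 1 - r) = lucas (k-1) + 1 := by omega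
        rw [heq] at this
        have hg2 : gidx (lucas (k-1) + 1) = k - 1 := by
          refine gidx_eq (by omega) (by omega) ?_
          have : lucas ((k-1)+1) = lucas k := by congr 1; omega
          rw [this]
          have := lucas_strictmono (show 1 ≤ k - 1 by omega) (show k - 1 < k by omega)
          omega
        have hlkm13 : 3 ≤ lucas (k-1) := by
          have := lucas_mono (show 1 ≤ 2 by omega) (show 2 ≤ k - 1 by omega)
          omega
        rcases (D_rec (by omega) hi).1 this with h | h
        · omega
        · rw [hg2] at h
          have he1 : lucas (k-1) + 1 - lucas (k-1) = 1 := by omega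
          rw [he1] at h
          exact notMem_R1 hi h
      constructor
      · intro m hm
        have hg : gidx (N + m) = k := gidx_eq hk2 (by omega) (by omega)
        rw [D_rec (by omega) hi, hg]
        right
        have : N + m - lucas k = r + m := by omega
        rw [this]
        exact hrun m hm
      · intro hcon
        rcases Nat.lt_or_ge (r + lucas (i-1)) (lucas (k-1) + 1) with hcase | hcase
        · have hg : gidx (N + lucas (i-1)) = k := gidx_eq hk2 (by omega) (by omega)
          rcases (D_rec (by omega) hi).1 hcon with h | h
          · rw [hg] at h; exact hik h
          · rw [hg] at h
            have : N + lucas (i-1) - lucas k = r + lucas (i-1) := by omega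
            rw [this] at h
            exact hbound h
        · have he : r + lucas (i-1) = lucas (k-1) + 1 := by omega
          have hNe : N + lucas (i-1) = lucas (k+1) + 1 := by omega
          have hg : gidx (N + lucas (i-1)) = k + 1 :=
            gidx_eq (by omega) (by omega) (by omega)
          rcases (D_rec (by omega) hi).1 hcon with h | h
          · rw [hg] at h; omega
          · rw [hg] at h
            have : N + lucas (i-1) - lucas (k+1) = 1 := by omega
            rw [this] at h
            exact notMem_R1 hi h


/-- indicator finsupp of a finite digit set -/
def ind (S : Finset ℤ) : ℤ →₀ ℕ :=
  ⟨S, fun j => if j ∈ S then 1 else 0, by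
    intro a
    by_cases h : a ∈ S <;> simp [h]⟩

lemma ind_apply (S : Finset ℤ) (j : ℤ) : ind S j = if j ∈ S then 1 else 0 := rfl

lemma ind_support (S : Finset ℤ) : (ind S).support = S := rfl

lemma ind_le_one (S : Finset ℤ) (j : ℤ) : ind S j ≤ 1 := by
  rw [ind_apply]; split <;> omega

lemma ind_sum (S : Finset ℤ) :
    (ind S).sum (fun i a => (a : ℝ) * goldenPhi ^ i) = pval S := by
  rw [Finsupp.sum]
  rw [ind_support]
  apply Finset.sum_congr rfl
  intro j hj
  rw [ind_apply, if_pos hj]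
  simp

lemma support_sum {c : ℤ →₀ ℕ} (hle : ∀ j, c j ≤ 1) :
    c.sum (fun i a => (a : ℝ) * goldenPhi ^ i) = pval c.support := by
  rw [Finsupp.sum]
  apply Finset.sum_congr rfl
  intro j hj
  have h1 : c j ≠ 0 := Finsupp.mem_support_iff.1 hj
  have h2 : c j = 1 := by have := hle j; omega
  rw [h2]
  simp

lemma eq_ind_of_le_one {c : ℤ →₀ ℕ} (hle : ∀ j, c j ≤ 1) : c = ind c.support := by
  ext j
  rw [ind_apply]
  by_cases h : j ∈ c.support
  · rw [if_pos h]
    have := Finsupp.mem_support_iff.1 h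
    have := hle j
    omega
  · rw [if_neg h]
    exact Finsupp.notMem_support_iff.1 h

lemma bergman_support_NC {N : ℕ} {c : ℤ →₀ ℕ} (h : IsBergman N c) : NC c.support := by
  intro j hj hj1
  have h1 : c j ≠ 0 := Finsupp.mem_support_iff.1 hj
  have h2 : c (j+1) ≠ 0 := Finsupp.mem_support_iff.1 hj1
  have := h.2 j
  exact absurd this (by positivity)

lemma adm_support_pair {N : ℕ} {c : ℤ →₀ ℕ} (h : IsAdmissible N c) :
    ∀ j : ℤ, j ∈ c.support → j + 1 ∈ c.support → j = 0 := by
  intro j hj hj1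
  by_contra hne
  have h1 : c j ≠ 0 := Finsupp.mem_support_iff.1 hj
  have h2 : c (j+1) ≠ 0 := Finsupp.mem_support_iff.1 hj1
  have := h.2 j hne
  exact absurd this (by positivity)

lemma bergman_unique {N : ℕ} {c c' : ℤ →₀ ℕ}
    (h : IsBergman N c) (h' : IsBergman N c') : c = c' := by
  have hval : pval c.support = pval c'.support := by
    rw [← support_sum h.1.1, ← support_sum h'.1.1, h.1.2, h'.1.2]
  have hsupp : c.support = c'.support :=
    NC_val_inj' (bergman_support_NC h) (bergman_support_NC h') hval
  rw [eq_ind_of_le_one h.1.1, eq_ind_of_le_one h'.1.1, hsupp]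

lemma insert_insert_erase_erase {S : Finset ℤ} (h0 : (0:ℤ) ∈ S) (h1 : (1:ℤ) ∈ S) :
    insert (0:ℤ) (insert 1 ((S.erase 0).erase 1)) = S := by
  rw [Finset.insert_erase (Finset.mem_erase.2 ⟨by norm_num, h1⟩), Finset.insert_erase h0]

lemma adm11_unique {N : ℕ} {c c' : ℤ →₀ ℕ}
    (h : IsAdmissible N c) (hc1 : c 1 = 1) (hc0 : c 0 = 1)
    (h' : IsAdmissible N c') (hc1' : c' 1 = 1) (hc0' : c' 0 = 1) : c = c' := by
  have key : ∀ (d : ℤ →₀ ℕ), IsAdmissible N d → d 1 = 1 → d 0 = 1 →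
      (0:ℤ) ∈ d.support ∧ (1:ℤ) ∈ d.support ∧
      NC ((d.support.erase 0).erase 1) ∧
      pval ((d.support.erase 0).erase 1) = (N:ℝ) - 1 - φ := by
    intro d hd hd1 hd0
    have h0S : (0:ℤ) ∈ d.support := Finsupp.mem_support_iff.2 (by omega)
    have h1S : (1:ℤ) ∈ d.support := Finsupp.mem_support_iff.2 (by omega)
    have hpair := adm_support_pair hd
    refine ⟨h0S, h1S, ?_, ?_⟩
    · intro j hj hj1
      have hjS : j ∈ d.support := Finset.mem_of_mem_erase (Finset.mem_of_mem_erase hj)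
      have hj1S : j + 1 ∈ d.support := Finset.mem_of_mem_erase (Finset.mem_of_mem_erase hj1)
      have hj0 : j = 0 := hpair j hjS hj1S
      have := Finset.ne_of_mem_erase (Finset.mem_of_mem_erase hj)
      exact this hj0
    · have hv : pval d.support = N := by
        rw [← support_sum hd.1.1, hd.1.2]
      have e0 : pval d.support = φ ^ (0:ℤ) + pval (d.support.erase 0) := pval_erase h0S
      have e1 : pval (d.support.erase 0) = φ ^ (1:ℤ) + pval ((d.support.erase 0).erase 1) :=
        pval_erase (Finset.mem_erase.2 ⟨by norm_num, h1S⟩)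
      rw [zpow_zero] at e0
      rw [zpow_one] at e1
      linarith
  obtain ⟨h0S, h1S, hNC, hval⟩ := key c h hc1 hc0
  obtain ⟨h0S', h1S', hNC', hval'⟩ := key c' h' hc1' hc0'
  have heq : (c.support.erase 0).erase 1 = (c'.support.erase 0).erase 1 :=
    NC_val_inj' hNC hNC' (by rw [hval, hval'])
  have hsupp : c.support = c'.support := by
    rw [← insert_insert_erase_erase h0S h1S, ← insert_insert_erase_erase h0S' h1S', heq]
  rw [eq_ind_of_le_one h.1.1, eq_ind_of_le_one h'.1.1, hsupp]

lemma carry : ∀ n (S : Finset ℤ), S.card = n → ∀ e : ℤ, 2 ≤ e → Even e → e ∈ S →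
    (∀ j ∈ S, j < 0 ∨ e ≤ j) → (∀ j : ℤ, j ∈ S → j + 1 ∈ S → j = e) →
    ∃ (B : Finset ℤ) (e' : ℤ), NC B ∧ pval B = pval S ∧ 2 ≤ e' ∧ Even e' ∧ e' ∈ B ∧
      (∀ j ∈ B, j < 0 ∨ e' ≤ j) := by
  intro n
  induction n using Nat.strong_induction_on with
  | _ n ih =>
  intro S hcard e he2 heEven heS hrange hpair
  by_cases h1 : (e+1) ∈ S
  · have he2S : e + 2 ∉ S := by
      intro h
      have := hpair (e+1) h1 (by rw [show e+1+1 = e+2 by ring]; exact h)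
      omega
    set S2 := (S.erase e).erase (e+1) with hS2
    have he1mem : e + 1 ∈ S.erase e := Finset.mem_erase.2 ⟨by omega, h1⟩
    have hcard2 : S2.card = n - 2 := by
      rw [hS2, Finset.card_erase_of_mem he1mem, Finset.card_erase_of_mem heS, hcard]
      omega
    have hn2 : 2 ≤ n := by
      have h1' : 1 ≤ (S.erase e).card := Finset.card_pos.2 ⟨e+1, he1mem⟩
      rw [Finset.card_erase_of_mem heS, hcard] at h1'
      omega
    set S' := insert (e+2) S2 with hS'
    have hnotin : e + 2 ∉ S2 := fun h => he2S (Finset.mem_of_mem_erase (Finset.mem_of_mem_erase h))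
    have hcard' : S'.card = n - 1 := by
      rw [hS', Finset.card_insert_of_notMem hnotin, hcard2]
      omega
    have hmemS2 : ∀ j, j ∈ S2 → (j ∈ S ∧ j ≠ e ∧ j ≠ e + 1) := by
      intro j hj
      exact ⟨Finset.mem_of_mem_erase (Finset.mem_of_mem_erase hj),
        Finset.ne_of_mem_erase (Finset.mem_of_mem_erase hj), Finset.ne_of_mem_erase hj⟩
    have hval' : pval S' = pval S := by
      have e0 : pval S = φ ^ e + pval (S.erase e) := pval_erase heS
      have e1 : pval (S.erase e) = φ ^ (e+1) + pval S2 := pval_erase he1mem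
      rw [hS', pval_insert hnotin]
      have := phi_zpow_add_two e
      rw [this, e0, e1]
      ring
    have hrange' : ∀ j ∈ S', j < 0 ∨ e + 2 ≤ j := by
      intro j hj
      rcases Finset.mem_insert.1 hj with rfl | hj
      · omega
      · obtain ⟨hjS, hne1, hne2⟩ := hmemS2 j hj
        have := hrange j hjS
        omega
    have hpair' : ∀ j : ℤ, j ∈ S' → j + 1 ∈ S' → j = e + 2 := by
      intro j hj hj1
      rcases Finset.mem_insert.1 hj with rfl | hj
      · rfl
      · obtain ⟨hjS, hne1, hne2⟩ := hmemS2 j hj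
        rcases Finset.mem_insert.1 hj1 with h | hj1'
        · omega
        · obtain ⟨hj1S, _, _⟩ := hmemS2 _ hj1'
          have := hpair j hjS hj1S
          omega
    obtain ⟨B, e', hB⟩ := ih (n-1) (by omega) S' hcard' (e+2) (by omega)
      (by obtain ⟨m, hm⟩ := heEven; exact ⟨m+1, by omega⟩)
      (Finset.mem_insert_self _ _) hrange' hpair'
    exact ⟨B, e', hB.1, by rw [hB.2.1, hval'], hB.2.2⟩
  · refine ⟨S, e, ?_, rfl, he2, heEven, heS, hrange⟩
    intro j hj hj1
    have := hpair j hj hj1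
    subst this
    exact h1 hj1

lemma NC_of_not01 {N : ℕ} (hN : 1 ≤ N) (hnot : ¬((0:ℤ) ∈ R N ∧ (1:ℤ) ∈ R N)) :
    NC (R N) := by
  obtain ⟨_, hNCE, _, _, _, _⟩ := R_inv N hN
  intro j hj hj1
  have hj0 : j = 0 := hNCE j hj hj1
  subst hj0
  exact hnot ⟨hj, by simpa using hj1⟩

lemma no_admissible11 {N : ℕ} (hN : 1 ≤ N) (hnot : ¬((0:ℤ) ∈ R N ∧ (1:ℤ) ∈ R N)) :
    ¬ ∃ c, IsAdmissible N c ∧ c 1 = 1 ∧ c 0 = 1 := by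
  rintro ⟨c, hadm, hc1, hc0⟩
  obtain ⟨hvalR, hNCE, hnn, hneg, htype, hbd⟩ := R_inv N hN
  have h0S : (0:ℤ) ∈ c.support := Finsupp.mem_support_iff.2 (by omega)
  have h1S : (1:ℤ) ∈ c.support := Finsupp.mem_support_iff.2 (by omega)
  have hpairS := adm_support_pair hadm
  have hm1 : (-1:ℤ) ∉ c.support := by
    intro h
    have := hpairS (-1) h (by norm_num [h0S])
    omega
  have h2S : (2:ℤ) ∉ c.support := by
    intro h
    have := hpairS 1 h1S (by norm_num [h])
    omega
  have hvalS : pval c.support = N := by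
    rw [← support_sum hadm.1.1, hadm.1.2]
  set S2 := (c.support.erase 0).erase 1 with hS2
  set S1 := insert (2:ℤ) S2 with hS1
  have hmemS2 : ∀ j, j ∈ S2 → (j ∈ c.support ∧ j ≠ 0 ∧ j ≠ 1) := by
    intro j hj
    exact ⟨Finset.mem_of_mem_erase (Finset.mem_of_mem_erase hj),
      Finset.ne_of_mem_erase (Finset.mem_of_mem_erase hj), Finset.ne_of_mem_erase hj⟩
  have h2notin : (2:ℤ) ∉ S2 := by
    intro h
    exact h2S (hmemS2 2 h).1
  have hvalS1 : pval S1 = N := by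
    have e0 : pval c.support = φ ^ (0:ℤ) + pval (c.support.erase 0) := pval_erase h0S
    have e1 : pval (c.support.erase 0) = φ ^ (1:ℤ) + pval S2 :=
      pval_erase (Finset.mem_erase.2 ⟨by norm_num, h1S⟩)
    have h2 : φ ^ (2:ℤ) = φ ^ (1:ℤ) + φ ^ (0:ℤ) := by
      have h := phi_zpow_add_two 0
      rw [show (0:ℤ)+2 = 2 by norm_num, show (0:ℤ)+1 = 1 by norm_num] at h
      exact h
    rw [hS1, pval_insert h2notin, h2]
    rw [e0, e1] at hvalS
    linarith
  have hrange1 : ∀ j ∈ S1, j < 0 ∨ (2:ℤ) ≤ j := by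
    intro j hj
    rcases Finset.mem_insert.1 hj with rfl | hj
    · omega
    · obtain ⟨_, hne0, hne1⟩ := hmemS2 j hj
      omega
  have hpair1 : ∀ j : ℤ, j ∈ S1 → j + 1 ∈ S1 → j = 2 := by
    intro j hj hj1
    rcases Finset.mem_insert.1 hj with rfl | hj
    · rfl
    · obtain ⟨hjS, hne0, hne1⟩ := hmemS2 j hj
      rcases Finset.mem_insert.1 hj1 with h | hj1'
      · omega
      · obtain ⟨hj1S, _, _⟩ := hmemS2 _ hj1'
        have := hpairS j hjS hj1S
        omega
  obtain ⟨B, e', hNCB, hvalB, he'2, he'even, he'B, hrangeB⟩ :=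
    carry S1.card S1 rfl 2 (by norm_num) (by exact ⟨1, by norm_num⟩)
      (Finset.mem_insert_self _ _) hrange1 hpair1
  have hRNC : NC (R N) := NC_of_not01 hN hnot
  have hBR : B = R N := by
    apply NC_val_inj' hNCB hRNC
    rw [hvalB, hvalS1, hvalR]
  rcases htype with h0 | ⟨jm, hjm, hjmodd, hjmnn, hjmmin⟩
  · rw [← hBR] at h0
    have := hrangeB 0 h0
    omega
  · rw [← hBR] at hjm hjmmin
    have h1 := hrangeB jm hjm
    have h2 : e' ≤ jm := by omega
    have h3 : jm ≤ e' := hjmmin e' (by rw [hBR]; rw [← hBR]; exact he'B) (by omega)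
    have h4 : jm = e' := le_antisymm h3 h2
    obtain ⟨m1, hm1⟩ := hjmodd
    obtain ⟨m2, hm2⟩ := he'even
    omega

lemma isAdm_ind {N : ℕ} (hN : 1 ≤ N) : IsAdmissible N (ind (R N)) := by
  obtain ⟨hvalR, hNCE, _, _, _, _⟩ := R_inv N hN
  refine ⟨⟨ind_le_one _, by rw [ind_sum, hvalR]⟩, ?_⟩
  intro i hi
  by_cases m1 : (i+1) ∈ R N <;> by_cases m0 : i ∈ R N
  · exact absurd (hNCE i m0 m1) hi
  · simp [ind_apply, m0]
  · simp [ind_apply, m1]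
  · simp [ind_apply, m1]

lemma isBergman_ind {N : ℕ} (hN : 1 ≤ N) (hnot : ¬((0:ℤ) ∈ R N ∧ (1:ℤ) ∈ R N)) :
    IsBergman N (ind (R N)) := by
  obtain ⟨hvalR, hNCE, _, _, _, _⟩ := R_inv N hN
  have hNC := NC_of_not01 hN hnot
  refine ⟨⟨ind_le_one _, by rw [ind_sum, hvalR]⟩, ?_⟩
  intro i
  by_cases m1 : (i+1) ∈ R N <;> by_cases m0 : i ∈ R N
  · exact absurd m1 (hNC i m0)
  · simp [ind_apply, m0]
  · simp [ind_apply, m1]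
  · simp [ind_apply, m1]

lemma canonicalRep_eq_ind (N : ℕ) : canonicalRep N = ind (R N) := by
  rcases Nat.eq_zero_or_pos N with rfl | hN
  · have hno11 : ¬ ∃ c, IsAdmissible 0 c ∧ c 1 = 1 ∧ c 0 = 1 := by
      rintro ⟨c, hadm, hc1, hc0⟩
      have h1S : (1:ℤ) ∈ c.support := Finsupp.mem_support_iff.2 (by omega)
      have hval : pval c.support = 0 := by
        rw [← support_sum hadm.1.1, hadm.1.2]; norm_num
      have := pval_pos ⟨1, h1S⟩
      linarith
    rw [canonicalRep, dif_neg hno11]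
    have hberg : IsBergman 0 (ind (R 0)) := by
      rw [R_zero]
      refine ⟨⟨ind_le_one _, by rw [ind_sum, pval_empty]; norm_num⟩, ?_⟩
      intro i
      simp [ind_apply]
    rw [bergmanRep, dif_pos ⟨_, hberg⟩]
    set hE : ∃ c, IsBergman 0 c := ⟨_, hberg⟩
    exact bergman_unique hE.choose_spec hberg
  · by_cases h01 : (0:ℤ) ∈ R N ∧ (1:ℤ) ∈ R N
    · have hadm := isAdm_ind hN
      have h1v : ind (R N) 1 = 1 := by rw [ind_apply, if_pos h01.2]
      have h0v : ind (R N) 0 = 1 := by rw [ind_apply, if_pos h01.1]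
      have hex : ∃ c, IsAdmissible N c ∧ c 1 = 1 ∧ c 0 = 1 := ⟨_, hadm, h1v, h0v⟩
      rw [canonicalRep, dif_pos hex]
      obtain ⟨hadm', h1', h0'⟩ := hex.choose_spec
      exact adm11_unique hadm' h1' h0' hadm h1v h0v
    · have hno11 := no_admissible11 hN h01
      rw [canonicalRep, dif_neg hno11]
      have hberg := isBergman_ind hN h01
      rw [bergmanRep, dif_pos ⟨_, hberg⟩]
      set hE : ∃ c, IsBergman N c := ⟨_, hberg⟩
      exact bergman_unique hE.choose_spec hberg

end Aux16

theorem stmt16 (i : ℕ) (hi : 1 ≤ i) (N : ℕ) (hN : 1 ≤ N)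
    (h1 : canonicalRep N (i : ℤ) = 1)
    (hstart : N = 1 ∨ canonicalRep (N - 1) (i : ℤ) = 0) :
    (∀ k : ℕ, k < lucas (i - 1) → canonicalRep (N + k) (i : ℤ) = 1) ∧
    canonicalRep (N + lucas (i - 1)) (i : ℤ) = 0 := by
  have hbr := Aux16.canonicalRep_eq_ind
  have hmem : ((i:ℕ):ℤ) ∈ Aux16.R N := by
    rw [hbr N, Aux16.ind_apply] at h1
    by_contra h
    rw [if_neg h] at h1
    omega
  have hprev : ((i:ℕ):ℤ) ∉ Aux16.R (N-1) := by
    rcases hstart with h | h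
    · subst h
      rw [show (1:ℕ) - 1 = 0 from rfl]
      exact Aux16.notMem_R0
    · rw [hbr (N-1), Aux16.ind_apply] at h
      intro hc
      rw [if_pos hc] at h
      omega
  obtain ⟨hrun, hb⟩ := Aux16.runs i hi N hN hmem hprev
  constructor
  · intro k hk
    rw [hbr, Aux16.ind_apply, if_pos (hrun k hk)]
  · rw [hbr, Aux16.ind_apply, if_neg hb]
end
end

section
/- For a positive integer N, the canonical digit at position 0 satisfies c_0(N) = 1 if and only if N = ⌊nφ⌋ + 2n + 1 for some integer n ≥ 0, or N = ⌊nφ⌋ + 2n for some integer n ≥ 1. -/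
noncomputable section

attribute [local instance] Classical.propDecidable

namespace Aux18
local notation "φ" => goldenPhi
lemma sqrt5_sq : Real.sqrt 5 ^ 2 = 5 := Real.sq_sqrt (by norm_num)
lemma sqrt5_lt : Real.sqrt 5 < 3 := by
  nlinarith [Real.sq_sqrt (show (5:ℝ) ≥ 0 by norm_num), Real.sqrt_nonneg 5]
lemma sqrt5_gt : 2 < Real.sqrt 5 := by
  nlinarith [Real.sq_sqrt (show (5:ℝ) ≥ 0 by norm_num), Real.sqrt_nonneg 5]
lemma phi_sq : φ^2 = φ + 1 := by unfold goldenPhi; nlinarith [sqrt5_sq]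
lemma phi_gt : (3:ℝ)/2 < φ := by unfold goldenPhi; nlinarith [sqrt5_gt]
lemma phi_lt : φ < 2 := by unfold goldenPhi; nlinarith [sqrt5_lt]
lemma phi_lt_53 : φ < 5/3 := by
  unfold goldenPhi; nlinarith [sqrt5_sq, Real.sqrt_nonneg 5]
lemma phi_pos : 0 < φ := by linarith [phi_gt]
lemma phi_ne : φ ≠ 0 := ne_of_gt phi_pos
lemma phi_one_lt : 1 < φ := by linarith [phi_gt]
lemma phi_inv : (φ - 1) * φ = 1 := by nlinarith [phi_sq]
lemma phim_pos : 0 < φ - 1 := by linarith [phi_one_lt]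
lemma phim_lt_one : φ - 1 < 1 := by linarith [phi_lt]
lemma psi_sq : (1-φ)^2 = (1-φ) + 1 := by nlinarith [phi_sq]
lemma abs_psi_pow (n : ℕ) : |(1-φ)^n| = (φ-1)^n := by
  rw [abs_pow, abs_of_nonpos (by linarith [phi_one_lt] : 1-φ ≤ 0)]; ring_nf
lemma phim_pow_pos (n : ℕ) : 0 < (φ-1)^n := pow_pos phim_pos n
lemma phim_pow_lt_one (n : ℕ) (h : 1 ≤ n) : (φ-1)^n < 1 :=
  pow_lt_one₀ (le_of_lt phim_pos) phim_lt_one (by omega)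
lemma phim_pow_le_one (n : ℕ) : (φ-1)^n ≤ 1 :=
  pow_le_one₀ (le_of_lt phim_pos) (le_of_lt phim_lt_one)
lemma phim_pow_succ_lt (n : ℕ) : (φ-1)^(n+1) < (φ-1)^n := by
  have := phim_pow_pos n
  calc (φ-1)^(n+1) = (φ-1)^n * (φ-1) := by ring
  _ < (φ-1)^n * 1 := by nlinarith [phim_lt_one]
  _ = (φ-1)^n := by ring
lemma phim_mul_phi_pow (n : ℕ) : (φ-1)^(n+1) * φ = (φ-1)^n := by
  calc (φ-1)^(n+1) * φ = (φ-1)^n * ((φ-1)*φ) := by ring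
  _ = (φ-1)^n := by rw [phi_inv]; ring
-- fib identities
lemma fib_phi (n : ℕ) : (Nat.fib n : ℝ) * φ = Nat.fib (n+1) - (1-φ)^n := by
  induction n using Nat.strong_induction_on with
  | _ n ih =>
    match n with
    | 0 => simp
    | 1 => norm_num [Nat.fib]
    | (m+2) =>
      have h1 := ih (m+1) (by omega)
      have h2 := ih m (by omega)
      have : (Nat.fib (m+2) : ℝ) = Nat.fib (m+1) + Nat.fib m := by
        rw [Nat.fib_add_two]; push_cast; ring
      rw [this]
      have h3 : (Nat.fib (m+3) : ℝ) = Nat.fib (m+2) + Nat.fib (m+1) := by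
        rw [show m+3 = (m+1)+2 by ring, Nat.fib_add_two]; push_cast; ring
      have h4 : (1-φ)^(m+2) = (1-φ)^(m+1) + (1-φ)^m := by
        calc (1-φ)^(m+2) = (1-φ)^m * (1-φ)^2 := by ring
        _ = (1-φ)^m * ((1-φ)+1) := by rw [psi_sq]
        _ = (1-φ)^(m+1) + (1-φ)^m := by ring
      rw [add_mul, h1, h2, h3, h4]; ring
lemma phi_pow (n : ℕ) : φ^(n+1) = Nat.fib (n+1) * φ + Nat.fib n := by
  induction n with
  | zero => simp
  | succ m ih =>
    have : φ^(m+2) = φ^(m+1) * φ := by ring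
    rw [this, ih]
    have h3 : (Nat.fib (m+2) : ℝ) = Nat.fib (m+1) + Nat.fib m := by
      rw [Nat.fib_add_two]; push_cast; ring
    have : (Nat.fib (m+1) * φ + Nat.fib m) * φ
        = Nat.fib (m+1) * (φ+1) + Nat.fib m * φ := by nlinarith [phi_sq]
    rw [this, h3]; ring
-- lucas
lemma lucas_succ_eq (n : ℕ) : lucas (n+1) = Nat.fib (n+2) + Nat.fib n := by
  induction n using Nat.strong_induction_on with
  | _ n ih =>
    match n with
    | 0 => rfl
    | 1 => rfl
    | (m+2) =>
      have h1 := ih (m+1) (by omega)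
      have h2 := ih m (by omega)
      have h1' : lucas (m+2) = Nat.fib (m+3) + Nat.fib (m+1) := h1
      have h2' : lucas (m+1) = Nat.fib (m+2) + Nat.fib m := h2
      have e1 : Nat.fib (m+4) = Nat.fib (m+2) + Nat.fib (m+3) := Nat.fib_add_two (n:=m+2)
      have e2 : Nat.fib (m+3) = Nat.fib (m+1) + Nat.fib (m+2) := Nat.fib_add_two (n:=m+1)
      have e3 : Nat.fib (m+2) = Nat.fib m + Nat.fib (m+1) := Nat.fib_add_two (n:=m)
      show lucas (m+2) + lucas (m+1) = Nat.fib (m+4) + Nat.fib (m+2)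
      omega
lemma lucas_real (n : ℕ) : (lucas n : ℝ) = φ^n + (1-φ)^n := by
  induction n using Nat.strong_induction_on with
  | _ n ih =>
    match n with
    | 0 => show ((2:ℕ):ℝ) = _; norm_num
    | 1 => show ((1:ℕ):ℝ) = _; push_cast; ring
    | (m+2) =>
      have h1 := ih (m+1) (by omega)
      have h2 := ih m (by omega)
      have : (lucas (m+2) : ℝ) = lucas (m+1) + lucas m := by
        show ((lucas (m+1) + lucas m : ℕ) : ℝ) = _; push_cast; ring
      rw [this, h1, h2]
      have h4 : (1-φ)^(m+2) = (1-φ)^(m+1) + (1-φ)^m := by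
        calc (1-φ)^(m+2) = (1-φ)^m * (1-φ)^2 := by ring
        _ = (1-φ)^m * ((1-φ)+1) := by rw [psi_sq]
        _ = (1-φ)^(m+1) + (1-φ)^m := by ring
      have h5 : φ^(m+2) = φ^(m+1) + φ^m := by
        calc φ^(m+2) = φ^m * φ^2 := by ring
        _ = φ^m * (φ+1) := by rw [phi_sq]
        _ = φ^(m+1) + φ^m := by ring
      rw [h4, h5]; ring
lemma lucas_pos (n : ℕ) : 1 ≤ lucas n := by
  induction n using Nat.strong_induction_on with
  | _ n ih =>
    match n with
    | 0 => simp [lucas]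
    | 1 => simp [lucas]
    | (m+2) =>
      have h1 := ih (m+1) (by omega)
      show 1 ≤ lucas (m+1) + lucas m; omega
lemma lucas_lt_succ (n : ℕ) (h : 1 ≤ n) : lucas n < lucas (n+1) := by
  obtain ⟨m, rfl⟩ : ∃ m, n = m + 1 := ⟨n-1, by omega⟩
  have := lucas_pos m
  show _ < lucas (m+1) + lucas m; omega
lemma lucas_mono {a b : ℕ} (ha : 1 ≤ a) (h : a ≤ b) : lucas a ≤ lucas b := by
  induction b, h using Nat.le_induction with
  | base => exact le_refl _
  | succ m hm ih =>
    have := lucas_lt_succ m (by omega)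
    omega
lemma lucas_strict_mono {a b : ℕ} (ha : 1 ≤ a) (h : a < b) : lucas a < lucas b := by
  have h1 := lucas_lt_succ a ha
  have h2 := lucas_mono (show 1 ≤ a+1 by omega) (show a+1 ≤ b by omega)
  omega
lemma lucas_ge (n : ℕ) (h : 1 ≤ n) : n ≤ lucas n := by
  induction n using Nat.strong_induction_on with
  | _ n ih =>
    match n with
    | 1 => simp [lucas]
    | (m+2) =>
      have h1 := lucas_pos m
      rcases Nat.eq_zero_or_pos m with rfl|hm
      · simp [lucas]
      · have := ih (m+1) (by omega) (by omega)
        show m+2 ≤ lucas (m+1) + lucas m; omega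
-- D* : best approximation lemma
lemma dstar : ∀ j : ℕ, ∀ n : ℕ, 1 ≤ n → n < Nat.fib j → ∀ m : ℤ, (φ-1)^j < |(n:ℝ)*φ - m| := by
  intro j
  induction j using Nat.strong_induction_on with
  | _ j ih =>
    match j with
    | 0 => intro n h1 h2; exact absurd h2 (by rw [show Nat.fib 0 = 0 from rfl]; omega)
    | 1 => intro n h1 h2; exact absurd h2 (by rw [show Nat.fib 1 = 1 from rfl]; omega)
    | 2 => intro n h1 h2; exact absurd h2 (by rw [show Nat.fib 2 = 1 from rfl]; omega)
    | 3 =>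
      intro n h1 h2 m
      rw [show Nat.fib 3 = 2 from rfl] at h2
      have hn : n = 1 := by omega
      subst hn
      have e : (φ-1)^3 = 2*φ - 3 := by nlinarith [phi_sq]
      push_cast
      rcases le_or_gt (m:ℝ) 1 with h|h
      · rw [abs_of_nonneg (by nlinarith [phi_gt])]
        nlinarith [phi_gt, phi_lt]
      · have hm : (2:ℝ) ≤ m := by
          have : (1:ℤ) < m := by exact_mod_cast h
          exact_mod_cast this
        rw [abs_of_nonpos (by nlinarith [phi_lt])]
        nlinarith [phi_lt_53, phi_gt]
    | (j+4) =>
      intro n h1 h2 m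
      rcases Nat.lt_or_ge n (Nat.fib (j+3)) with hlt|hge
      · have := ih (j+3) (by omega) n h1 hlt m
        have := phim_pow_succ_lt (j+3)
        linarith
      · -- n = fib (j+3) + r
        set r := n - Nat.fib (j+3) with hr
        have hfib : Nat.fib (j+4) = Nat.fib (j+2) + Nat.fib (j+3) := Nat.fib_add_two (n:=j+2)
        have hrlt : r < Nat.fib (j+2) := by omega
        have hnr : (n:ℝ) = Nat.fib (j+3) + r := by
          have : n = Nat.fib (j+3) + r := by omega
          rw [this]; push_cast; ring
        have hFphi : (Nat.fib (j+3) : ℝ) * φ = Nat.fib (j+4) - (1-φ)^(j+3) := fib_phi (j+3)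
        have habs := abs_psi_pow (j+3)
        rcases Nat.eq_zero_or_pos r with hr0|hrpos
        · -- n = fib(j+3)
          have : (n:ℝ)*φ - m = (Nat.fib (j+4) - m) - (1-φ)^(j+3) := by
            rw [hnr, hr0]; push_cast; linear_combination hFphi
          rw [this]
          rcases eq_or_ne m (Nat.fib (j+4)) with rfl|hne
          · simp only [Int.cast_natCast, sub_self, zero_sub, abs_neg, habs]
            exact phim_pow_succ_lt (j+3)
          · have h1' : (1:ℝ) ≤ |(Nat.fib (j+4) : ℝ) - m| := by
              have hz : ((Nat.fib (j+4) : ℤ) - m) ≠ 0 := by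
                intro hc; apply hne; omega
              have h1i := Int.one_le_abs hz
              have h1r : (1:ℝ) ≤ |(((Nat.fib (j+4) : ℤ) - m : ℤ) : ℝ)| := by
                rw [← Int.cast_abs]
                exact_mod_cast h1i
              push_cast at h1r
              exact h1r
            have hb : |(Nat.fib (j+4) : ℝ) - m| - (φ-1)^(j+3) ≤ |(Nat.fib (j+4) - m : ℝ) - (1-φ)^(j+3)| := by
              have := abs_sub_abs_le_abs_sub ((Nat.fib (j+4) : ℝ) - m) ((1-φ)^(j+3))
              rw [habs] at this; linarith
            have hsmall : (φ-1)^(j+3) + (φ-1)^(j+4) < 1 := by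
              have : ((φ-1)^(j+3) + (φ-1)^(j+4)) * φ = (φ-1)^(j+2) + (φ-1)^(j+3) := by
                rw [add_mul, phim_mul_phi_pow, phim_mul_phi_pow]
              have h2' : (φ-1)^(j+2) + (φ-1)^(j+3) = (φ-1)^(j+2) * φ := by
                have : (φ-1)^(j+3) = (φ-1)^(j+2)*(φ-1) := by ring
                rw [this]; ring
              nlinarith [phim_pow_pos (j+2), phim_pow_pos (j+3), phim_pow_pos (j+4), phi_pos,
                phim_pow_le_one (j+1), phim_mul_phi_pow (j+1), phim_mul_phi_pow (j+2), phi_one_lt]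
            linarith
        · -- r ≥ 1
          have ihr := ih (j+2) (by omega) r hrpos hrlt (m - Nat.fib (j+4))
          have key : (n:ℝ)*φ - m = ((r:ℝ)*φ - (m - Nat.fib (j+4))) - (1-φ)^(j+3) := by
            rw [hnr]; push_cast; nlinarith [hFphi]
          rw [key]
          have htri : |(r:ℝ)*φ - (m - Nat.fib (j+4))| - (φ-1)^(j+3) ≤ |((r:ℝ)*φ - (m - Nat.fib (j+4))) - (1-φ)^(j+3)| := by
            have := abs_sub_abs_le_abs_sub ((r:ℝ)*φ - ((m:ℝ) - Nat.fib (j+4))) ((1-φ)^(j+3))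
            rw [habs] at this; push_cast at this ⊢; linarith
          have hstep : (φ-1)^(j+2) - (φ-1)^(j+3) = (φ-1)^(j+4) := by
            have h2 : (2:ℝ) - φ = (φ-1)^2 := by nlinarith [phi_sq]
            calc (φ-1)^(j+2) - (φ-1)^(j+3) = (φ-1)^(j+2) * (2 - φ) := by ring
            _ = (φ-1)^(j+2) * (φ-1)^2 := by rw [h2]
            _ = (φ-1)^(j+4) := by ring
          push_cast at ihr ⊢
          linarith
lemma frac_lb (j n : ℕ) (h1 : 1 ≤ n) (h2 : n < Nat.fib j) :
    (⌊(n:ℝ)*φ⌋ : ℝ) + (φ-1)^j < (n:ℝ)*φ := by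
  have h := dstar j n h1 h2 ⌊(n:ℝ)*φ⌋
  rw [abs_of_nonneg (by linarith [Int.floor_le ((n:ℝ)*φ)])] at h
  linarith
lemma frac_ub (j n : ℕ) (h1 : 1 ≤ n) (h2 : n < Nat.fib j) :
    (n:ℝ)*φ + (φ-1)^j < (⌊(n:ℝ)*φ⌋ : ℝ) + 1 := by
  have h := dstar j n h1 h2 (⌊(n:ℝ)*φ⌋ + 1)
  rw [abs_of_nonpos (by push_cast; linarith [Int.lt_floor_add_one ((n:ℝ)*φ)])] at h
  push_cast at h
  linarith
lemma fib_phi_odd (k : ℕ) :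
    (Nat.fib (2*k+1) : ℝ) * φ = Nat.fib (2*k+2) + (φ-1)^(2*k+1) := by
  have := fib_phi (2*k+1)
  have ho : (1-φ)^(2*k+1) = -((φ-1)^(2*k+1)) := by
    rw [show (1-φ) = -(φ-1) by ring, Odd.neg_pow ⟨k, by ring⟩]
  rw [ho] at this; linarith
lemma fib_phi_even (k : ℕ) :
    (Nat.fib (2*k) : ℝ) * φ = Nat.fib (2*k+1) - (φ-1)^(2*k) := by
  have := fib_phi (2*k)
  have ho : (1-φ)^(2*k) = (φ-1)^(2*k) := by
    rw [show (1-φ) = -(φ-1) by ring, Even.neg_pow ⟨k, by ring⟩]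
  rw [ho] at this; linarith
lemma floor_fib_odd (k : ℕ) : ⌊(Nat.fib (2*k+1) : ℝ) * φ⌋ = (Nat.fib (2*k+2) : ℤ) := by
  rw [Int.floor_eq_iff]
  rw [fib_phi_odd k]
  constructor
  · push_cast; linarith [phim_pow_pos (2*k+1)]
  · push_cast; linarith [phim_pow_lt_one (2*k+1) (by omega)]
lemma floor_fib_even (k : ℕ) (hk : 1 ≤ k) :
    ⌊(Nat.fib (2*k) : ℝ) * φ⌋ = (Nat.fib (2*k+1) : ℤ) - 1 := by
  have h2 : 2 ≤ Nat.fib (2*k+1) := by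
    have := Nat.fib_le_fib_succ (n := 2)
    calc 2 = Nat.fib 3 := rfl
    _ ≤ Nat.fib (2*k+1) := Nat.fib_mono (by omega)
  rw [Int.floor_eq_iff]
  rw [fib_phi_even k]
  constructor
  · push_cast; linarith [phim_pow_lt_one (2*k) (by omega)]
  · push_cast; linarith [phim_pow_pos (2*k)]
-- floor translation identities
lemma FL1 (k n : ℕ) (hn : n < Nat.fib (2*k+1)) :
    ⌊((n + Nat.fib (2*k+1) : ℕ) : ℝ) * φ⌋ = Nat.fib (2*k+2) + ⌊(n:ℝ)*φ⌋ := by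
  rcases Nat.eq_zero_or_pos n with rfl|hpos
  · simp [floor_fib_odd k]
  · have key : ((n + Nat.fib (2*k+1) : ℕ) : ℝ) * φ
        = ((n:ℝ)*φ + (φ-1)^(2*k+1)) + (Nat.fib (2*k+2) : ℤ) := by
      push_cast
      rw [add_mul, fib_phi_odd k]
      push_cast; ring
    rw [key, Int.floor_add_intCast]
    have : ⌊(n:ℝ)*φ + (φ-1)^(2*k+1)⌋ = ⌊(n:ℝ)*φ⌋ := by
      rw [Int.floor_eq_iff]
      constructor
      · linarith [Int.floor_le ((n:ℝ)*φ), phim_pow_pos (2*k+1)]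
      · push_cast
        linarith [frac_ub (2*k+1) n hpos hn]
    rw [this]; ring
lemma FL2 (k n : ℕ) (hk : 1 ≤ k) (h1 : 1 ≤ n) (hn : n ≤ Nat.fib (2*k)) :
    ⌊((n + Nat.fib (2*k) : ℕ) : ℝ) * φ⌋ = Nat.fib (2*k+1) + ⌊(n:ℝ)*φ⌋ := by
  have hfrac : (⌊(n:ℝ)*φ⌋ : ℝ) + (φ-1)^(2*k) < (n:ℝ)*φ := by
    rcases Nat.lt_or_ge n (Nat.fib (2*k)) with h|h
    · exact frac_lb (2*k) n h1 h
    · have : n = Nat.fib (2*k) := by omega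
      subst this
      rw [floor_fib_even k hk, fib_phi_even k]
      push_cast
      have h1' : (φ-1)^(2*k) ≤ (φ-1)^2 := by
        apply pow_le_pow_of_le_one (le_of_lt phim_pos) (le_of_lt phim_lt_one) (by omega)
      nlinarith [phi_sq, phi_lt, phi_gt, phim_pow_pos (2*k)]
  have key : ((n + Nat.fib (2*k) : ℕ) : ℝ) * φ
      = ((n:ℝ)*φ - (φ-1)^(2*k)) + (Nat.fib (2*k+1) : ℤ) := by
    push_cast
    rw [add_mul, fib_phi_even k]
    push_cast; ring
  rw [key, Int.floor_add_intCast]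
  have : ⌊(n:ℝ)*φ - (φ-1)^(2*k)⌋ = ⌊(n:ℝ)*φ⌋ := by
    rw [Int.floor_eq_iff]
    constructor
    · linarith
    · push_cast
      linarith [Int.lt_floor_add_one ((n:ℝ)*φ), phim_pow_pos (2*k)]
  rw [this]; ring
lemma floor_phi_superadd (x y : ℝ) : ⌊x⌋ + ⌊y⌋ ≤ ⌊x + y⌋ := by
  apply Int.le_floor.2
  push_cast
  linarith [Int.floor_le x, Int.floor_le y]
lemma floor_mul_phi_mono {a b : ℕ} (h : a ≤ b) : ⌊(a:ℝ)*φ⌋ ≤ ⌊(b:ℝ)*φ⌋ := by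
  apply Int.floor_le_floor
  have : (a:ℝ) ≤ b := by exact_mod_cast h
  nlinarith [phi_pos]

-- ###### A/B sets
def gB (n : ℕ) : ℤ := ⌊(n:ℝ)*φ⌋ + 2*n
def InA (N : ℕ) : Prop := ∃ n : ℕ, (N:ℤ) = gB n + 1
def InB (N : ℕ) : Prop := ∃ n : ℕ, 1 ≤ n ∧ (N:ℤ) = gB n

lemma gB_zero : gB 0 = 0 := by simp [gB]
lemma floor_phi : ⌊φ⌋ = 1 := by
  rw [Int.floor_eq_iff]
  constructor
  · push_cast; linarith [phi_one_lt]
  · push_cast; linarith [phi_lt]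
lemma gB_one : gB 1 = 3 := by
  unfold gB
  have e : ((1:ℕ):ℝ)*φ = φ := by push_cast; ring
  rw [e, floor_phi]
  norm_num
lemma gB_step (n : ℕ) : gB n + 3 ≤ gB (n+1) := by
  unfold gB
  have h : ⌊(n:ℝ)*φ⌋ + 1 ≤ ⌊((n+1:ℕ):ℝ)*φ⌋ := by
    apply Int.le_floor.2
    push_cast
    have := Int.floor_le ((n:ℝ)*φ)
    nlinarith [phi_one_lt]
  push_cast at h ⊢
  omega
lemma gB_mono {a b : ℕ} (h : a ≤ b) : gB a ≤ gB b := by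
  induction b with
  | zero => have : a = 0 := by omega
            rw [this]
  | succ m ih =>
    rcases Nat.lt_or_ge a (m+1) with h'|h'
    · have := ih (by omega)
      have := gB_step m
      omega
    · have : a = m+1 := by omega
      rw [this]
lemma gB_strict {a b : ℕ} (h : a < b) : gB a + 3 ≤ gB b := by
  have h1 := gB_step a
  have h2 := gB_mono (show a+1 ≤ b by omega)
  omega
lemma gB_superadd (a b : ℕ) : gB a + gB b ≤ gB (a+b) := by
  unfold gB
  have := floor_phi_superadd ((a:ℝ)*φ) ((b:ℝ)*φ)
  have e : ((a+b:ℕ):ℝ)*φ = (a:ℝ)*φ + (b:ℝ)*φ := by push_cast; ring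
  rw [e]
  push_cast
  omega
-- gB at fibonacci points
lemma gB_fib_odd (j : ℕ) : gB (Nat.fib (2*j+1)) = lucas (2*j+2) := by
  unfold gB
  rw [floor_fib_odd j]
  have h1 : lucas (2*j+2) = Nat.fib (2*j+3) + Nat.fib (2*j+1) := lucas_succ_eq (2*j+1)
  have h2 : Nat.fib (2*j+3) = Nat.fib (2*j+1) + Nat.fib (2*j+2) := Nat.fib_add_two (n:=2*j+1)
  push_cast [h1, h2]
  ring
lemma gB_fib_even (j : ℕ) : gB (Nat.fib (2*j+2)) = (lucas (2*j+3) : ℤ) - 1 := by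
  unfold gB
  rw [show 2*j+2 = 2*(j+1) from by ring, floor_fib_even (j+1) (by omega)]
  have h1 : lucas (2*j+3) = Nat.fib (2*j+4) + Nat.fib (2*j+2) := lucas_succ_eq (2*j+2)
  have h2 : Nat.fib (2*j+4) = Nat.fib (2*j+2) + Nat.fib (2*j+3) := Nat.fib_add_two (n:=2*j+2)
  have e : 2*(j+1)+1 = 2*j+3 := by ring
  rw [e]
  push_cast [h1, h2]
  ring
lemma gB_fib_even_succ (j : ℕ) : (lucas (2*j+3) : ℤ) + 3 ≤ gB (Nat.fib (2*j+2) + 1) := by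
  unfold gB
  have hfloor : (Nat.fib (2*j+3) : ℤ) + 1 ≤ ⌊((Nat.fib (2*j+2) + 1 : ℕ):ℝ)*φ⌋ := by
    apply Int.le_floor.2
    push_cast
    have he := fib_phi_even (j+1)
    have e : 2*(j+1) = 2*j+2 := by ring
    rw [e] at he
    simp only [show 2*j+2+1 = 2*j+3 by omega] at he
    have hp : (φ-1)^(2*j+2) ≤ (φ-1)^1 := by
      apply pow_le_pow_of_le_one (le_of_lt phim_pos) (le_of_lt phim_lt_one) (by omega)
    have : ((Nat.fib (2*j+2) : ℝ) + 1)*φ = Nat.fib (2*j+3) - (φ-1)^(2*j+2) + φ := by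
      rw [add_mul, he]; ring
    rw [this]
    simp only [pow_one] at hp
    linarith
  have h1 : lucas (2*j+3) = Nat.fib (2*j+4) + Nat.fib (2*j+2) := lucas_succ_eq (2*j+2)
  have h2 : Nat.fib (2*j+4) = Nat.fib (2*j+2) + Nat.fib (2*j+3) := Nat.fib_add_two (n:=2*j+2)
  push_cast [h1, h2] at *
  omega
-- shift identities
lemma gB_shift_odd (j n : ℕ) (hn : n < Nat.fib (2*j+1)) :
    gB (n + Nat.fib (2*j+1)) = gB n + lucas (2*j+2) := by
  unfold gB
  rw [FL1 j n hn]
  have h1 : lucas (2*j+2) = Nat.fib (2*j+3) + Nat.fib (2*j+1) := lucas_succ_eq (2*j+1)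
  have h2 : Nat.fib (2*j+3) = Nat.fib (2*j+1) + Nat.fib (2*j+2) := Nat.fib_add_two (n:=2*j+1)
  push_cast [h1, h2]
  ring
lemma gB_shift_even (j n : ℕ) (h1 : 1 ≤ n) (hn : n ≤ Nat.fib (2*j+2)) :
    gB (n + Nat.fib (2*j+2)) = gB n + lucas (2*j+3) := by
  unfold gB
  have e : 2*(j+1) = 2*j+2 := by ring
  have := FL2 (j+1) n (by omega) h1 (by rw [e]; exact hn)
  rw [e] at this
  simp only [show 2*j+2+1 = 2*j+3 by omega] at this
  rw [this]
  have hl1 : lucas (2*j+3) = Nat.fib (2*j+4) + Nat.fib (2*j+2) := lucas_succ_eq (2*j+2)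
  have hl2 : Nat.fib (2*j+4) = Nat.fib (2*j+2) + Nat.fib (2*j+3) := Nat.fib_add_two (n:=2*j+2)
  push_cast [hl1, hl2]
  ring

lemma lucas_even_ge2 (j : ℕ) : 2 ≤ lucas (2*j) := by
  rcases Nat.eq_zero_or_pos j with rfl|hj
  · simp [lucas]
  · have : lucas 2 ≤ lucas (2*j) := lucas_mono (by omega) (by omega)
    have : lucas 2 = 3 := rfl
    omega

lemma T1A (j M : ℕ) (hM : M ≤ lucas (2*j+1)) :
    (InA M ↔ InA (M + lucas (2*j+2))) := by
  have hl : (lucas (2*j+1):ℤ) < lucas (2*j+2) := by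
    exact_mod_cast lucas_strict_mono (by omega) (by omega)
  have hM' : (M:ℤ) ≤ (lucas (2*j+1) : ℤ) := by exact_mod_cast hM
  have hcast : ((M + lucas (2*j+2) : ℕ) : ℤ) = (M:ℤ) + lucas (2*j+2) := by push_cast; ring
  constructor
  · rintro ⟨n, hn⟩
    have hnlt : n < Nat.fib (2*j+1) := by
      by_contra h
      push_neg at h
      have h2 := gB_mono h
      rw [gB_fib_odd] at h2
      omega
    refine ⟨n + Nat.fib (2*j+1), ?_⟩
    rw [gB_shift_odd j n hnlt, hcast]
    omega
  · rintro ⟨n', hn'⟩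
    rw [hcast] at hn'
    have hge : Nat.fib (2*j+1) ≤ n' := by
      by_contra h
      push_neg at h
      have h2 := gB_strict h
      rw [gB_fib_odd] at h2
      have hM0 : (0:ℤ) ≤ (M:ℤ) := by positivity
      omega
    set n := n' - Nat.fib (2*j+1) with hndef
    have hnn : n' = n + Nat.fib (2*j+1) := by omega
    have hnlt : n < Nat.fib (2*j+1) := by
      by_contra h
      push_neg at h
      have hsa := gB_superadd n (Nat.fib (2*j+1))
      rw [gB_fib_odd] at hsa
      have h3 := gB_mono h
      rw [gB_fib_odd] at h3
      rw [hnn] at hn'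
      omega
    rw [hnn, gB_shift_odd j n hnlt] at hn'
    exact ⟨n, by omega⟩

lemma T1B (j K : ℕ) (h1 : 1 ≤ K) (hK : K ≤ lucas (2*j+1)+1) :
    (InB K ↔ InB (K + lucas (2*j+2))) := by
  have hl : (lucas (2*j+1):ℤ) + 2 ≤ lucas (2*j+2) := by
    have : lucas (2*j+2) = lucas (2*j+1) + lucas (2*j) := rfl
    have := lucas_even_ge2 j
    push_cast [this]
    omega
  have hK' : (K:ℤ) ≤ (lucas (2*j+1) : ℤ) + 1 := by exact_mod_cast hK
  have hK1 : (1:ℤ) ≤ (K:ℤ) := by exact_mod_cast h1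
  have hcast : ((K + lucas (2*j+2) : ℕ) : ℤ) = (K:ℤ) + lucas (2*j+2) := by push_cast; ring
  constructor
  · rintro ⟨n, hn1, hn⟩
    have hnlt : n < Nat.fib (2*j+1) := by
      by_contra h
      push_neg at h
      have h2 := gB_mono h
      rw [gB_fib_odd] at h2
      omega
    refine ⟨n + Nat.fib (2*j+1), by omega, ?_⟩
    rw [gB_shift_odd j n hnlt, hcast]
    omega
  · rintro ⟨n', hn1, hn'⟩
    rw [hcast] at hn'
    have hge : Nat.fib (2*j+1) ≤ n' := by
      by_contra h
      push_neg at h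
      have h2 := gB_strict h
      rw [gB_fib_odd] at h2
      omega
    set n := n' - Nat.fib (2*j+1) with hndef
    have hnn : n' = n + Nat.fib (2*j+1) := by omega
    have hnlt : n < Nat.fib (2*j+1) := by
      by_contra h
      push_neg at h
      have hsa := gB_superadd n (Nat.fib (2*j+1))
      rw [gB_fib_odd] at hsa
      have h3 := gB_mono h
      rw [gB_fib_odd] at h3
      rw [hnn] at hn'
      omega
    rw [hnn, gB_shift_odd j n hnlt] at hn'
    have hn0 : 1 ≤ n := by
      rcases Nat.eq_zero_or_pos n with h0|h
      · rw [h0, gB_zero] at hn'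
        omega
      · exact h
    exact ⟨n, hn0, by omega⟩

lemma T2A (j M : ℕ) (h2 : 2 ≤ M) (hM : M < lucas (2*j+2)) :
    (InA M ↔ InA (M + lucas (2*j+3))) := by
  have hl : (lucas (2*j+2):ℤ) ≤ lucas (2*j+3) := by
    exact_mod_cast lucas_mono (by omega) (by omega)
  have hM' : (M:ℤ) < (lucas (2*j+2) : ℤ) := by exact_mod_cast hM
  have hM2 : (2:ℤ) ≤ (M:ℤ) := by exact_mod_cast h2
  have hcast : ((M + lucas (2*j+3) : ℕ) : ℤ) = (M:ℤ) + lucas (2*j+3) := by push_cast; ring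
  have hfibsucc := gB_fib_even_succ j
  constructor
  · rintro ⟨n, hn⟩
    have hn1 : 1 ≤ n := by
      rcases Nat.eq_zero_or_pos n with rfl|h
      · rw [gB_zero] at hn; omega
      · exact h
    have hnle : n ≤ Nat.fib (2*j+2) := by
      by_contra h
      push_neg at h
      have h3 := gB_mono (show Nat.fib (2*j+2) + 1 ≤ n by omega)
      omega
    refine ⟨n + Nat.fib (2*j+2), ?_⟩
    rw [gB_shift_even j n hn1 hnle, hcast]
    omega
  · rintro ⟨n', hn'⟩
    rw [hcast] at hn'
    have hge : Nat.fib (2*j+2) + 1 ≤ n' := by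
      by_contra h
      push_neg at h
      have h3 := gB_mono (show n' ≤ Nat.fib (2*j+2) by omega)
      rw [gB_fib_even] at h3
      omega
    set n := n' - Nat.fib (2*j+2) with hndef
    have hnn : n' = n + Nat.fib (2*j+2) := by omega
    have hn1 : 1 ≤ n := by omega
    have hnle : n ≤ Nat.fib (2*j+2) := by
      by_contra h
      push_neg at h
      have hsa := gB_superadd n (Nat.fib (2*j+2))
      rw [gB_fib_even] at hsa
      have h3 := gB_mono (show Nat.fib (2*j+2) + 1 ≤ n by omega)
      rw [hnn] at hn'
      omega
    rw [hnn, gB_shift_even j n hn1 hnle] at hn'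
    exact ⟨n, by omega⟩

lemma T2B (j K : ℕ) (h3 : 3 ≤ K) (hK : K ≤ lucas (2*j+2)) :
    (InB K ↔ InB (K + lucas (2*j+3))) := by
  have hl : (lucas (2*j+2):ℤ) ≤ lucas (2*j+3) := by
    exact_mod_cast lucas_mono (by omega) (by omega)
  have hK' : (K:ℤ) ≤ (lucas (2*j+2) : ℤ) := by exact_mod_cast hK
  have hK3 : (3:ℤ) ≤ (K:ℤ) := by exact_mod_cast h3
  have hcast : ((K + lucas (2*j+3) : ℕ) : ℤ) = (K:ℤ) + lucas (2*j+3) := by push_cast; ring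
  have hfibsucc := gB_fib_even_succ j
  constructor
  · rintro ⟨n, hn1, hn⟩
    have hnle : n ≤ Nat.fib (2*j+2) := by
      by_contra h
      push_neg at h
      have h4 := gB_mono (show Nat.fib (2*j+2) + 1 ≤ n by omega)
      omega
    refine ⟨n + Nat.fib (2*j+2), by omega, ?_⟩
    rw [gB_shift_even j n hn1 hnle, hcast]
    omega
  · rintro ⟨n', hn1', hn'⟩
    rw [hcast] at hn'
    have hge : Nat.fib (2*j+2) + 1 ≤ n' := by
      by_contra h
      push_neg at h
      have h4 := gB_mono (show n' ≤ Nat.fib (2*j+2) by omega)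
      rw [gB_fib_even] at h4
      omega
    set n := n' - Nat.fib (2*j+2) with hndef
    have hnn : n' = n + Nat.fib (2*j+2) := by omega
    have hn1 : 1 ≤ n := by omega
    have hnle : n ≤ Nat.fib (2*j+2) := by
      by_contra h
      push_neg at h
      have hsa := gB_superadd n (Nat.fib (2*j+2))
      rw [gB_fib_even] at hsa
      have h4 := gB_mono (show Nat.fib (2*j+2) + 1 ≤ n by omega)
      rw [hnn] at hn'
      omega
    rw [hnn, gB_shift_even j n hn1 hnle] at hn'
    exact ⟨n, hn1, by omega⟩

lemma E1 (j : ℕ) : ¬ InA (lucas (2*j+3) + 1) := by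
  rintro ⟨n, hn⟩
  have hcast : ((lucas (2*j+3) + 1 : ℕ) : ℤ) = (lucas (2*j+3):ℤ) + 1 := by push_cast; ring
  rw [hcast] at hn
  have hfibsucc := gB_fib_even_succ j
  rcases Nat.lt_or_ge (Nat.fib (2*j+2)) n with h|h
  · have h3 := gB_mono (show Nat.fib (2*j+2) + 1 ≤ n by omega)
    omega
  · have h3 := gB_mono h
    rw [gB_fib_even] at h3
    omega

lemma E2 (j : ℕ) : ¬ InB (lucas (2*j+3) + 2) := by
  rintro ⟨n, hn1, hn⟩
  have hcast : ((lucas (2*j+3) + 2 : ℕ) : ℤ) = (lucas (2*j+3):ℤ) + 2 := by push_cast; ring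
  rw [hcast] at hn
  have hfibsucc := gB_fib_even_succ j
  rcases Nat.lt_or_ge (Nat.fib (2*j+2)) n with h|h
  · have h3 := gB_mono (show Nat.fib (2*j+2) + 1 ≤ n by omega)
    omega
  · have h3 := gB_mono h
    rw [gB_fib_even] at h3
    omega

-- ###### representation machinery
def gval (S : Finset ℤ) : ℝ := ∑ i ∈ S, φ ^ i
def Good (S : Finset ℤ) : Prop := ∀ i ∈ S, i + 1 ∉ S

lemma zpow_phi_pos (i : ℤ) : 0 < φ ^ i := zpow_pos phi_pos i
lemma zpow_phi_lt {i j : ℤ} (h : i < j) : φ ^ i < φ ^ j :=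
  zpow_lt_zpow_right₀ phi_one_lt h
lemma zpow_phi_le {i j : ℤ} (h : i ≤ j) : φ ^ i ≤ φ ^ j :=
  zpow_le_zpow_right₀ (le_of_lt phi_one_lt) h
lemma zpow_phi_rec (i : ℤ) : φ ^ (i+2) = φ ^ (i+1) + φ ^ i := by
  have h1 : φ ^ (i+2) = φ ^ i * φ^(2:ℕ) := by
    rw [← zpow_natCast φ 2, ← zpow_add₀ phi_ne]; norm_num
  have h2 : φ ^ (i+1) = φ ^ i * φ^(1:ℕ) := by
    rw [← zpow_natCast φ 1, ← zpow_add₀ phi_ne]; norm_num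
  rw [h1, h2, pow_one, phi_sq]
  ring
lemma Good.subset {S T : Finset ℤ} (h : T ⊆ S) (hg : Good S) : Good T :=
  fun i hi hc => hg i (h hi) (h hc)
lemma gval_nonneg (S : Finset ℤ) : 0 ≤ gval S :=
  Finset.sum_nonneg fun i _ => le_of_lt (zpow_phi_pos i)
lemma gval_le_of_mem {S : Finset ℤ} {i : ℤ} (h : i ∈ S) : φ ^ i ≤ gval S :=
  Finset.single_le_sum (fun j _ => le_of_lt (zpow_phi_pos j)) h
lemma gval_erase {S : Finset ℤ} {i : ℤ} (h : i ∈ S) :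
    gval (S.erase i) = gval S - φ ^ i := by
  unfold gval
  rw [← Finset.add_sum_erase S _ h]
  ring
lemma gval_lt : ∀ S : Finset ℤ, Good S → ∀ m : ℤ, (∀ i ∈ S, i ≤ m) → gval S < φ^(m+1) := by
  intro S
  induction S using Finset.strongInduction with
  | _ S ih =>
    intro hg m hm
    rcases S.eq_empty_or_nonempty with rfl|hne
    · have : gval ∅ = 0 := by simp [gval]
      rw [this]
      exact zpow_phi_pos _
    · set a := S.max' hne with ha
      have haS := S.max'_mem hne
      have ham : a ≤ m := hm a haS
      have key : ∀ i ∈ S.erase a, i ≤ a - 2 := by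
        intro i hi
        obtain ⟨hia, hiS⟩ := Finset.mem_erase.1 hi
        have hle : i ≤ a := S.le_max' i hiS
        have : i + 1 ≠ a := by
          intro hc
          exact hg i hiS (by rw [hc]; exact haS)
        omega
      have hih := ih (S.erase a) (Finset.erase_ssubset haS)
        (Good.subset (Finset.erase_subset _ _) hg) (a-2) key
      have hrec : φ ^ a + φ ^ (a-1) = φ ^ (a+1) := by
        have := zpow_phi_rec (a-1)
        simp only [show a-1+2 = a+1 by ring, show a-1+1 = a by ring] at this
        linarith
      have he : gval S = φ ^ a + gval (S.erase a) := by
        rw [gval_erase haS]; ring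
      have : gval S < φ ^ a + φ ^ (a-1) := by
        rw [he]
        have : (a-2)+1 = a-1 := by ring
        rw [this] at hih
        linarith
      rw [hrec] at this
      calc gval S < φ ^ (a+1) := this
      _ ≤ φ ^ (m+1) := zpow_phi_le (by omega)
lemma gval_inj_aux : ∀ n : ℕ, ∀ S T : Finset ℤ, S.card + T.card ≤ n →
    Good S → Good T → gval S = gval T → S = T := by
  intro n
  induction n with
  | zero =>
    intro S T hc _ _ _
    have : S = ∅ := Finset.card_eq_zero.1 (by omega)
    have : T = ∅ := Finset.card_eq_zero.1 (by omega)
    simp_all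
  | succ n ih =>
    intro S T hc hgS hgT hval
    rcases S.eq_empty_or_nonempty with rfl|hneS
    · rcases T.eq_empty_or_nonempty with rfl|hneT
      · rfl
      · exfalso
        obtain ⟨i, hi⟩ := hneT
        have h1 := gval_le_of_mem hi
        have h2 : gval (∅ : Finset ℤ) = 0 := by simp [gval]
        have := zpow_phi_pos i
        rw [h2] at hval
        linarith
    · rcases T.eq_empty_or_nonempty with rfl|hneT
      · exfalso
        obtain ⟨i, hi⟩ := hneS
        have h1 := gval_le_of_mem hi
        have h2 : gval (∅ : Finset ℤ) = 0 := by simp [gval]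
        have := zpow_phi_pos i
        rw [h2] at hval
        linarith
      · set a := S.max' hneS
        set b := T.max' hneT
        have haS := S.max'_mem hneS
        have hbT := T.max'_mem hneT
        have hab : a = b := by
          by_contra hne
          rcases lt_or_gt_of_ne hne with h|h
          · have h1 : gval S < φ ^ (a+1) := gval_lt S hgS a (fun i hi => S.le_max' i hi)
            have h2 : φ ^ b ≤ gval T := gval_le_of_mem hbT
            have h3 : φ ^ (a+1) ≤ φ ^ b := zpow_phi_le (by omega)
            linarith
          · have h1 : gval T < φ ^ (b+1) := gval_lt T hgT b (fun i hi => T.le_max' i hi)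
            have h2 : φ ^ a ≤ gval S := gval_le_of_mem haS
            have h3 : φ ^ (b+1) ≤ φ ^ a := zpow_phi_le (by omega)
            linarith
        have hS' : S.card = (S.erase a).card + 1 := by
          rw [Finset.card_erase_of_mem haS]
          have := Finset.card_pos.2 hneS
          omega
        have hT' : T.card = (T.erase b).card + 1 := by
          rw [Finset.card_erase_of_mem hbT]
          have := Finset.card_pos.2 hneT
          omega
        have hval' : gval (S.erase a) = gval (T.erase b) := by
          rw [gval_erase haS, gval_erase hbT, hval]
          show gval T - φ ^ a = gval T - φ ^ b
          rw [hab]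
        have heq := ih (S.erase a) (T.erase b) (by omega)
          (Good.subset (Finset.erase_subset _ _) hgS)
          (Good.subset (Finset.erase_subset _ _) hgT) hval'
        have : S = insert a (S.erase a) := (Finset.insert_erase haS).symm
        rw [this, heq, hab, Finset.insert_erase hbT]
lemma gval_inj {S T : Finset ℤ} (hgS : Good S) (hgT : Good T) (h : gval S = gval T) : S = T :=
  gval_inj_aux (S.card + T.card) S T le_rfl hgS hgT h

lemma phi_irr : Irrational φ := by
  have h5 : Irrational (Real.sqrt 5) := by
    have h := (by norm_num : Nat.Prime 5).irrational_sqrt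
    have e : ((5:ℕ):ℝ) = (5:ℝ) := by norm_num
    rwa [e] at h
  rintro ⟨q, hq⟩
  apply h5
  refine ⟨2*q - 1, ?_⟩
  unfold goldenPhi at hq
  push_cast
  nlinarith [hq, Real.sq_sqrt (show (0:ℝ) ≤ 5 by norm_num)]

lemma nonneg_decomp : ∀ S : Finset ℤ, (∀ i ∈ S, 0 ≤ i) →
    ∃ a b : ℕ, gval S = a*φ + b ∧ ((∃ i ∈ S, 1 ≤ i) → 1 ≤ a) := by
  intro S
  induction S using Finset.induction_on with
  | empty =>
    intro _
    exact ⟨0, 0, by simp [gval], by simp⟩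
  | @insert j S hj ih =>
    intro hpos
    obtain ⟨a, b, he, ha⟩ := ih (fun i hi => hpos i (Finset.mem_insert_of_mem hi))
    have hj0 : 0 ≤ j := hpos j (Finset.mem_insert_self j S)
    have hgv : gval (insert j S) = φ ^ j + gval S := by
      unfold gval
      rw [Finset.sum_insert hj]
    have hzj : φ ^ j = φ ^ (j.toNat : ℕ) := by
      rw [← zpow_natCast]
      congr 1
      omega
    rcases Nat.eq_zero_or_pos j.toNat with h0|hpos'
    · have : φ ^ j = 1 := by rw [hzj, h0]; norm_num
      refine ⟨a, b + 1, by rw [hgv, this, he]; push_cast; ring, ?_⟩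
      rintro ⟨i, hi, hi1⟩
      rcases Finset.mem_insert.1 hi with rfl|hiS
      · omega
      · exact ha ⟨i, hiS, hi1⟩
    · obtain ⟨m, hm⟩ : ∃ m, j.toNat = m + 1 := ⟨j.toNat - 1, by omega⟩
      have hfib : φ ^ j = Nat.fib (m+1) * φ + Nat.fib m := by
        rw [hzj, hm]; exact phi_pow m
      have hfp : 1 ≤ Nat.fib (m+1) := Nat.fib_pos.2 (by omega)
      refine ⟨a + Nat.fib (m+1), b + Nat.fib m, by rw [hgv, hfib, he]; push_cast; ring, ?_⟩
      intro _
      omega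

lemma good_nonneg_int {S : Finset ℤ} (hpos : ∀ i ∈ S, 0 ≤ i) {M : ℕ}
    (hval : gval S = M) : S ⊆ {0} := by
  obtain ⟨a, b, he, ha⟩ := nonneg_decomp S hpos
  by_cases hex : ∃ i ∈ S, 1 ≤ i
  · exfalso
    have ha1 := ha hex
    apply phi_irr
    refine ⟨((M:ℚ) - b)/a, ?_⟩
    have haR : (a:ℝ) ≠ 0 := by positivity
    push_cast
    rw [div_eq_iff haR]
    rw [hval] at he
    linarith [he]
  · intro i hi
    push_neg at hex
    have := hex i hi
    have := hpos i hi
    simp only [Finset.mem_singleton]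
    omega

lemma phi_inv_eq : φ⁻¹ = φ - 1 := by
  apply inv_eq_of_mul_eq_one_right
  nlinarith [phi_sq]
lemma zpow_neg_phi (n : ℕ) : φ ^ (-(n:ℤ)) = (φ-1)^n := by
  rw [zpow_neg, zpow_natCast, ← inv_pow, phi_inv_eq]
lemma lucas_even_real (k : ℕ) : (lucas (2*k) : ℝ) = φ^((2*k:ℕ):ℤ) + φ^(-((2*k:ℕ):ℤ)) := by
  rw [lucas_real, zpow_natCast, zpow_neg_phi]
  congr 1
  rw [show (1-φ) = -(φ-1) by ring, Even.neg_pow ⟨k, by ring⟩]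
lemma lucas_odd_real (k : ℕ) : (lucas (2*k+1) : ℝ) = φ^((2*k+1:ℕ):ℤ) - φ^(-((2*k+1:ℕ):ℤ)) := by
  rw [lucas_real, zpow_natCast, zpow_neg_phi]
  rw [show (1-φ) = -(φ-1) by ring, Odd.neg_pow ⟨k, by ring⟩]
  ring
lemma phi_zpow_split (i : ℤ) : φ ^ i = φ ^ (i-1) + φ ^ (i-2) := by
  have := zpow_phi_rec (i-2)
  simp only [show i-2+2 = i by ring, show i-2+1 = i-1 by ring] at this
  exact this
lemma not_InA_zero : ¬ InA 0 := by
  rintro ⟨n, hn⟩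
  have h0 := gB_zero
  have := gB_mono (Nat.zero_le n)
  omega
lemma InA_one : InA 1 := ⟨0, by rw [gB_zero]; norm_num⟩
lemma not_InB_le_two (K : ℕ) (hK : K ≤ 2) : ¬ InB K := by
  rintro ⟨n, hn1, hn⟩
  have h2 : (3:ℤ) ≤ gB n := by rw [← gB_one]; exact gB_mono hn1
  have h3 : (K:ℤ) ≤ 2 := by exact_mod_cast hK
  omega
lemma not_InA_two : ¬ InA 2 := by
  rintro ⟨n, hn⟩
  rcases Nat.eq_zero_or_pos n with h0|h1
  · rw [h0, gB_zero] at hn; norm_num at hn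
  · have h2 : (3:ℤ) ≤ gB n := by rw [← gB_one]; exact gB_mono h1
    norm_num at hn
    omega
lemma InB_three : InB 3 := ⟨1, le_refl 1, by rw [gB_one]; norm_num⟩

def chain (m : ℤ) (t : ℕ) : Finset ℤ := (Finset.range t).image (fun i : ℕ => m - 1 - 2*(i:ℤ))
lemma chain_mem {m : ℤ} {t : ℕ} {x : ℤ} :
    x ∈ chain m t ↔ ∃ i : ℕ, i < t ∧ x = m - 1 - 2*(i:ℤ) := by
  unfold chain
  simp only [Finset.mem_image, Finset.mem_range]
  constructor
  · rintro ⟨i, hi, rfl⟩; exact ⟨i, hi, rfl⟩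
  · rintro ⟨i, hi, rfl⟩; exact ⟨i, hi, rfl⟩
lemma chain_val (m : ℤ) : ∀ t : ℕ, gval (chain m t) = φ ^ m - φ ^ (m - 2*(t:ℤ)) := by
  intro t
  induction t with
  | zero =>
    have : chain m 0 = ∅ := by unfold chain; simp
    rw [this]
    have : gval ∅ = 0 := by simp [gval]
    rw [this]
    norm_num
  | succ t ih =>
    have hinsert : chain m (t+1) = insert (m - 1 - 2*(t:ℤ)) (chain m t) := by
      apply Finset.ext
      intro x
      rw [chain_mem, Finset.mem_insert, chain_mem]
      constructor
      · rintro ⟨i, hi, rfl⟩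
        rcases Nat.lt_or_ge i t with h|h
        · exact Or.inr ⟨i, h, rfl⟩
        · have : i = t := by omega
          rw [this]; exact Or.inl rfl
      · rintro (rfl|⟨i, hi, rfl⟩)
        · exact ⟨t, by omega, rfl⟩
        · exact ⟨i, by omega, rfl⟩
    have hnotmem : (m - 1 - 2*(t:ℤ)) ∉ chain m t := by
      rw [chain_mem]
      rintro ⟨i, hi, he⟩
      have : (i:ℤ) < t := by exact_mod_cast hi
      omega
    rw [hinsert]
    unfold gval at *
    rw [Finset.sum_insert hnotmem, ih]
    have split := phi_zpow_split (m - 2*(t:ℤ))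
    have e1 : m - 2*(t:ℤ) - 1 = m - 1 - 2*(t:ℤ) := by ring
    have e2 : m - 2*(t:ℤ) - 2 = m - 2*((t+1:ℕ):ℤ) := by push_cast; ring
    rw [e1, e2] at split
    linarith

lemma lucas_trichotomy : ∀ N : ℕ, 3 ≤ N →
    ∃ k : ℕ, 1 ≤ k ∧ lucas (2*k) ≤ N ∧ N < lucas (2*k+2) := by
  intro N
  induction N with
  | zero => omega
  | succ n ih =>
    intro h3
    rcases Nat.lt_or_ge n 3 with h|h
    · have hn : n = 2 := by omega
      subst hn
      refine ⟨1, by omega, ?_, ?_⟩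
      · have : lucas (2*1) = 3 := rfl
        omega
      · have : lucas (2*1+2) = 7 := rfl
        omega
    · obtain ⟨k, hk1, hk2, hk3⟩ := ih h
      rcases Nat.lt_or_ge (n+1) (lucas (2*k+2)) with h'|h'
      · exact ⟨k, hk1, by omega, h'⟩
      · refine ⟨k+1, by omega, ?_, ?_⟩
        · have e2 : 2*(k+1) = 2*k+2 := by omega
          rw [e2]
          omega
        · have hst : lucas (2*k+2) < lucas (2*(k+1)+2) :=
            lucas_strict_mono (by omega) (by omega)
          omega

def Clauses (N : ℕ) (S : Finset ℤ) : Prop :=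
  Good S ∧ gval S = N ∧ S.Nonempty ∧
  (∀ j : ℕ, N ≤ lucas (2*j+1) → ∀ i ∈ S, -(2*(j:ℤ)) ≤ i ∧ i ≤ 2*(j:ℤ)) ∧
  (∀ j : ℕ, N < lucas (2*j+2) → ∀ i ∈ S, -(2*(j:ℤ))-2 ≤ i ∧ i ≤ 2*(j:ℤ)+1) ∧
  (∃ m, m ∈ S ∧ (∀ i ∈ S, m ≤ i) ∧ m ≤ 0 ∧ Even m) ∧
  ((0:ℤ) ∈ S ↔ InA N) ∧
  (((1:ℤ) ∈ S ∧ (-1:ℤ) ∉ S) ↔ InB (N+1))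

lemma gval_pair (j : ℕ) :
    gval ({(2*(j:ℤ)+2), -(2*(j:ℤ)+2)} : Finset ℤ) = lucas (2*j+2) := by
  have hne : (2*(j:ℤ)+2) ≠ -(2*(j:ℤ)+2) := by omega
  unfold gval
  rw [Finset.sum_pair hne]
  have := lucas_even_real (j+1)
  have e1 : 2*(j+1) = 2*j+2 := by omega
  rw [e1] at this
  have e2 : (((2*j+2:ℕ)):ℤ) = 2*(j:ℤ)+2 := by push_cast; ring
  rw [e2] at this
  linarith

lemma step_case1zero (j : ℕ) :
    Clauses (lucas (2*j+2)) {(2*(j:ℤ)+2), -(2*(j:ℤ)+2)} := by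
  have hmem : ∀ x : ℤ, x ∈ ({(2*(j:ℤ)+2), -(2*(j:ℤ)+2)} : Finset ℤ) ↔
      x = 2*(j:ℤ)+2 ∨ x = -(2*(j:ℤ)+2) := by
    intro x
    simp [Finset.mem_insert, Finset.mem_singleton]
  refine ⟨?_, ?_, ?_, ?_, ?_, ?_, ?_, ?_⟩
  · intro i hi hc
    rw [hmem] at hi hc
    omega
  · exact gval_pair j
  · exact ⟨2*(j:ℤ)+2, by rw [hmem]; omega⟩
  · intro j' hj' i hi
    have hjj : j + 1 ≤ j' := by
      by_contra hc
      push_neg at hc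
      have h1 : lucas (2*j'+1) ≤ lucas (2*j+1) := lucas_mono (by omega) (by omega)
      have h2 : lucas (2*j+1) < lucas (2*j+2) := lucas_strict_mono (by omega) (by omega)
      omega
    rw [hmem] at hi
    have : (j:ℤ) + 1 ≤ j' := by exact_mod_cast hjj
    omega
  · intro j' hj' i hi
    have hjj : j + 1 ≤ j' := by
      by_contra hc
      push_neg at hc
      have h1 : lucas (2*j'+2) ≤ lucas (2*j+2) := lucas_mono (by omega) (by omega)
      omega
    rw [hmem] at hi
    have : (j:ℤ) + 1 ≤ j' := by exact_mod_cast hjj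
    omega
  · refine ⟨-(2*(j:ℤ)+2), by rw [hmem]; omega, ?_, by omega, ⟨-((j:ℤ)+1), by ring⟩⟩
    intro i hi
    rw [hmem] at hi
    omega
  · constructor
    · intro h0
      rw [hmem] at h0
      omega
    · intro hA
      exfalso
      have := (T1A j 0 (by omega)).2 (by simpa using hA)
      exact not_InA_zero this
  · constructor
    · rintro ⟨h1, _⟩
      rw [hmem] at h1
      omega
    · intro hB
      exfalso
      have := (T1B j 1 (by omega) (by omega)).2 (by simpa [Nat.add_comm] using hB)
      exact not_InB_le_two 1 (by omega) this

lemma step_case1 (j M : ℕ) (hM1 : 1 ≤ M) (hMle : M ≤ lucas (2*j+1))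
    (S : Finset ℤ) (hS : Clauses M S) :
    Clauses (M + lucas (2*j+2)) (S ∪ {(2*(j:ℤ)+2), -(2*(j:ℤ)+2)}) := by
  obtain ⟨hgood, hval, hne, hb1, hb2, ⟨m, hmS, hmin, hm0, hmeven⟩, hA, hB⟩ := hS
  have hbd : ∀ i ∈ S, -(2*(j:ℤ)) ≤ i ∧ i ≤ 2*(j:ℤ) := hb1 j hMle
  have hmem : ∀ x : ℤ, x ∈ (S ∪ {(2*(j:ℤ)+2), -(2*(j:ℤ)+2)} : Finset ℤ) ↔
      x ∈ S ∨ x = 2*(j:ℤ)+2 ∨ x = -(2*(j:ℤ)+2) := by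
    intro x
    simp only [Finset.mem_union, Finset.mem_insert, Finset.mem_singleton]
  have hdisj : Disjoint S ({(2*(j:ℤ)+2), -(2*(j:ℤ)+2)} : Finset ℤ) := by
    rw [Finset.disjoint_left]
    intro x hx hc
    have := hbd x hx
    simp only [Finset.mem_insert, Finset.mem_singleton] at hc
    omega
  refine ⟨?_, ?_, ?_, ?_, ?_, ?_, ?_, ?_⟩
  · intro i hi hc
    rw [hmem] at hi hc
    rcases hi with hi|hi|hi
    · rcases hc with hc|hc|hc
      · exact hgood i hi hc
      · have := hbd i hi; omega
      · have := hbd i hi; omega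
    · rcases hc with hc|hc|hc
      · have := hbd (i+1) hc; omega
      · omega
      · omega
    · rcases hc with hc|hc|hc
      · have := hbd (i+1) hc; omega
      · omega
      · omega
  · unfold gval
    rw [Finset.sum_union hdisj]
    have h1 : ∑ i ∈ S, φ ^ i = M := hval
    have h2 := gval_pair j
    unfold gval at h2
    rw [h1, h2]
    push_cast
    ring
  · exact ⟨2*(j:ℤ)+2, by rw [hmem]; omega⟩
  · intro j' hj' i hi
    have hjj : j + 1 ≤ j' := by
      by_contra hc
      push_neg at hc
      have h1 : lucas (2*j'+1) ≤ lucas (2*j+1) := lucas_mono (by omega) (by omega)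
      have h2 : lucas (2*j+1) < lucas (2*j+2) := lucas_strict_mono (by omega) (by omega)
      omega
    have hjj' : (j:ℤ) + 1 ≤ j' := by exact_mod_cast hjj
    rw [hmem] at hi
    rcases hi with hi|hi|hi
    · have := hbd i hi; omega
    · omega
    · omega
  · intro j' hj' i hi
    have hjj : j + 1 ≤ j' := by
      by_contra hc
      push_neg at hc
      have h1 : lucas (2*j'+2) ≤ lucas (2*j+2) := lucas_mono (by omega) (by omega)
      omega
    have hjj' : (j:ℤ) + 1 ≤ j' := by exact_mod_cast hjj
    rw [hmem] at hi
    rcases hi with hi|hi|hi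
    · have := hbd i hi; omega
    · omega
    · omega
  · refine ⟨-(2*(j:ℤ)+2), by rw [hmem]; omega, ?_, by omega, ⟨-((j:ℤ)+1), by ring⟩⟩
    intro i hi
    rw [hmem] at hi
    rcases hi with hi|hi|hi
    · have := hbd i hi; omega
    · omega
    · omega
  · have h0 : (0:ℤ) ∈ S ∪ {(2*(j:ℤ)+2), -(2*(j:ℤ)+2)} ↔ (0:ℤ) ∈ S := by
      rw [hmem]
      constructor
      · rintro (h|h|h)
        · exact h
        · omega
        · omega
      · intro h; exact Or.inl h
    rw [h0, hA]
    have := T1A j M hMle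
    rw [this]
  · have h1 : (1:ℤ) ∈ S ∪ {(2*(j:ℤ)+2), -(2*(j:ℤ)+2)} ↔ (1:ℤ) ∈ S := by
      rw [hmem]
      constructor
      · rintro (h|h|h)
        · exact h
        · omega
        · omega
      · intro h; exact Or.inl h
    have hm1 : (-1:ℤ) ∈ S ∪ {(2*(j:ℤ)+2), -(2*(j:ℤ)+2)} ↔ (-1:ℤ) ∈ S := by
      rw [hmem]
      constructor
      · rintro (h|h|h)
        · exact h
        · omega
        · omega
      · intro h; exact Or.inl h
    rw [h1, hm1, hB]
    have := T1B j (M+1) (by omega) (by omega)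
    rw [show M + 1 + lucas (2*j+2) = M + lucas (2*j+2) + 1 by omega] at this
    rw [this]

lemma good_singleton_zero : Good ({0} : Finset ℤ) := by
  intro i hi hc
  simp only [Finset.mem_singleton] at hi hc
  omega
lemma gval_singleton_zero : gval ({0} : Finset ℤ) = 1 := by
  unfold gval
  simp
lemma gval_pair2 (j : ℕ) :
    gval ({(2*(j:ℤ)+3), -(2*(j:ℤ)+4)} : Finset ℤ) = φ^(2*(j:ℤ)+3) + φ^(-(2*(j:ℤ))-4) := by
  have hne : (2*(j:ℤ)+3) ≠ -(2*(j:ℤ)+4) := by omega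
  unfold gval
  rw [Finset.sum_pair hne]
  congr 1
  congr 1
  ring

lemma step_case2 (j M : ℕ) (hM1 : 1 ≤ M) (hMlt : M < lucas (2*j+2))
    (S : Finset ℤ) (hS : Clauses M S) :
    ∃ T, Clauses (M + lucas (2*j+3)) T := by
  obtain ⟨hgood, hval, hne, hb1, hb2, ⟨m, hmS, hmin, hm0, hmeven⟩, hA, hB⟩ := hS
  have hbd : ∀ i ∈ S, -(2*(j:ℤ))-2 ≤ i ∧ i ≤ 2*(j:ℤ)+1 := hb2 j hMlt
  obtain ⟨c, hc⟩ := hmeven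
  have hmbd := hbd m hmS
  set t : ℕ := (c + (j:ℤ) + 1).toNat with htdef
  have htz : (t:ℤ) = c + (j:ℤ) + 1 := Int.toNat_of_nonneg (by omega)
  have hmt : m - 2*(t:ℤ) = -(2*(j:ℤ))-2 := by omega
  have herase : ∀ x ∈ S.erase m, m+2 ≤ x ∧ x ≤ 2*(j:ℤ)+1 := by
    intro x hx
    obtain ⟨hxne, hxS⟩ := Finset.mem_erase.1 hx
    have h1 := hmin x hxS
    have h2 := hbd x hxS
    have h3 : x ≠ m + 1 := by
      intro hcon
      exact hgood m hmS (by rw [← hcon]; exact hxS)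
    omega
  have hchain : ∀ x ∈ chain m t, (∃ i : ℕ, x = m - 1 - 2*(i:ℤ)) ∧
      -(2*(j:ℤ))-1 ≤ x ∧ x ≤ m-1 := by
    intro x hx
    obtain ⟨i, hi, rfl⟩ := chain_mem.1 hx
    have : (i:ℤ) < t := by exact_mod_cast hi
    exact ⟨⟨i, rfl⟩, by omega, by omega⟩
  refine ⟨(S.erase m ∪ chain m t) ∪ {(2*(j:ℤ)+3), -(2*(j:ℤ)+4)}, ?_⟩
  set T := (S.erase m ∪ chain m t) ∪ ({(2*(j:ℤ)+3), -(2*(j:ℤ)+4)} : Finset ℤ) with hTdef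
  have hmemT : ∀ x : ℤ, x ∈ T ↔
      x ∈ S.erase m ∨ x ∈ chain m t ∨ x = 2*(j:ℤ)+3 ∨ x = -(2*(j:ℤ)+4) := by
    intro x
    simp only [hTdef, Finset.mem_union, Finset.mem_insert, Finset.mem_singleton]
    tauto
  have hdisj1 : Disjoint (S.erase m) (chain m t) := by
    rw [Finset.disjoint_left]
    intro x hx hc'
    have := herase x hx
    have := (hchain x hc').2
    omega
  have hdisj2 : Disjoint (S.erase m ∪ chain m t) ({(2*(j:ℤ)+3), -(2*(j:ℤ)+4)} : Finset ℤ) := by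
    rw [Finset.disjoint_left]
    intro x hx hc'
    simp only [Finset.mem_insert, Finset.mem_singleton] at hc'
    rcases Finset.mem_union.1 hx with h|h
    · have := herase x h; omega
    · have := (hchain x h).2; omega
  -- the value computation
  have hvalT : gval T = (M:ℝ) + lucas (2*j+3) := by
    have e0 : gval T = gval (S.erase m ∪ chain m t) + gval ({(2*(j:ℤ)+3), -(2*(j:ℤ)+4)} : Finset ℤ) := by
      unfold gval
      rw [hTdef, Finset.sum_union hdisj2]
    have e1 : gval (S.erase m ∪ chain m t) = gval (S.erase m) + gval (chain m t) := by
      unfold gval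
      rw [Finset.sum_union hdisj1]
    have e2 : gval (S.erase m) = (M:ℝ) - φ ^ m := by
      rw [gval_erase hmS, hval]
    have e3 : gval (chain m t) = φ ^ m - φ ^ (-(2*(j:ℤ))-2) := by
      rw [chain_val m t, hmt]
    have e4 := gval_pair2 j
    have esplit := phi_zpow_split (-(2*(j:ℤ))-2)
    have eodd := lucas_odd_real (j+1)
    have ee : 2*(j+1)+1 = 2*j+3 := by omega
    rw [ee] at eodd
    have ee2 : (((2*j+3:ℕ)):ℤ) = 2*(j:ℤ)+3 := by push_cast; ring
    rw [ee2] at eodd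
    have ee3 : -(2*(j:ℤ))-2-1 = -(2*(j:ℤ)+3) := by ring
    have ee4 : -(2*(j:ℤ))-2-2 = -(2*(j:ℤ))-4 := by ring
    rw [ee3, ee4] at esplit
    rw [e0, e1, e2, e3, e4]
    rw [eodd]
    linarith
  -- Goodness
  have hgoodT : Good T := by
    intro i hi hcon
    rw [hmemT] at hi hcon
    rcases hi with hi|hi|hi|hi
    · have hie := herase i hi
      rcases hcon with hc'|hc'|hc'|hc'
      · exact hgood i (Finset.mem_of_mem_erase hi) (Finset.mem_of_mem_erase hc')
      · have := (hchain (i+1) hc').2; omega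
      · omega
      · omega
    · obtain ⟨⟨a, ha⟩, hib⟩ := hchain i hi
      rcases hcon with hc'|hc'|hc'|hc'
      · have := herase (i+1) hc'; omega
      · obtain ⟨⟨b, hb⟩, hib2⟩ := hchain (i+1) hc'
        omega
      · omega
      · omega
    · rcases hcon with hc'|hc'|hc'|hc'
      · have := herase (i+1) hc'; omega
      · have := (hchain (i+1) hc').2; omega
      · omega
      · omega
    · rcases hcon with hc'|hc'|hc'|hc'
      · have := herase (i+1) hc'; omega
      · have := (hchain (i+1) hc').2; omega
      · omega
      · omega
  -- membership of 0, 1, -1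
  have h0T : (0:ℤ) ∈ T ↔ ((0:ℤ) ∈ S ∧ m ≠ 0) := by
    rw [hmemT]
    constructor
    · rintro (h|h|h|h)
      · obtain ⟨h1, h2⟩ := Finset.mem_erase.1 h
        exact ⟨h2, fun hc' => h1 (by rw [hc'])⟩
      · obtain ⟨⟨a, ha⟩, hb⟩ := hchain 0 h
        omega
      · omega
      · omega
    · rintro ⟨h1, h2⟩
      exact Or.inl (Finset.mem_erase.2 ⟨fun hc' => h2 (by omega), h1⟩)
  have h1T : (1:ℤ) ∈ T ↔ (1:ℤ) ∈ S := by
    rw [hmemT]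
    constructor
    · rintro (h|h|h|h)
      · exact Finset.mem_of_mem_erase h
      · have := (hchain 1 h).2
        omega
      · omega
      · omega
    · intro h
      exact Or.inl (Finset.mem_erase.2 ⟨by omega, h⟩)
  have hm1T : (-1:ℤ) ∈ T ↔ ((-1:ℤ) ∈ S ∨ m = 0) := by
    rw [hmemT]
    constructor
    · rintro (h|h|h|h)
      · exact Or.inl (Finset.mem_of_mem_erase h)
      · obtain ⟨⟨a, ha⟩, hb⟩ := hchain (-1) h
        right
        omega
      · omega
      · omega
    · rintro (h|h)
      · exact Or.inl (Finset.mem_erase.2 ⟨by omega, h⟩)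
      · right; left
        rw [chain_mem]
        exact ⟨0, by omega, by omega⟩
  refine ⟨hgoodT, by rw [hvalT]; push_cast; ring, ?_, ?_, ?_, ?_, ?_, ?_⟩
  · exact ⟨2*(j:ℤ)+3, by rw [hmemT]; omega⟩
  · -- bound clause 1
    intro j' hj' i hi
    have hjj : j + 2 ≤ j' := by
      by_contra hcon
      push_neg at hcon
      have h1 : lucas (2*j'+1) ≤ lucas (2*j+3) := lucas_mono (by omega) (by omega)
      have h2 : lucas (2*j+3) < M + lucas (2*j+3) := by omega
      omega
    have hjj' : (j:ℤ) + 2 ≤ j' := by exact_mod_cast hjj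
    rw [hmemT] at hi
    rcases hi with hi|hi|hi|hi
    · have := herase i hi; omega
    · have := (hchain i hi).2; omega
    · omega
    · omega
  · -- bound clause 2
    intro j' hj' i hi
    have hjj : j + 1 ≤ j' := by
      by_contra hcon
      push_neg at hcon
      have h1 : lucas (2*j'+2) ≤ lucas (2*j+2) := lucas_mono (by omega) (by omega)
      have h2 : lucas (2*j+2) ≤ lucas (2*j+3) := lucas_mono (by omega) (by omega)
      omega
    have hjj' : (j:ℤ) + 1 ≤ j' := by exact_mod_cast hjj
    rw [hmemT] at hi
    rcases hi with hi|hi|hi|hi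
    · have := herase i hi; omega
    · have := (hchain i hi).2; omega
    · omega
    · omega
  · -- min clause
    refine ⟨-(2*(j:ℤ)+4), by rw [hmemT]; omega, ?_, by omega, ⟨-((j:ℤ)+2), by ring⟩⟩
    intro i hi
    rw [hmemT] at hi
    rcases hi with hi|hi|hi|hi
    · have := herase i hi; omega
    · have := (hchain i hi).2; omega
    · omega
    · omega
  · -- A clause
    rcases eq_or_ne m 0 with hm00|hmne
    · -- m = 0 : S = {0}, M = 1
      have hS0 : S = {0} := by
        have hsub : S ⊆ {0} := by
          apply good_nonneg_int (M := M) _ hval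
          intro i hi
          have := hmin i hi
          omega
        apply Finset.Subset.antisymm hsub
        intro x hx
        simp only [Finset.mem_singleton] at hx
        rw [hx, ← hm00]
        exact hmS
      have hM1' : M = 1 := by
        have : gval S = 1 := by rw [hS0]; exact gval_singleton_zero
        rw [hval] at this
        have : M = (1:ℕ) := by exact_mod_cast this
        omega
      rw [h0T]
      constructor
      · rintro ⟨_, h⟩
        exact absurd hm00 h
      · intro hIA
        exfalso
        have : M + lucas (2*j+3) = lucas (2*j+3) + 1 := by omega
        rw [this] at hIA
        exact E1 j hIA
    · rw [h0T]
      have hM2 : 2 ≤ M := by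
        by_contra hcon
        push_neg at hcon
        have hM1'' : M = 1 := by omega
        have : gval S = gval ({0} : Finset ℤ) := by
          rw [hval, gval_singleton_zero, hM1'']
          norm_num
        have := gval_inj hgood good_singleton_zero this
        apply hmne
        rw [this] at hmS
        simpa using hmS
      have hiff := T2A j M hM2 hMlt
      constructor
      · rintro ⟨h, _⟩
        exact hiff.1 (hA.1 h)
      · intro h
        exact ⟨hA.2 (hiff.2 h), hmne⟩
  · -- B clause
    rcases eq_or_ne m 0 with hm00|hmne
    · have hS0 : S = {0} := by
        have hsub : S ⊆ {0} := by
          apply good_nonneg_int (M := M) _ hval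
          intro i hi
          have := hmin i hi
          omega
        apply Finset.Subset.antisymm hsub
        intro x hx
        simp only [Finset.mem_singleton] at hx
        rw [hx, ← hm00]
        exact hmS
      have hM1' : M = 1 := by
        have : gval S = 1 := by rw [hS0]; exact gval_singleton_zero
        rw [hval] at this
        have : M = (1:ℕ) := by exact_mod_cast this
        omega
      rw [h1T, hS0]
      constructor
      · rintro ⟨h, _⟩
        simp at h
      · intro hIB
        exfalso
        have : M + lucas (2*j+3) + 1 = lucas (2*j+3) + 2 := by omega
        rw [this] at hIB
        exact E2 j hIB
    · rw [h1T, hm1T]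
      have hM2 : 2 ≤ M := by
        by_contra hcon
        push_neg at hcon
        have hM1'' : M = 1 := by omega
        have : gval S = gval ({0} : Finset ℤ) := by
          rw [hval, gval_singleton_zero, hM1'']
          norm_num
        have := gval_inj hgood good_singleton_zero this
        apply hmne
        rw [this] at hmS
        simpa using hmS
      have hiff := T2B j (M+1) (by omega) (by omega)
      rw [show M + 1 + lucas (2*j+3) = M + lucas (2*j+3) + 1 by omega] at hiff
      constructor
      · rintro ⟨h1, h2⟩
        exact hiff.1 (hB.1 ⟨h1, fun hc' => h2 (Or.inl hc')⟩)
      · intro h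
        obtain ⟨h1, h2⟩ := hB.2 (hiff.2 h)
        exact ⟨h1, by rintro (h'|h') <;> [exact h2 h'; exact hmne h']⟩

lemma lucas_add2 (n : ℕ) : lucas (n+2) = lucas (n+1) + lucas n := rfl

lemma clauses_one : Clauses 1 ({0} : Finset ℤ) := by
  refine ⟨good_singleton_zero, by rw [gval_singleton_zero]; norm_num,
    ⟨0, Finset.mem_singleton_self 0⟩, ?_, ?_, ?_, ?_, ?_⟩
  · intro j' _ i hi
    simp only [Finset.mem_singleton] at hi
    omega
  · intro j' _ i hi
    simp only [Finset.mem_singleton] at hi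
    omega
  · exact ⟨0, Finset.mem_singleton_self 0, by intro i hi; simp at hi; omega, le_refl 0, ⟨0, by ring⟩⟩
  · simp only [Finset.mem_singleton]
    constructor
    · intro _; exact InA_one
    · intro _; trivial
  · simp only [Finset.mem_singleton]
    constructor
    · rintro ⟨h, _⟩; omega
    · intro h; exact absurd h (not_InB_le_two 2 (by omega))

lemma clauses_two : Clauses 2 ({1, -2} : Finset ℤ) := by
  have hmem : ∀ x : ℤ, x ∈ ({1, -2} : Finset ℤ) ↔ x = 1 ∨ x = -2 := by
    intro x
    simp [Finset.mem_insert, Finset.mem_singleton]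
  refine ⟨?_, ?_, ⟨1, by rw [hmem]; omega⟩, ?_, ?_, ?_, ?_, ?_⟩
  · intro i hi hc
    rw [hmem] at hi hc
    omega
  · unfold gval
    have hne : (1:ℤ) ≠ -2 := by omega
    rw [Finset.sum_pair hne]
    have h1 : φ ^ (1:ℤ) = φ := zpow_one φ
    have h2 : φ ^ (-2:ℤ) = (φ-1)^2 := by
      have := zpow_neg_phi 2
      norm_num at this
      exact this
    rw [h1, h2]
    push_cast
    nlinarith [phi_sq]
  · intro j' hj' i hi
    have hj1 : 1 ≤ j' := by
      by_contra hcon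
      push_neg at hcon
      have : j' = 0 := by omega
      rw [this] at hj'
      have : lucas (2*0+1) = 1 := rfl
      omega
    have : (1:ℤ) ≤ j' := by exact_mod_cast hj1
    rw [hmem] at hi
    omega
  · intro j' hj' i hi
    rw [hmem] at hi
    have : (0:ℤ) ≤ j' := by positivity
    omega
  · refine ⟨-2, by rw [hmem]; omega, ?_, by omega, ⟨-1, by ring⟩⟩
    intro i hi
    rw [hmem] at hi
    omega
  · constructor
    · intro h
      rw [hmem] at h
      omega
    · intro h
      exact absurd h not_InA_two
  · constructor
    · intro _
      exact InB_three
    · intro _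
      refine ⟨by rw [hmem]; omega, ?_⟩
      rw [hmem]
      omega

lemma main_rep : ∀ N : ℕ, 1 ≤ N → ∃ S, Clauses N S := by
  intro N
  induction N using Nat.strong_induction_on with
  | _ N ih =>
    intro hN1
    rcases Nat.lt_or_ge N 3 with hsmall|h3
    · interval_cases N
      · exact ⟨_, clauses_one⟩
      · exact ⟨_, clauses_two⟩
    · obtain ⟨k, hk1, hk2, hk3⟩ := lucas_trichotomy N h3
      obtain ⟨j, rfl⟩ : ∃ j, k = j + 1 := ⟨k - 1, by omega⟩
      have e1 : 2*(j+1) = 2*j+2 := by omega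
      have e2 : 2*(j+1)+2 = 2*j+4 := by omega
      rw [e1] at hk2
      rw [e2] at hk3
      have hrec1 : lucas (2*j+3) = lucas (2*j+2) + lucas (2*j+1) := by
        have h := lucas_add2 (2*j+1)
        simp only [show 2*j+1+2 = 2*j+3 from by omega, show 2*j+1+1 = 2*j+2 from by omega] at h
        exact h
      have hrec2 : lucas (2*j+4) = lucas (2*j+3) + lucas (2*j+2) := by
        have h := lucas_add2 (2*j+2)
        simp only [show 2*j+2+2 = 2*j+4 from by omega, show 2*j+2+1 = 2*j+3 from by omega] at h
        exact h
      have hlucpos := lucas_pos (2*j+2)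
      rcases Nat.lt_or_ge (lucas (2*j+3)) N with hcase2|hcase
      rotate_left
      · -- case 1
        set M := N - lucas (2*j+2) with hMdef
        have hNM : N = M + lucas (2*j+2) := by omega
        have hMle : M ≤ lucas (2*j+1) := by omega
        rcases Nat.eq_zero_or_pos M with h0|hMpos
        · rw [hNM, h0, Nat.zero_add]
          exact ⟨_, step_case1zero j⟩
        · obtain ⟨S, hS⟩ := ih M (by omega) hMpos
          rw [hNM]
          exact ⟨_, step_case1 j M hMpos hMle S hS⟩
      · -- case 2
        have hcase := hcase2
        have hlucpos3 := lucas_pos (2*j+3)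
        set M := N - lucas (2*j+3) with hMdef
        have hNM : N = M + lucas (2*j+3) := by omega
        have hM1 : 1 ≤ M := by omega
        have hMlt : M < lucas (2*j+2) := by omega
        obtain ⟨S, hS⟩ := ih M (by omega) hM1
        obtain ⟨T, hT⟩ := step_case2 j M hM1 hMlt S hS
        rw [hNM]
        exact ⟨T, hT⟩

-- ###### interface with Finsupp representations
lemma phiRep_val {N : ℕ} {c : ℤ →₀ ℕ} (h : IsPhiRep N c) : gval c.support = N := by
  obtain ⟨hle, hval⟩ := h
  rw [← hval]
  simp only [Finsupp.sum]
  unfold gval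
  apply Finset.sum_congr rfl
  intro i hi
  have h1 : c i ≠ 0 := Finsupp.mem_support_iff.1 hi
  have h2 : c i = 1 := by have := hle i; omega
  rw [h2]
  norm_num

lemma cons_good {c : ℤ →₀ ℕ} (h : ∀ i : ℤ, c (i+1) * c i = 0) : Good c.support := by
  intro i hi hc
  have h1 := Finsupp.mem_support_iff.1 hi
  have h2 := Finsupp.mem_support_iff.1 hc
  rcases Nat.mul_eq_zero.1 (h i) with h4|h4
  · exact h2 h4
  · exact h1 h4

def indic (S : Finset ℤ) : ℤ →₀ ℕ :=
  ⟨S, fun i => if i ∈ S then 1 else 0, by intro a; by_cases h : a ∈ S <;> simp [h]⟩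
lemma indic_apply (S : Finset ℤ) (i : ℤ) : indic S i = if i ∈ S then 1 else 0 := rfl
lemma indic_support (S : Finset ℤ) : (indic S).support = S := rfl
lemma indic_le (S : Finset ℤ) (i : ℤ) : indic S i ≤ 1 := by
  rw [indic_apply]
  by_cases h : i ∈ S <;> simp [h]
lemma indic_sum (S : Finset ℤ) :
    ((indic S).sum fun i a => (a:ℝ) * goldenPhi ^ i) = gval S := by
  simp only [Finsupp.sum, indic_support]
  unfold gval
  apply Finset.sum_congr rfl
  intro i hi
  rw [indic_apply, if_pos hi]
  norm_num

lemma indic_isBergman {N : ℕ} {S : Finset ℤ} (hcl : Clauses N S) : IsBergman N (indic S) := by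
  obtain ⟨hgood, hval, _⟩ := hcl
  refine ⟨⟨indic_le S, by rw [indic_sum, hval]⟩, ?_⟩
  intro i
  rw [indic_apply, indic_apply]
  by_cases h1 : (i+1) ∈ S
  · by_cases h2 : i ∈ S
    · exact absurd h1 (hgood i h2)
    · simp [h2]
  · simp [h1]

lemma adm_to_InB {N : ℕ} (hN : 1 ≤ N)
    (h : ∃ c, IsAdmissible N c ∧ c 1 = 1 ∧ c 0 = 1) : InB N := by
  obtain ⟨c, ⟨⟨hle, hval⟩, hcons⟩, h1, h0⟩ := h
  have h0s : (0:ℤ) ∈ c.support := Finsupp.mem_support_iff.2 (by omega)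
  have h1s : (1:ℤ) ∈ c.support := Finsupp.mem_support_iff.2 (by omega)
  have hvs : gval c.support = N := phiRep_val ⟨hle, hval⟩
  have hge : (1:ℝ) + φ ≤ gval c.support := by
    unfold gval
    have hsub : ({0, 1} : Finset ℤ) ⊆ c.support := by
      intro x hx
      simp only [Finset.mem_insert, Finset.mem_singleton] at hx
      rcases hx with rfl|rfl
      · exact h0s
      · exact h1s
    have hmono := Finset.sum_le_sum_of_subset_of_nonneg hsub
      (fun i _ _ => le_of_lt (zpow_phi_pos i))
    have hpair : ∑ i ∈ ({0, 1} : Finset ℤ), φ ^ i = 1 + φ := by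
      rw [Finset.sum_pair (by omega : (0:ℤ) ≠ 1)]
      norm_num
    rw [hpair] at hmono
    exact hmono
  have hN2 : 2 ≤ N := by
    by_contra hc
    push_neg at hc
    have hN1' : N = 1 := by omega
    rw [hN1'] at hvs
    rw [hvs] at hge
    norm_num at hge
    linarith [phi_one_lt]
  set S' := c.support.erase 0 with hS'def
  have hgS' : Good S' := by
    intro i hi hc'
    obtain ⟨hine, hiS⟩ := Finset.mem_erase.1 hi
    have hc'S := Finset.mem_of_mem_erase hc'
    have h1' := Finsupp.mem_support_iff.1 hiS
    have h2' := Finsupp.mem_support_iff.1 hc'S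
    rcases Nat.mul_eq_zero.1 (hcons i hine) with h4|h4
    · exact h2' h4
    · exact h1' h4
  have hvS' : gval S' = ((N - 1 : ℕ) : ℝ) := by
    rw [hS'def, gval_erase h0s, hvs]
    have he : φ ^ (0:ℤ) = 1 := by norm_num
    rw [he, Nat.cast_sub (by omega : 1 ≤ N)]
    norm_num
  have h1S' : (1:ℤ) ∈ S' := Finset.mem_erase.2 ⟨by omega, h1s⟩
  have hm1S' : (-1:ℤ) ∉ S' := by
    intro hc'
    have hm1 : (-1:ℤ) ∈ c.support := Finset.mem_of_mem_erase hc'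
    have h2' := Finsupp.mem_support_iff.1 hm1
    rcases Nat.mul_eq_zero.1 (hcons (-1) (by omega)) with h4|h4
    · rw [show (-1:ℤ)+1 = 0 by ring] at h4
      omega
    · exact h2' h4
  obtain ⟨T, hT⟩ := main_rep (N-1) (by omega)
  have hTS : S' = T := gval_inj hgS' hT.1 (by rw [hvS', hT.2.1])
  have hBc := hT.2.2.2.2.2.2.2
  rw [show N-1+1 = N by omega] at hBc
  exact hBc.1 ⟨by rw [← hTS]; exact h1S', by rw [← hTS]; exact hm1S'⟩

lemma InB_to_adm {N : ℕ} (h : InB N) : ∃ c, IsAdmissible N c ∧ c 1 = 1 ∧ c 0 = 1 := by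
  have hN3 : 3 ≤ N := by
    obtain ⟨n, hn1, hn⟩ := h
    have h3 : (3:ℤ) ≤ gB n := by rw [← gB_one]; exact gB_mono hn1
    omega
  obtain ⟨T, hT⟩ := main_rep (N-1) (by omega)
  have hBc := hT.2.2.2.2.2.2.2
  rw [show N-1+1 = N by omega] at hBc
  obtain ⟨h1T, hm1T⟩ := hBc.2 h
  have h0T : (0:ℤ) ∉ T := by
    intro hc
    apply hT.1 0 hc
    rw [show (0:ℤ)+1 = 1 by ring]
    exact h1T
  refine ⟨indic (insert 0 T), ⟨⟨indic_le _, ?_⟩, ?_⟩, ?_, ?_⟩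
  · rw [indic_sum]
    have he : gval (insert 0 T) = φ^(0:ℤ) + gval T := by
      unfold gval
      rw [Finset.sum_insert h0T]
    rw [he, hT.2.1]
    rw [Nat.cast_sub (by omega : 1 ≤ N)]
    norm_num
  · intro i hi
    rw [indic_apply, indic_apply]
    by_cases hA : (i+1) ∈ insert 0 T
    · by_cases hB2 : i ∈ insert 0 T
      · exfalso
        rcases Finset.mem_insert.1 hA with hA0|hAT
        · have him1 : i = -1 := by omega
          rcases Finset.mem_insert.1 hB2 with hh|hh
          · omega
          · rw [him1] at hh
            exact hm1T hh
        · rcases Finset.mem_insert.1 hB2 with hh|hh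
          · exact hi hh
          · exact hT.1 i hh hAT
      · simp [hB2]
    · simp [hA]
  · rw [indic_apply, if_pos (Finset.mem_insert_of_mem h1T)]
  · rw [indic_apply, if_pos (Finset.mem_insert_self 0 T)]

lemma digit_one_iff {c : ℤ →₀ ℕ} (hle : ∀ i, c i ≤ 1) (i : ℤ) :
    c i = 1 ↔ i ∈ c.support := by
  rw [Finsupp.mem_support_iff]
  have := hle i
  omega

end Aux18

open Aux18 in
theorem stmt18 (N : ℕ) (hN : 0 < N) :
    canonicalRep N 0 = 1 ↔
      ((∃ n : ℕ, (N : ℤ) = ⌊(n : ℝ) * goldenPhi⌋ + 2 * n + 1) ∨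
        (∃ n : ℕ, 1 ≤ n ∧ (N : ℤ) = ⌊(n : ℝ) * goldenPhi⌋ + 2 * n)) := by
  have hRHS : ((∃ n : ℕ, (N : ℤ) = ⌊(n : ℝ) * goldenPhi⌋ + 2 * n + 1) ∨
        (∃ n : ℕ, 1 ≤ n ∧ (N : ℤ) = ⌊(n : ℝ) * goldenPhi⌋ + 2 * n)) ↔ (InA N ∨ InB N) := by
    unfold InA InB gB
    exact Iff.rfl
  rw [hRHS]
  unfold canonicalRep
  split_ifs with hadm
  · obtain ⟨_, _, h0⟩ := hadm.choose_spec
    rw [h0]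
    constructor
    · intro _
      exact Or.inr (adm_to_InB (by omega) hadm)
    · intro _
      rfl
  · unfold bergmanRep
    obtain ⟨S, hS⟩ := main_rep N (by omega)
    have hex : ∃ c, IsBergman N c := ⟨indic S, indic_isBergman hS⟩
    rw [dif_pos hex]
    obtain ⟨⟨hle, hval⟩, hcons⟩ := hex.choose_spec
    have hgood := cons_good hcons
    have hvs : gval (hex.choose).support = N := phiRep_val ⟨hle, hval⟩
    have hsupp : (hex.choose).support = S := gval_inj hgood hS.1 (by rw [hvs, hS.2.1])
    rw [digit_one_iff hle 0, hsupp, hS.2.2.2.2.2.2.1]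
    constructor
    · exact Or.inl
    · rintro (h|h)
      · exact h
      · exact absurd (InB_to_adm h) hadm
end
end
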